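/- arXiv:0904.4386 — 8 statements merged into one kernel-verified Lean document; each statement's English description precedes it below -/
import Mathlib

section
/- Let d ≥ 1 be an integer, α ∈ (0,2), and γ ≥ 0 with γ ≠ d. Set γ' = min(γ + α, d + α). Then there exists a constant C = C(d, α, γ) > 0 such that for every x ∈ ℝ^d with |x| ≥ 1 one has ∫_{B(x,|x|/4)^c} (1 + |y|)^{−γ} |x − y|^{−d−α} dy ≤ C |x|^{−γ'}. -/
/-!
Split `B(x, |x|/4)ᶜ` according to whether `|y| ≤ |x|/4`. On the inner part the kernel
`|x - y|^{-d-α}` is at most `(|x|/4)^{-d-α}`, while polar coordinates bound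
`∫_{|y| ≤ T} (1 + |y|)^{-γ}` by `C T^{max(d - γ, 0)}` (by `∫_0^T t^{d-1-γ} dt` if `γ < d`, by the
finite integral over the whole space if `γ > d`). On the outer part `(1 + |y|)^{-γ} ≤ (|x|/4)^{-γ}`,
and the kernel integrates over `B(x, |x|/4)ᶜ` to a multiple of `|x|^{-α}`. The two contributions are
`O(|x|^{-d-α+max(d-γ,0)}) = O(|x|^{-γ'})` and `O(|x|^{-γ-α})`, which is `O(|x|^{-γ'})` as `|x| ≥ 1`.
-/

open MeasureTheory Metric Set Module

theorem pow_sub_one_mul_rpow {t : ℝ} (ht : 0 < t) {n : ℕ} (hn : 1 ≤ n) (a : ℝ) :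
    t ^ (n - 1) * t ^ a = t ^ ((n : ℝ) - 1 + a) := by
  rw [← Real.rpow_natCast, ← Real.rpow_add ht, Nat.cast_sub hn, Nat.cast_one]

variable {E F : Type*} [NormedAddCommGroup E] [NormedAddCommGroup F]

theorem compl_ball_zero_eq_preimage_norm (ρ : ℝ) : (ball (0 : E) ρ)ᶜ = (‖·‖) ⁻¹' Ici ρ := by
  ext; simp

theorem closedBall_zero_eq_preimage_norm (T : ℝ) : closedBall (0 : E) T = (‖·‖) ⁻¹' Iic T := by
  ext; simp

theorem one_add_norm_rpow_mul_norm_sub_rpow_le {x y : E} {γ s r T : ℝ} (hγ : 0 ≤ γ) (hs : 0 ≤ s)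
    (hr : 0 < r) (hT : 0 < T) (hy : y ∈ (ball x r)ᶜ) :
    (1 + ‖y‖) ^ (-γ) * ‖x - y‖ ^ (-s) ≤
      r ^ (-s) * (closedBall 0 T).indicator (fun y ↦ (1 + ‖y‖) ^ (-γ)) y +
        T ^ (-γ) * ‖x - y‖ ^ (-s) := by
  have hxy : r ≤ ‖x - y‖ := by simpa [dist_eq_norm, norm_sub_rev] using hy
  by_cases hyT : y ∈ closedBall 0 T
  · rw [indicator_of_mem hyT, mul_comm (r ^ (-s))]
    refine le_add_of_le_of_nonneg (mul_le_mul_of_nonneg_left ?_ (by positivity)) (by positivity)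
    exact Real.rpow_le_rpow_of_nonpos hr hxy (neg_nonpos.mpr hs)
  · rw [indicator_of_notMem hyT, mul_zero, zero_add]
    have hTy : T ≤ 1 + ‖y‖ := by
      simp only [mem_closedBall, dist_zero_right, not_le] at hyT
      linarith
    exact mul_le_mul_of_nonneg_right (Real.rpow_le_rpow_of_nonpos hT hTy (neg_nonpos.mpr hγ))
      (by positivity)

variable [MeasurableSpace E] [BorelSpace E]

section Translation

variable (μ : Measure E) [μ.IsAddRightInvariant]

theorem integrableOn_compl_ball_comp_sub_right_iff (x : E) (r : ℝ) {g : E → F} :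
    IntegrableOn (fun y ↦ g (y - x)) (ball x r)ᶜ μ ↔ IntegrableOn g (ball 0 r)ᶜ μ := by
  have hpre : (· - x) ⁻¹' (ball (0 : E) r)ᶜ = (ball x r)ᶜ := by ext; simp [dist_eq_norm]
  rw [← hpre]
  exact (measurePreserving_sub_right μ x).integrableOn_comp_preimage
    (measurableEmbedding_subRight x)

theorem setIntegral_compl_ball_comp_sub_right (x : E) (r : ℝ) [NormedSpace ℝ F] (g : E → F) :
    ∫ y in (ball x r)ᶜ, g (y - x) ∂μ = ∫ z in (ball 0 r)ᶜ, g z ∂μ := by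
  have hpre : (· - x) ⁻¹' (ball (0 : E) r)ᶜ = (ball x r)ᶜ := by ext; simp [dist_eq_norm]
  rw [← hpre, (measurePreserving_sub_right μ x).setIntegral_preimage_emb
    (measurableEmbedding_subRight x)]

end Translation

variable [NormedSpace ℝ E] [FiniteDimensional ℝ E] [Nontrivial E] [NormedSpace ℝ F]
  (μ : Measure E) [μ.IsAddHaarMeasure]

theorem setIntegral_fun_norm_preimage_norm {S : Set ℝ} (hS : MeasurableSet S) (f : ℝ → F) :
    ∫ x in (‖·‖) ⁻¹' S, f ‖x‖ ∂μ =
      finrank ℝ E • μ.real (ball 0 1) • ∫ t in Ioi 0 ∩ S, t ^ (finrank ℝ E - 1) • f t := by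
  rw [← integral_indicator (measurable_norm hS), ← setIntegral_indicator hS]
  simp_rw [indicator_smul_apply]
  exact integral_fun_norm_addHaar μ (S.indicator f)

theorem integrableOn_fun_norm_preimage_norm_iff {S : Set ℝ} (hS : MeasurableSet S) {f : ℝ → F} :
    IntegrableOn (fun x : E ↦ f ‖x‖) ((‖·‖) ⁻¹' S) μ ↔
      IntegrableOn (fun t ↦ t ^ (finrank ℝ E - 1) • f t) (Ioi 0 ∩ S) := by
  rw [← integrable_indicator_iff (measurable_norm hS), IntegrableOn, inter_comm,
    ← Measure.restrict_restrict hS, ← IntegrableOn, ← integrable_indicator_iff hS, indicator_smul]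
  exact integrable_fun_norm_addHaar μ (f := S.indicator f)

theorem integrableOn_compl_ball_norm_rpow {s ρ : ℝ} (hs : finrank ℝ E < s) (hρ : 0 < ρ) :
    IntegrableOn (fun z : E ↦ ‖z‖ ^ (-s)) (ball 0 ρ)ᶜ μ := by
  rw [compl_ball_zero_eq_preimage_norm,
    integrableOn_fun_norm_preimage_norm_iff μ measurableSet_Ici (f := (· ^ (-s))),
    inter_eq_right.mpr (Ici_subset_Ioi.mpr hρ), integrableOn_Ici_iff_integrableOn_Ioi]
  refine (integrableOn_Ioi_rpow_of_lt (by linarith : (finrank ℝ E : ℝ) - 1 + -s < -1) hρ).congr_fun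
    (fun t ht ↦ ?_) measurableSet_Ioi
  rw [smul_eq_mul, pow_sub_one_mul_rpow (hρ.trans ht) finrank_pos]

theorem setIntegral_compl_ball_norm_rpow {s ρ : ℝ} (hs : finrank ℝ E < s) (hρ : 0 < ρ) :
    ∫ z in (ball 0 ρ)ᶜ, ‖z‖ ^ (-s) ∂μ =
      finrank ℝ E * μ.real (ball 0 1) * (ρ ^ ((finrank ℝ E : ℝ) - s) / (s - finrank ℝ E)) := by
  rw [compl_ball_zero_eq_preimage_norm,
    setIntegral_fun_norm_preimage_norm μ measurableSet_Ici (· ^ (-s)),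
    inter_eq_right.mpr (Ici_subset_Ioi.mpr hρ), integral_Ici_eq_integral_Ioi,
    setIntegral_congr_fun measurableSet_Ioi
      (fun t ht ↦ by rw [smul_eq_mul, pow_sub_one_mul_rpow (hρ.trans ht) finrank_pos]),
    integral_Ioi_rpow_of_lt (by linarith) hρ, nsmul_eq_mul, smul_eq_mul, mul_assoc]
  congr 2
  rw [show (finrank ℝ E : ℝ) - 1 + -s + 1 = finrank ℝ E - s by ring, neg_div, ← div_neg, neg_sub]

theorem setIntegral_closedBall_one_add_norm_rpow_le {γ T : ℝ} (hγ : 0 ≤ γ)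
    (hγd : γ < finrank ℝ E) (hT : 0 < T) :
    ∫ y in closedBall 0 T, (1 + ‖y‖) ^ (-γ) ∂μ ≤
      finrank ℝ E * μ.real (ball 0 1) * (T ^ ((finrank ℝ E : ℝ) - γ) / (finrank ℝ E - γ)) := by
  rw [closedBall_zero_eq_preimage_norm,
    setIntegral_fun_norm_preimage_norm μ measurableSet_Iic (fun t ↦ (1 + t) ^ (-γ)), Ioi_inter_Iic,
    nsmul_eq_mul, smul_eq_mul, mul_assoc]
  gcongr
  have hpow : IntegrableOn (fun t : ℝ ↦ t ^ ((finrank ℝ E : ℝ) - 1 + -γ)) (Ioc 0 T) := by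
    rw [← intervalIntegrable_iff_integrableOn_Ioc_of_le hT.le]
    exact intervalIntegral.intervalIntegrable_rpow' (by linarith)
  calc ∫ t in Ioc 0 T, t ^ (finrank ℝ E - 1) • (1 + t) ^ (-γ)
      ≤ ∫ t in Ioc 0 T, t ^ ((finrank ℝ E : ℝ) - 1 + -γ) := by
        refine integral_mono_of_nonneg ?_ hpow ?_ <;>
          filter_upwards [ae_restrict_mem measurableSet_Ioc] with t ht
        · have := ht.1
          positivity
        · rw [smul_eq_mul, ← pow_sub_one_mul_rpow ht.1 finrank_pos]
          exact mul_le_mul_of_nonneg_left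
            (Real.rpow_le_rpow_of_nonpos ht.1 (by linarith) (by linarith)) (pow_nonneg ht.1.le _)
    _ = T ^ ((finrank ℝ E : ℝ) - γ) / (finrank ℝ E - γ) := by
        rw [← intervalIntegral.integral_of_le hT.le, integral_rpow (Or.inl (by linarith)),
          Real.zero_rpow (by linarith), sub_zero,
          show (finrank ℝ E : ℝ) - 1 + -γ + 1 = finrank ℝ E - γ by ring]

theorem exists_setIntegral_closedBall_one_add_norm_rpow_le {γ : ℝ} (hγ : 0 ≤ γ)
    (hγd : γ ≠ finrank ℝ E) :
    ∃ C, 0 ≤ C ∧ ∀ T > 0, ∫ y in closedBall 0 T, (1 + ‖y‖) ^ (-γ) ∂μ ≤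
      C * T ^ max ((finrank ℝ E : ℝ) - γ) 0 := by
  rcases hγd.lt_or_gt with hlt | hgt
  · refine ⟨finrank ℝ E * μ.real (ball 0 1) / (finrank ℝ E - γ),
      div_nonneg (by positivity) (by linarith), fun T hT ↦ ?_⟩
    rw [max_eq_left (by linarith)]
    exact (setIntegral_closedBall_one_add_norm_rpow_le μ hγ hlt hT).trans_eq (by ring)
  · refine ⟨∫ y, (1 + ‖y‖) ^ (-γ) ∂μ, integral_nonneg fun _ ↦ by positivity, fun T _ ↦ ?_⟩
    rw [max_eq_right (by linarith), Real.rpow_zero, mul_one]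
    exact setIntegral_le_integral (integrable_one_add_norm hgt) (.of_forall fun _ ↦ by positivity)

theorem setIntegral_compl_ball_one_add_norm_rpow_mul_le_add (x : E) {γ s r T : ℝ} (hγ : 0 ≤ γ)
    (hs : finrank ℝ E < s) (hr : 0 < r) (hT : 0 < T) :
    ∫ y in (ball x r)ᶜ, (1 + ‖y‖) ^ (-γ) * ‖x - y‖ ^ (-s) ∂μ ≤
      r ^ (-s) * ∫ y in closedBall 0 T, (1 + ‖y‖) ^ (-γ) ∂μ +
        T ^ (-γ) * ∫ z in (ball 0 r)ᶜ, ‖z‖ ^ (-s) ∂μ := by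
  set f : E → ℝ := fun y ↦ (1 + ‖y‖) ^ (-γ)
  have hf : IntegrableOn f (closedBall 0 T) μ := by
    refine ContinuousOn.integrableOn_compact (isCompact_closedBall 0 T) ?_
    exact (continuous_const.add continuous_norm).continuousOn.rpow_const
      fun y _ ↦ .inl (add_pos_of_pos_of_nonneg one_pos (norm_nonneg y)).ne'
  have hkernel : IntegrableOn (fun y ↦ ‖x - y‖ ^ (-s)) (ball x r)ᶜ μ := by
    simp_rw [norm_sub_rev x]
    exact (integrableOn_compl_ball_comp_sub_right_iff μ x r).2
      (integrableOn_compl_ball_norm_rpow μ hs hr)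
  have hs0 : 0 ≤ s := (Nat.cast_nonneg _).trans hs.le
  calc ∫ y in (ball x r)ᶜ, f y * ‖x - y‖ ^ (-s) ∂μ
      ≤ ∫ y in (ball x r)ᶜ,
          r ^ (-s) * (closedBall 0 T).indicator f y + T ^ (-γ) * ‖x - y‖ ^ (-s) ∂μ := by
        refine integral_mono_of_nonneg (.of_forall fun y ↦ by positivity)
          (((hf.integrable_indicator measurableSet_closedBall).restrict.const_mul _).add
            (hkernel.const_mul _)) ?_
        filter_upwards [ae_restrict_mem measurableSet_ball.compl] with y hy
        exact one_add_norm_rpow_mul_norm_sub_rpow_le hγ hs0 hr hT hy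
    _ = r ^ (-s) * ∫ y in (ball x r)ᶜ ∩ closedBall 0 T, f y ∂μ +
          T ^ (-γ) * ∫ z in (ball 0 r)ᶜ, ‖z‖ ^ (-s) ∂μ := by
        rw [integral_add ((hf.integrable_indicator measurableSet_closedBall).restrict.const_mul _)
          (hkernel.const_mul _), integral_const_mul, integral_const_mul,
          setIntegral_indicator measurableSet_closedBall]
        simp_rw [norm_sub_rev x]
        rw [setIntegral_compl_ball_comp_sub_right μ x r (‖·‖ ^ (-s))]
    _ ≤ _ := by
        refine add_le_add_left (mul_le_mul_of_nonneg_left ?_ (by positivity)) _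
        exact setIntegral_mono_set hf (.of_forall fun y ↦ by positivity)
          inter_subset_right.eventuallyLE

theorem exists_setIntegral_compl_ball_one_add_norm_rpow_mul_le {α γ : ℝ} (hα : 0 < α)
    (hγ : 0 ≤ γ) (hγd : γ ≠ finrank ℝ E) :
    ∃ C : ℝ, 0 < C ∧ ∀ x : E, 1 ≤ ‖x‖ →
      ∫ y in (ball x (‖x‖ / 4))ᶜ, (1 + ‖y‖) ^ (-γ) * ‖x - y‖ ^ (-(finrank ℝ E : ℝ) - α) ∂μ ≤
        C * ‖x‖ ^ (-min (γ + α) ((finrank ℝ E : ℝ) + α)) := by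
  set d : ℝ := (finrank ℝ E : ℝ)
  set p := min (γ + α) (d + α)
  set c := d * μ.real (ball 0 1)
  obtain ⟨B, hB0, hB⟩ := exists_setIntegral_closedBall_one_add_norm_rpow_le μ hγ hγd
  have hc : 0 < c := mul_pos (Nat.cast_pos.mpr finrank_pos)
    (ENNReal.toReal_pos (measure_ball_pos μ 0 one_pos).ne' measure_ball_lt_top.ne)
  refine ⟨B * 4 ^ p + c / α * 4 ^ (γ + α), by positivity, fun x hx ↦ ?_⟩
  have hR : 0 < ‖x‖ := one_pos.trans_le hx
  have hρ : 0 < ‖x‖ / 4 := by positivity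
  have hscale (q : ℝ) : (‖x‖ / 4) ^ (-q) = 4 ^ q * ‖x‖ ^ (-q) := by
    rw [Real.div_rpow hR.le (by norm_num), Real.rpow_neg (by norm_num : (0 : ℝ) ≤ 4) q,
      div_inv_eq_mul, mul_comm]
  rw [← neg_add']
  calc _ ≤ (‖x‖ / 4) ^ (-(d + α)) * ∫ y in closedBall 0 (‖x‖ / 4), (1 + ‖y‖) ^ (-γ) ∂μ +
          (‖x‖ / 4) ^ (-γ) * ∫ z in (ball 0 (‖x‖ / 4))ᶜ, ‖z‖ ^ (-(d + α)) ∂μ :=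
        setIntegral_compl_ball_one_add_norm_rpow_mul_le_add μ x hγ (by linarith) hρ hρ
    _ ≤ (‖x‖ / 4) ^ (-(d + α)) * (B * (‖x‖ / 4) ^ max (d - γ) 0) +
          (‖x‖ / 4) ^ (-γ) * (c * ((‖x‖ / 4) ^ (d - (d + α)) / (d + α - d))) := by
        rw [setIntegral_compl_ball_norm_rpow μ (by linarith) hρ]
        gcongr
        exact hB _ hρ
    _ = B * (‖x‖ / 4) ^ (-p) + c / α * (‖x‖ / 4) ^ (-(γ + α)) := by
        have hball : -(d + α) + max (d - γ) 0 = -p := by grind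
        have htail : -γ + (d - (d + α)) = -(γ + α) := by ring
        rw [← hball, ← htail, Real.rpow_add hρ, Real.rpow_add hρ, show d + α - d = α by ring]
        ring
    _ ≤ B * (4 ^ p * ‖x‖ ^ (-p)) + c / α * (4 ^ (γ + α) * ‖x‖ ^ (-p)) := by
        rw [hscale, hscale]
        gcongr
        exact min_le_left _ _
    _ = (B * 4 ^ p + c / α * 4 ^ (γ + α)) * ‖x‖ ^ (-p) := by ring

/-- Estimate (2.6): for `γ ≥ 0`, `γ ≠ d`, with `γ' = min (γ + α) (d + α)`,
`∫_{B(x,|x|/4)^c} (1 + |y|)^{-γ} |x - y|^{-d-α} dy ≤ C |x|^{-γ'}` for `|x| ≥ 1`. -/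
theorem stmt_0 (d : ℕ) (hd : 1 ≤ d) (α : ℝ) (hα : α ∈ Set.Ioo (0 : ℝ) 2)
    (γ : ℝ) (hγ : 0 ≤ γ) (hγd : γ ≠ (d : ℝ)) :
    ∃ C : ℝ, 0 < C ∧ ∀ x : EuclideanSpace ℝ (Fin d), 1 ≤ ‖x‖ →
      (∫ y in (Metric.ball x (‖x‖ / 4))ᶜ,
          (1 + ‖y‖) ^ (-γ) * ‖x - y‖ ^ (-(d : ℝ) - α) ∂volume)
        ≤ C * ‖x‖ ^ (-(min (γ + α) ((d : ℝ) + α))) := by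
  have : Nontrivial (EuclideanSpace ℝ (Fin d)) :=
    Module.nontrivial_of_finrank_pos (R := ℝ) (by rwa [finrank_euclideanSpace_fin])
  have h := exists_setIntegral_compl_ball_one_add_norm_rpow_mul_le (E := EuclideanSpace ℝ (Fin d))
    volume hα.1 hγ (by rwa [finrank_euclideanSpace_fin])
  rw [finrank_euclideanSpace_fin] at h
  exact h
end

section
/- Let d ≥ 1 be an integer and α ∈ (0,2). Let v : ℝ^d → [0,∞) be bounded with v(x) → 0 as |x| → ∞, and let f : ℝ^d → [0,∞) be bounded and measurable. Assume there is a constant C₁ > 0 such that for all x with |x| ≥ 3, f(x) ≤ C₁ v(x) ( sup_{y ∈ B(x,|x|/2)} f(y) + ∫_{B(x,|x|/2)^c} f(z) |z − x|^{−d−α} dz ). Let γ ≥ 0 with γ ≠ d, and suppose there is C₂ > 0 with f(x) ≤ C₂ (1 + |x|)^{−γ} for all x ∈ ℝ^d. Then there exists C₃ > 0 such that f(x) ≤ C₃ (1 + |x|)^{−γ'} for all x ∈ ℝ^d, where γ' = min(γ + α, d + α). -/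
/-!
Split the tail integral `∫_{|z-x| ≥ |x|/2} f(z) |z-x|^(-d-α) dz` at the ball `|z| ≤ |x|/4`. On that
ball `|z-x| ≍ |x|`, and `∫_{|z| ≤ s} (1+|z|)^(-γ) ≲ (1+s)^(max (d-γ) 0)` by polar coordinates (this
is where `γ ≠ d` enters); off it `f(z) ≲ |x|^(-γ)`, and `∫_{|z-x| ≥ r} |z-x|^(-d-α) dz ≍ r^(-α)`.
Hence the integral term is `O((1+|x|)^(-γ'))`, where `-γ' = -d-α + max (d-γ) 0`.

Since `v → 0`, the supremum term enters with an arbitrarily small factor `θ`, while the weight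
`(1+|x|)^γ'` changes by at most `2^γ'` across `B(x, |x|/2)`. For the truncated weights
`min ((1+|x|)^γ') T`, whose weighted suprema are finite because `f` is bounded, this gives
`sup ≤ C + sup / 2` with `C` independent of `T`.
-/

open MeasureTheory Filter Metric Set Module

lemma rpow_le_rpow_mul_one_add_rpow {c t u p : ℝ} (hc : 0 < c) (hu : 0 ≤ u)
    (h : c * (1 + u) ≤ t) (hp : p ≤ 0) : t ^ p ≤ c ^ p * (1 + u) ^ p :=
  (Real.rpow_le_rpow_of_nonpos (by positivity) h hp).trans_eq (Real.mul_rpow hc.le (by positivity))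

lemma mul_rpow_norm_sub_le_indicator_add {E : Type*} [SeminormedAddCommGroup E] {f : E → ℝ}
    {C γ p : ℝ} (hC : 0 ≤ C) (hfγ : ∀ z, f z ≤ C * (1 + ‖z‖) ^ (-γ)) (hγ : 0 ≤ γ) (hp : p ≤ 0)
    {x : E} (hx : 1 ≤ ‖x‖) (z : E) :
    f z * ‖z - x‖ ^ p ≤
      (closedBall 0 (‖x‖ / 4)).indicator
          (fun z => C * (1 / 4) ^ p * (1 + ‖x‖) ^ p * (1 + ‖z‖) ^ (-γ)) z +
        C * (1 / 4) ^ (-γ) * (1 + ‖x‖) ^ (-γ) * ‖z - x‖ ^ p := by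
  have hfz : f z * ‖z - x‖ ^ p ≤ C * (1 + ‖z‖) ^ (-γ) * ‖z - x‖ ^ p :=
    mul_le_mul_of_nonneg_right (hfγ z) (by positivity)
  by_cases hz : ‖z‖ ≤ ‖x‖ / 4
  · have hzx : 1 / 4 * (1 + ‖x‖) ≤ ‖z - x‖ := by
      linarith [norm_sub_norm_le x z, norm_sub_rev x z]
    rw [indicator_of_mem (mem_closedBall_zero_iff.2 hz)]
    calc f z * ‖z - x‖ ^ p
        ≤ C * (1 + ‖z‖) ^ (-γ) * ((1 / 4) ^ p * (1 + ‖x‖) ^ p) := by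
          refine hfz.trans (mul_le_mul_of_nonneg_left ?_ (by positivity))
          exact rpow_le_rpow_mul_one_add_rpow (by norm_num) (norm_nonneg x) hzx hp
      _ ≤ _ := le_add_of_le_of_nonneg (le_of_eq (by ring)) (by positivity)
  · have hzx : 1 / 4 * (1 + ‖x‖) ≤ 1 + ‖z‖ := by linarith
    rw [indicator_of_notMem (by simpa using hz), zero_add]
    refine hfz.trans (mul_le_mul_of_nonneg_right ?_ (by positivity))
    rw [mul_assoc]
    exact mul_le_mul_of_nonneg_left
      (rpow_le_rpow_mul_one_add_rpow (by norm_num) (norm_nonneg x) hzx (by linarith)) hC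

lemma setIntegral_le_setIntegral_add_of_le_indicator_add {X : Type*} [MeasurableSpace X]
    {μ : Measure X} {s t : Set X} {F g h : X → ℝ} (ht : MeasurableSet t) (hF : ∀ z, 0 ≤ F z)
    (hg0 : ∀ z ∈ t, 0 ≤ g z) (hg : IntegrableOn g t μ) (hh : IntegrableOn h s μ)
    (hle : ∀ z, F z ≤ t.indicator g z + h z) :
    ∫ z in s, F z ∂μ ≤ ∫ z in t, g z ∂μ + ∫ z in s, h z ∂μ := by
  have hgi : Integrable (t.indicator g) μ := (integrable_indicator_iff ht).2 hg
  calc ∫ z in s, F z ∂μ ≤ ∫ z in s, (t.indicator g z + h z) ∂μ :=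
        integral_mono_of_nonneg (.of_forall hF) (hgi.integrableOn.add hh) (.of_forall hle)
    _ = ∫ z in s, t.indicator g z ∂μ + ∫ z in s, h z ∂μ := integral_add hgi.integrableOn hh
    _ ≤ ∫ z in t, g z ∂μ + ∫ z in s, h z ∂μ := by
        gcongr
        rw [← integral_indicator ht]
        exact setIntegral_le_integral hgi (.of_forall (indicator_nonneg hg0))

section Radial

variable {E : Type*} [NormedAddCommGroup E] [NormedSpace ℝ E] [FiniteDimensional ℝ E]
  [MeasurableSpace E] [BorelSpace E] (μ : Measure E) [μ.IsAddHaarMeasure]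

theorem integrableOn_compl_ball_rpow_norm_sub {α r : ℝ} (hα : 0 < α) (hr : 0 < r) (x : E) :
    IntegrableOn (fun z => ‖z - x‖ ^ (-(finrank ℝ E : ℝ) - α)) (ball x r)ᶜ μ := by
  have hdom : Integrable (fun z => (r / (1 + r)) ^ (-(finrank ℝ E : ℝ) - α) *
      (1 + ‖z - x‖) ^ (-(finrank ℝ E : ℝ) - α)) μ := by
    simp_rw [sub_eq_add_neg (-(finrank ℝ E : ℝ)), ← neg_add]
    exact ((integrable_one_add_norm (by linarith)).comp_sub_right x).const_mul _
  refine hdom.integrableOn.mono' (Measurable.aestronglyMeasurable (by fun_prop)) ?_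
  filter_upwards [ae_restrict_mem measurableSet_ball.compl] with z hz
  have hrz : r ≤ ‖z - x‖ := by simpa [dist_eq_norm] using hz
  rw [Real.norm_of_nonneg (by positivity)]
  refine rpow_le_rpow_mul_one_add_rpow (by positivity) (norm_nonneg _) ?_ (by linarith)
  rw [div_mul_eq_mul_div, div_le_iff₀ (by positivity)]
  nlinarith

theorem integral_compl_ball_rpow_norm_sub [Nontrivial E] {α r : ℝ} (hα : 0 < α) (hr : 0 < r)
    (x : E) :
    ∫ z in (ball x r)ᶜ, ‖z - x‖ ^ (-(finrank ℝ E : ℝ) - α) ∂μ =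
      finrank ℝ E * μ.real (ball 0 1) * (r ^ (-α) / α) := by
  have hpre : (fun z => z - x) ⁻¹' (ball (0 : E) r)ᶜ = (ball x r)ᶜ := by
    ext z; simp [dist_eq_norm]
  have hind : (ball (0 : E) r)ᶜ.indicator (fun y => ‖y‖ ^ (-(finrank ℝ E : ℝ) - α)) =
      fun y => (Ici r).indicator (fun t => t ^ (-(finrank ℝ E : ℝ) - α)) ‖y‖ := by
    ext y; by_cases h : r ≤ ‖y‖ <;> simp [h]
  have hradial : ∀ t ∈ Ioi r, t ^ (finrank ℝ E - 1) • t ^ (-(finrank ℝ E : ℝ) - α) =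
      t ^ (-α - 1) := by
    intro t ht
    have ht0 : 0 < t := hr.trans ht
    rw [smul_eq_mul, ← Real.rpow_natCast, ← Real.rpow_add ht0,
      Nat.cast_sub (Nat.one_le_iff_ne_zero.2 finrank_pos.ne'), Nat.cast_one]
    ring_nf
  rw [← hpre, (measurePreserving_sub_right μ x).setIntegral_preimage_emb
    (measurableEmbedding_subRight x) (fun y => ‖y‖ ^ (-(finrank ℝ E : ℝ) - α)),
    ← integral_indicator measurableSet_ball.compl, hind, integral_fun_norm_addHaar]
  simp_rw [← indicator_smul_apply (Ici r) (fun t : ℝ => t ^ (finrank ℝ E - 1))]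
  rw [setIntegral_indicator measurableSet_Ici, inter_eq_right.2 (Ici_subset_Ioi.2 hr),
    integral_Ici_eq_integral_Ioi, setIntegral_congr_fun measurableSet_Ioi hradial,
    integral_Ioi_rpow_of_lt (by linarith) hr, nsmul_eq_mul, smul_eq_mul]
  ring_nf

theorem integral_compl_ball_half_rpow_norm_sub_le [Nontrivial E] {α : ℝ} (hα : 0 < α) {x : E}
    (hx : 1 ≤ ‖x‖) :
    ∫ z in (ball x (‖x‖ / 2))ᶜ, ‖z - x‖ ^ (-(finrank ℝ E : ℝ) - α) ∂μ ≤
      finrank ℝ E * μ.real (ball 0 1) * ((1 / 4) ^ (-α) / α) * (1 + ‖x‖) ^ (-α) := by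
  rw [integral_compl_ball_rpow_norm_sub μ hα (by positivity),
    mul_assoc _ ((1 / 4 : ℝ) ^ (-α) / α), div_mul_eq_mul_div]
  gcongr
  exact rpow_le_rpow_mul_one_add_rpow (by norm_num) (norm_nonneg x) (by linarith) (by linarith)

theorem integral_closedBall_one_add_norm_rpow_le [Nontrivial E] {γ s : ℝ}
    (hγ : γ < finrank ℝ E) (hs : 0 ≤ s) :
    ∫ z in closedBall (0 : E) s, (1 + ‖z‖) ^ (-γ) ∂μ ≤
      finrank ℝ E * μ.real (ball 0 1) / (finrank ℝ E - γ) * (1 + s) ^ ((finrank ℝ E : ℝ) - γ) := by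
  have hind : (closedBall (0 : E) s).indicator (fun z => (1 + ‖z‖) ^ (-γ)) =
      fun z => (Iic s).indicator (fun t => (1 + t) ^ (-γ)) ‖z‖ := by
    ext z; by_cases h : ‖z‖ ≤ s <;> simp [h]
  have hcont : ∀ β : ℝ, ContinuousOn (fun t : ℝ => (1 + t) ^ β) (uIcc 0 s) := fun β =>
    (by fun_prop : ContinuousOn (fun t : ℝ => 1 + t) _).rpow_const fun t ht =>
      Or.inl (by rw [uIcc_of_le hs] at ht; linarith [ht.1])
  have hradial : ∀ t ∈ Icc 0 s, t ^ (finrank ℝ E - 1) • (1 + t) ^ (-γ) ≤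
      (1 + t) ^ ((finrank ℝ E : ℝ) - γ - 1) := by
    intro t ht
    rw [smul_eq_mul, show (finrank ℝ E : ℝ) - γ - 1 = (finrank ℝ E - 1 : ℕ) + -γ by
      rw [Nat.cast_sub (Nat.one_le_iff_ne_zero.2 finrank_pos.ne'), Nat.cast_one]; ring,
      Real.rpow_add (by linarith [ht.1]), Real.rpow_natCast]
    exact mul_le_mul_of_nonneg_right (pow_le_pow_left₀ ht.1 (by linarith) _)
      (Real.rpow_nonneg (by linarith [ht.1]) _)
  have hdγ : (0 : ℝ) < finrank ℝ E - γ := by linarith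
  have h1d : ∫ t in (0 : ℝ)..s, t ^ (finrank ℝ E - 1) • (1 + t) ^ (-γ) ≤
      (1 + s) ^ ((finrank ℝ E : ℝ) - γ) / (finrank ℝ E - γ) :=
    calc ∫ t in (0 : ℝ)..s, t ^ (finrank ℝ E - 1) • (1 + t) ^ (-γ)
        ≤ ∫ t in (0 : ℝ)..s, (1 + t) ^ ((finrank ℝ E : ℝ) - γ - 1) :=
          intervalIntegral.integral_mono_on hs
            (((continuousOn_pow _).smul (hcont _)).intervalIntegrable)
            ((hcont _).intervalIntegrable) hradial
      _ = ((1 + s) ^ ((finrank ℝ E : ℝ) - γ) - 1) / (finrank ℝ E - γ) := by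
          rw [intervalIntegral.integral_comp_add_left (fun t => t ^ ((finrank ℝ E : ℝ) - γ - 1)),
            integral_rpow (Or.inl (by linarith))]
          norm_num
      _ ≤ (1 + s) ^ ((finrank ℝ E : ℝ) - γ) / (finrank ℝ E - γ) := by gcongr; linarith
  rw [← integral_indicator measurableSet_closedBall, hind, integral_fun_norm_addHaar]
  simp_rw [← indicator_smul_apply (Iic s) (fun t : ℝ => t ^ (finrank ℝ E - 1))]
  rw [setIntegral_indicator measurableSet_Iic, Ioi_inter_Iic, ← intervalIntegral.integral_of_le hs,
    nsmul_eq_mul, smul_eq_mul, ← mul_assoc, div_mul_eq_mul_div, mul_div_assoc]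
  gcongr

theorem exists_integral_closedBall_one_add_norm_rpow_le [Nontrivial E] {γ : ℝ}
    (hγ : γ ≠ finrank ℝ E) :
    ∃ C, 0 ≤ C ∧ ∀ s, 0 ≤ s →
      ∫ z in closedBall (0 : E) s, (1 + ‖z‖) ^ (-γ) ∂μ ≤
        C * (1 + s) ^ max ((finrank ℝ E : ℝ) - γ) 0 := by
  rcases hγ.lt_or_gt with hγ | hγ
  · refine ⟨finrank ℝ E * μ.real (ball 0 1) / (finrank ℝ E - γ),
      div_nonneg (by positivity) (by linarith), fun s hs => ?_⟩
    rw [max_eq_left (by linarith)]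
    exact integral_closedBall_one_add_norm_rpow_le μ hγ hs
  · have hint : Integrable (fun z : E => (1 + ‖z‖) ^ (-γ)) μ := integrable_one_add_norm hγ
    refine ⟨∫ z, (1 + ‖z‖) ^ (-γ) ∂μ, integral_nonneg fun z => by positivity, fun s _ => ?_⟩
    rw [max_eq_right (by linarith), Real.rpow_zero, mul_one]
    exact setIntegral_le_integral hint (.of_forall fun z => by positivity)

theorem exists_integral_compl_ball_mul_rpow_norm_sub_le {f : E → ℝ} {C γ α : ℝ}
    (hf0 : ∀ z, 0 ≤ f z) (hC : 0 ≤ C) (hfγ : ∀ z, f z ≤ C * (1 + ‖z‖) ^ (-γ))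
    (hγ : 0 ≤ γ) (hγd : γ ≠ finrank ℝ E) (hα : 0 < α) :
    ∃ K, 0 ≤ K ∧ ∀ x : E, 1 ≤ ‖x‖ →
      ∫ z in (ball x (‖x‖ / 2))ᶜ, f z * ‖z - x‖ ^ (-(finrank ℝ E : ℝ) - α) ∂μ ≤
        K * (1 + ‖x‖) ^ (-min (γ + α) (finrank ℝ E + α)) := by
  rcases subsingleton_or_nontrivial E with hE | hE
  · exact ⟨0, le_rfl, fun x hx => by norm_num [Subsingleton.elim x 0] at hx⟩
  obtain ⟨CA, hCA0, hCA⟩ := exists_integral_closedBall_one_add_norm_rpow_le μ hγd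
  set n : ℝ := (finrank ℝ E : ℝ)
  set p : ℝ := -n - α
  set γ' := min (γ + α) (n + α)
  have hp : p ≤ 0 := by simp only [p, n]; linarith [(finrank ℝ E).cast_nonneg (α := ℝ)]
  have hexp : p + max (n - γ) 0 = -γ' := by
    simp only [p, γ', max_def, min_def]; split_ifs <;> linarith
  set KA := C * (1 / 4) ^ p * CA
  set KB := C * (1 / 4) ^ (-γ) * (n * μ.real (ball 0 1) * ((1 / 4) ^ (-α) / α))
  refine ⟨KA + KB, by positivity, fun x hx => ?_⟩
  have hx0 : (0 : ℝ) < 1 + ‖x‖ := by positivity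
  set gA := fun z : E => C * (1 / 4) ^ p * (1 + ‖x‖) ^ p * (1 + ‖z‖) ^ (-γ)
  set gB := fun z : E => C * (1 / 4) ^ (-γ) * (1 + ‖x‖) ^ (-γ) * ‖z - x‖ ^ p
  have hgA : IntegrableOn gA (closedBall 0 (‖x‖ / 4)) μ :=
    (continuous_const.mul ((by fun_prop : Continuous fun z : E => 1 + ‖z‖).rpow_const
      fun z => Or.inl (by positivity))).continuousOn.integrableOn_compact (isCompact_closedBall _ _)
  have hA : ∫ z in closedBall 0 (‖x‖ / 4), gA z ∂μ ≤ KA * (1 + ‖x‖) ^ (-γ') := by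
    calc ∫ z in closedBall 0 (‖x‖ / 4), gA z ∂μ
        = C * (1 / 4) ^ p * (1 + ‖x‖) ^ p * ∫ z in closedBall 0 (‖x‖ / 4), (1 + ‖z‖) ^ (-γ) ∂μ :=
          integral_const_mul _ _
      _ ≤ C * (1 / 4) ^ p * (1 + ‖x‖) ^ p * (CA * (1 + ‖x‖) ^ max (n - γ) 0) := by
          gcongr
          exact (hCA _ (by positivity)).trans (by gcongr; linarith)
      _ = KA * (1 + ‖x‖) ^ (-γ') := by rw [← hexp, Real.rpow_add hx0]; ring
  have hB : ∫ z in (ball x (‖x‖ / 2))ᶜ, gB z ∂μ ≤ KB * (1 + ‖x‖) ^ (-γ') := by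
    rw [integral_const_mul]
    calc _ ≤ C * (1 / 4) ^ (-γ) * (1 + ‖x‖) ^ (-γ) *
          (n * μ.real (ball 0 1) * ((1 / 4) ^ (-α) / α) * (1 + ‖x‖) ^ (-α)) := by
          gcongr
          exact integral_compl_ball_half_rpow_norm_sub_le μ hα hx
      _ = KB * (1 + ‖x‖) ^ (-γ - α) := by rw [sub_eq_add_neg, Real.rpow_add hx0]; ring
      _ ≤ KB * (1 + ‖x‖) ^ (-γ') := by
          gcongr
          · linarith
          · linarith [min_le_left (γ + α) (n + α)]
  calc ∫ z in (ball x (‖x‖ / 2))ᶜ, f z * ‖z - x‖ ^ p ∂μ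
      ≤ ∫ z in closedBall 0 (‖x‖ / 4), gA z ∂μ + ∫ z in (ball x (‖x‖ / 2))ᶜ, gB z ∂μ :=
        setIntegral_le_setIntegral_add_of_le_indicator_add measurableSet_closedBall
          (fun z => mul_nonneg (hf0 z) (by positivity)) (fun z _ => by positivity) hgA
          ((integrableOn_compl_ball_rpow_norm_sub μ hα (by positivity) x).const_mul _)
          (mul_rpow_norm_sub_le_indicator_add hC hfγ hγ hp hx)
    _ ≤ (KA + KB) * (1 + ‖x‖) ^ (-γ') := by linarith

end Radial

theorem mul_le_two_mul_of_forall_mul_min_le_add_half {X : Type*} {f ρ : X → ℝ} {M K : ℝ}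
    (hf0 : ∀ x, 0 ≤ f x) (hfM : ∀ x, f x ≤ M) (hρ : ∀ x, 0 < ρ x)
    (h : ∀ T > 0, ∀ S, (∀ y, f y * min (ρ y) T ≤ S) → ∀ x, f x * min (ρ x) T ≤ K + S / 2)
    (x : X) : f x * ρ x ≤ 2 * K := by
  have : Nonempty X := ⟨x⟩
  set T := ρ x
  have hbdd : BddAbove (range fun y => f y * min (ρ y) T) := by
    refine ⟨M * T, forall_mem_range.2 fun y => ?_⟩
    exact mul_le_mul (hfM y) (min_le_right _ _) (le_min (hρ y).le (hρ x).le)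
      ((hf0 y).trans (hfM y))
  set S := ⨆ y, f y * min (ρ y) T
  have hS : ∀ y, f y * min (ρ y) T ≤ S := le_ciSup hbdd
  have hSK : S ≤ K + S / 2 := ciSup_le (h T (hρ x) S hS)
  calc f x * ρ x = f x * min (ρ x) T := by rw [min_self]
    _ ≤ S := hS x
    _ ≤ 2 * K := by linarith

section Decay

variable {E : Type*} [SeminormedAddCommGroup E]

lemma min_one_add_norm_rpow_le_of_mem_ball {p T : ℝ} (hp : 0 ≤ p) (hT : 0 ≤ T) {x y : E}
    (hy : y ∈ ball x (‖x‖ / 2)) :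
    min ((1 + ‖x‖) ^ p) T ≤ 2 ^ p * min ((1 + ‖y‖) ^ p) T := by
  have hxy : 1 + ‖x‖ ≤ 2 * (1 + ‖y‖) := by
    have := mem_ball'.1 hy
    rw [dist_eq_norm] at this
    linarith [norm_le_norm_add_norm_sub' x y]
  rw [mul_min_of_nonneg _ _ (by positivity)]
  refine min_le_min ?_ (le_mul_of_one_le_left hT (Real.one_le_rpow one_le_two hp))
  rw [← Real.mul_rpow zero_le_two (by positivity)]
  exact Real.rpow_le_rpow (by positivity) hxy hp

lemma sSup_image_ball_mul_min_le {f : E → ℝ} {p T S : ℝ} (hp : 0 ≤ p) (hT : 0 < T)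
    (hf0 : ∀ x, 0 ≤ f x) (hS : ∀ y, f y * min ((1 + ‖y‖) ^ p) T ≤ S) (x : E) :
    sSup (f '' ball x (‖x‖ / 2)) * min ((1 + ‖x‖) ^ p) T ≤ 2 ^ p * S := by
  have hw : 0 < min ((1 + ‖x‖) ^ p) T := lt_min (by positivity) hT
  rw [← le_div_iff₀ hw]
  refine Real.sSup_le (forall_mem_image.2 fun y hy => ?_)
    (div_nonneg (mul_nonneg (by positivity) ((mul_nonneg (hf0 x) hw.le).trans (hS x))) hw.le)
  rw [le_div_iff₀ hw]
  calc f y * min ((1 + ‖x‖) ^ p) T ≤ f y * (2 ^ p * min ((1 + ‖y‖) ^ p) T) :=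
        mul_le_mul_of_nonneg_left (min_one_add_norm_rpow_le_of_mem_ball hp hT.le hy) (hf0 y)
    _ = 2 ^ p * (f y * min ((1 + ‖y‖) ^ p) T) := by ring
    _ ≤ 2 ^ p * S := by gcongr; exact hS y

theorem exists_le_mul_one_add_norm_rpow_neg_of_le_sSup_ball {f : E → ℝ} {p K : ℝ}
    (hp : 0 ≤ p) (hK : 0 ≤ K) (hf0 : ∀ x, 0 ≤ f x) (hf : ∃ M, ∀ x, f x ≤ M)
    (h : ∀ θ > 0, ∃ R, ∀ x, R ≤ ‖x‖ →
      f x ≤ θ * (sSup (f '' ball x (‖x‖ / 2)) + K * (1 + ‖x‖) ^ (-p))) :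
    ∃ C, 0 < C ∧ ∀ x, f x ≤ C * (1 + ‖x‖) ^ (-p) := by
  obtain ⟨M, hM⟩ := hf
  have hM0 : 0 ≤ M := (hf0 0).trans (hM 0)
  set θ : ℝ := 1 / (2 * 2 ^ p)
  have hθ : θ * 2 ^ p = 1 / 2 := by simp only [θ]; field_simp
  obtain ⟨R, hR⟩ := h θ (by positivity)
  set K₀ := M * (1 + max R 0) ^ p + θ * K
  have hweighted : ∀ x, f x * (1 + ‖x‖) ^ p ≤ 2 * K₀ := by
    refine mul_le_two_mul_of_forall_mul_min_le_add_half hf0 hM (fun x => by positivity) ?_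
    intro T hT S hS x
    have hw : 0 ≤ min ((1 + ‖x‖) ^ p) T := le_min (by positivity) hT.le
    have hS0 : 0 ≤ S := (mul_nonneg (hf0 x) hw).trans (hS x)
    by_cases hx : R ≤ ‖x‖
    · have hdecay : K * (1 + ‖x‖) ^ (-p) * min ((1 + ‖x‖) ^ p) T ≤ K := by
        rw [Real.rpow_neg (by positivity), mul_assoc]
        refine mul_le_of_le_one_right hK ?_
        rw [inv_mul_le_iff₀ (by positivity), mul_one]
        exact min_le_left _ _
      calc f x * min ((1 + ‖x‖) ^ p) T
          ≤ θ * (sSup (f '' ball x (‖x‖ / 2)) + K * (1 + ‖x‖) ^ (-p)) *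
              min ((1 + ‖x‖) ^ p) T := mul_le_mul_of_nonneg_right (hR x hx) hw
        _ = θ * (sSup (f '' ball x (‖x‖ / 2)) * min ((1 + ‖x‖) ^ p) T +
              K * (1 + ‖x‖) ^ (-p) * min ((1 + ‖x‖) ^ p) T) := by ring
        _ ≤ θ * (2 ^ p * S + K) := mul_le_mul_of_nonneg_left
            (add_le_add (sSup_image_ball_mul_min_le hp hT hf0 hS x) hdecay) (by positivity)
        _ = S / 2 + θ * K := by rw [mul_add, ← mul_assoc, hθ]; ring
        _ ≤ K₀ + S / 2 := by linarith [show 0 ≤ M * (1 + max R 0) ^ p by positivity]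
    · have hnear : f x * min ((1 + ‖x‖) ^ p) T ≤ M * (1 + max R 0) ^ p := by
        refine mul_le_mul (hM x) ((min_le_left _ _).trans ?_) hw hM0
        exact Real.rpow_le_rpow (by positivity) (by linarith [le_max_left R 0]) hp
      linarith [show 0 ≤ θ * K by positivity]
  refine ⟨2 * K₀ + 1, by positivity, fun x => ?_⟩
  rw [Real.rpow_neg (by positivity), ← div_eq_mul_inv, le_div_iff₀ (by positivity)]
  linarith [hweighted x]

end Decay

theorem stmt_1_general (d : ℕ) (α : ℝ) (hα : α ∈ Set.Ioo (0 : ℝ) 2)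
    (v f : EuclideanSpace ℝ (Fin d) → ℝ)
    (hv_lim : Tendsto v (cocompact (EuclideanSpace ℝ (Fin d))) (nhds 0))
    (hf_nonneg : ∀ x, 0 ≤ f x) (hf_bdd : ∃ M : ℝ, ∀ x, f x ≤ M)
    (C₁ : ℝ)
    (hrec : ∀ x : EuclideanSpace ℝ (Fin d), 3 ≤ ‖x‖ →
      f x ≤ C₁ * v x * (sSup (f '' Metric.ball x (‖x‖ / 2)) +
        ∫ z in (Metric.ball x (‖x‖ / 2))ᶜ, f z * ‖z - x‖ ^ (-(d : ℝ) - α) ∂volume))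
    (γ : ℝ) (hγ : 0 ≤ γ) (hγd : γ ≠ (d : ℝ))
    (C₂ : ℝ) (hC₂ : 0 < C₂) (hdecay : ∀ x, f x ≤ C₂ * (1 + ‖x‖) ^ (-γ)) :
    ∃ C₃ : ℝ, 0 < C₃ ∧ ∀ x,
      f x ≤ C₃ * (1 + ‖x‖) ^ (-(min (γ + α) ((d : ℝ) + α))) := by
  obtain ⟨K, hK0, hK⟩ := exists_integral_compl_ball_mul_rpow_norm_sub_le volume hf_nonneg hC₂.le
    hdecay hγ (by rwa [finrank_euclideanSpace_fin]) hα.1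
  rw [finrank_euclideanSpace_fin] at hK
  refine exists_le_mul_one_add_norm_rpow_neg_of_le_sSup_ball
    (le_min (by linarith [hα.1]) (by linarith [hα.1, d.cast_nonneg (α := ℝ)])) hK0 hf_nonneg
    hf_bdd fun θ hθ => ?_
  have hsmall : ∀ᶠ x in Bornology.cobounded _, C₁ * v x < θ := by
    rw [Metric.cobounded_eq_cocompact]
    exact (hv_lim.const_mul C₁).eventually_lt_const (by simpa using hθ)
  obtain ⟨R, -, hR⟩ := hasBasis_cobounded_norm.eventually_iff.1 hsmall
  refine ⟨max R 3, fun x hx => (hrec x (le_of_max_le_right hx)).trans ?_⟩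
  refine mul_le_mul (hR (le_of_max_le_left hx)).le
    (add_le_add le_rfl (hK x (by linarith [le_of_max_le_right hx]))) ?_ hθ.le
  exact add_nonneg (Real.sSup_nonneg (forall_mem_image.2 fun y _ => hf_nonneg y))
    (setIntegral_nonneg measurableSet_ball.compl fun z _ =>
      mul_nonneg (hf_nonneg z) (by positivity))

/-- One-step decay improvement inside the proof of Lemma 2.4: if a bounded nonnegative
measurable `f` satisfies the recursive inequality driven by a bounded function `v`
vanishing at infinity, then a decay rate `(1+|x|)^{-γ}` improves to
`(1+|x|)^{-γ'}` with `γ' = min (γ + α) (d + α)`. -/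
theorem stmt_1 (d : ℕ) (hd : 1 ≤ d) (α : ℝ) (hα : α ∈ Set.Ioo (0 : ℝ) 2)
    (v f : EuclideanSpace ℝ (Fin d) → ℝ)
    (hv_nonneg : ∀ x, 0 ≤ v x) (hv_bdd : ∃ M : ℝ, ∀ x, v x ≤ M)
    (hv_lim : Tendsto v (cocompact (EuclideanSpace ℝ (Fin d))) (nhds 0))
    (hf_nonneg : ∀ x, 0 ≤ f x) (hf_bdd : ∃ M : ℝ, ∀ x, f x ≤ M)
    (hf_meas : Measurable f)
    (C₁ : ℝ) (hC₁ : 0 < C₁)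
    (hrec : ∀ x : EuclideanSpace ℝ (Fin d), 3 ≤ ‖x‖ →
      f x ≤ C₁ * v x * (sSup (f '' Metric.ball x (‖x‖ / 2)) +
        ∫ z in (Metric.ball x (‖x‖ / 2))ᶜ, f z * ‖z - x‖ ^ (-(d : ℝ) - α) ∂volume))
    (γ : ℝ) (hγ : 0 ≤ γ) (hγd : γ ≠ (d : ℝ))
    (C₂ : ℝ) (hC₂ : 0 < C₂) (hdecay : ∀ x, f x ≤ C₂ * (1 + ‖x‖) ^ (-γ)) :
    ∃ C₃ : ℝ, 0 < C₃ ∧ ∀ x,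
      f x ≤ C₃ * (1 + ‖x‖) ^ (-(min (γ + α) ((d : ℝ) + α))) :=
  stmt_1_general d α hα v f hv_lim hf_nonneg hf_bdd C₁ hrec γ hγ hγd C₂ hC₂ hdecay
end

section
/- Let d ≥ 1 be an integer and α ∈ (0,2). Let v : ℝ^d → [0,∞) be bounded with v(x) → 0 as |x| → ∞, and let f : ℝ^d → [0,∞) be bounded and measurable. Suppose there is a constant C₁ > 0 such that for every x with |x| ≥ 3, f(x) ≤ C₁ v(x) ( sup_{y ∈ B(x,|x|/2)} f(y) + ∫_{B(x,|x|/2)^c} f(z) |z − x|^{−d−α} dz ). Then there exists a constant C₂ > 0 such that f(x) ≤ C₂ v(x) |x|^{−d−α} for all x with |x| ≥ 3. -/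
/-!
A bound `f ≲ ‖x‖ ^ (-β)` with `β < d` bounds the mass of `f` in `B(0, r)` by `r ^ (d - β)`, hence
the nonlocal tail at `x` by `‖x‖ ^ (-β - α)`. Conversely, since `v → 0` at infinity, a tail bound
`‖x‖ ^ (-γ)` fed into the recursive inequality on the dyadic regions `‖x‖ ≥ 2 ^ k R` gives
`f ≲ ‖x‖ ^ (-γ)`. Starting from boundedness and gaining `α` in each round, `f` eventually decays
faster than `‖x‖ ^ (-d)`, so it is integrable; then the tail is `≲ ‖x‖ ^ (-d - α)`, hence so is
`f`, and one last use of the recursive inequality supplies the factor `v x`.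
-/

open MeasureTheory Filter Metric Module Set Pointwise Topology

theorem rpow_neg_le_rpow_mul_rpow_neg {a c y γ : ℝ} (ha : 0 < a) (hc : 0 < c) (hγ : 0 ≤ γ)
    (hy0 : 0 < y) (hy : y ≤ a * c) : a ^ (-γ) ≤ c ^ γ * y ^ (-γ) :=
  calc a ^ (-γ) = c ^ γ * (a * c) ^ (-γ) := by
        rw [Real.mul_rpow ha.le hc.le, Real.rpow_neg hc.le, mul_left_comm,
          mul_inv_cancel₀ (by positivity), mul_one]
    _ ≤ c ^ γ * y ^ (-γ) :=
        mul_le_mul_of_nonneg_left (Real.rpow_le_rpow_of_nonpos hy0 hy (by linarith)) (by positivity)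

section PowerIntegrals

variable {E : Type*} [NormedAddCommGroup E] [NormedSpace ℝ E] [FiniteDimensional ℝ E]
  [MeasurableSpace E] [BorelSpace E] {μ : Measure E} [μ.IsAddHaarMeasure]

theorem setIntegral_smul_set_norm_rpow (s : Set E) (p : ℝ) {R : ℝ} (hR : 0 < R) :
    ∫ z in R • s, ‖z‖ ^ p ∂μ = R ^ ((finrank ℝ E : ℝ) + p) * ∫ z in s, ‖z‖ ^ p ∂μ := by
  have h := Measure.setIntegral_comp_smul_of_pos μ (fun z : E => ‖z‖ ^ p) s hR
  simp only [norm_smul, Real.norm_of_nonneg hR.le, Real.mul_rpow hR.le (norm_nonneg _),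
    integral_const_mul, smul_eq_mul] at h
  rw [Real.rpow_add hR, Real.rpow_natCast, mul_assoc, h, mul_inv_cancel_left₀ (by positivity)]

theorem setIntegral_ball_norm_rpow (p : ℝ) {r : ℝ} (hr : 0 < r) :
    ∫ z in ball (0 : E) r, ‖z‖ ^ p ∂μ =
      r ^ ((finrank ℝ E : ℝ) + p) * ∫ z in ball (0 : E) 1, ‖z‖ ^ p ∂μ := by
  rw [← setIntegral_smul_set_norm_rpow _ _ hr, smul_unitBall_of_pos hr]

theorem setIntegral_compl_ball_norm_sub_rpow (x : E) (p : ℝ) {r : ℝ} (hr : 0 < r) :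
    ∫ z in (ball x r)ᶜ, ‖z - x‖ ^ p ∂μ =
      r ^ ((finrank ℝ E : ℝ) + p) * ∫ z in (ball (0 : E) 1)ᶜ, ‖z‖ ^ p ∂μ := by
  have hpre : (ball x r)ᶜ = (· - x) ⁻¹' (r • (ball (0 : E) 1)ᶜ) := by
    ext z
    simp [mem_smul_set_iff_inv_smul_mem₀ hr.ne', norm_smul, dist_eq_norm, abs_of_pos hr,
      inv_mul_lt_iff₀ hr]
  rw [hpre, (measurePreserving_sub_right μ x).setIntegral_preimage_emb
    (measurableEmbedding_subRight x) (fun z => ‖z‖ ^ p), setIntegral_smul_set_norm_rpow _ _ hr]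

theorem integrableOn_compl_ball_norm_sub_rpow (x : E) {p r : ℝ}
    (hp : p < -(finrank ℝ E : ℝ)) (hr : 0 < r) :
    IntegrableOn (fun z => ‖z - x‖ ^ p) (ball x r)ᶜ μ := by
  have hint : Integrable (fun z => (1 + ‖z - x‖) ^ p) μ := by
    simpa using (integrable_one_add_norm (μ := μ) (r := -p) (by linarith)).comp_sub_right x
  refine ((hint.const_mul ((1 + r⁻¹) ^ (-p))).integrableOn).mono'
    (Measurable.aestronglyMeasurable (by fun_prop)) ?_
  filter_upwards [ae_restrict_mem measurableSet_ball.compl] with z hz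
  have hrz : r ≤ ‖z - x‖ := by simpa [dist_eq_norm] using hz
  have hle : 1 + ‖z - x‖ ≤ (1 + r⁻¹) * ‖z - x‖ := by
    have : 1 ≤ r⁻¹ * ‖z - x‖ := by rwa [← div_eq_inv_mul, one_le_div hr]
    linarith
  rw [Real.norm_of_nonneg (by positivity)]
  calc ‖z - x‖ ^ p = (1 + r⁻¹) ^ (-p) * ((1 + r⁻¹) * ‖z - x‖) ^ p := by
        rw [Real.mul_rpow (by positivity) (norm_nonneg _), Real.rpow_neg (by positivity),
          inv_mul_cancel_left₀ (by positivity)]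
    _ ≤ (1 + r⁻¹) ^ (-p) * (1 + ‖z - x‖) ^ p :=
        mul_le_mul_of_nonneg_left (Real.rpow_le_rpow_of_nonpos (by positivity) hle (by linarith))
          (by positivity)

end PowerIntegrals

section Decay

variable {E : Type*} [NormedAddCommGroup E] {f : E → ℝ} {M β γ : ℝ}

theorem sSup_image_ball_half_le {x : E} {b : ℝ} (hb0 : 0 ≤ b)
    (hb : ∀ y, ‖x‖ / 2 ≤ ‖y‖ → f y ≤ b) : sSup (f '' ball x (‖x‖ / 2)) ≤ b := by
  refine Real.sSup_le ?_ hb0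
  rintro _ ⟨y, hy, rfl⟩
  have hxy := norm_sub_norm_le x y
  rw [mem_ball, dist_eq_norm] at hy
  rw [norm_sub_rev] at hxy
  exact hb y (by linarith)

theorem exists_forall_le_of_norm_ge [ProperSpace E] {w : E → ℝ}
    (hw : Tendsto w (cocompact E) (𝓝 0)) {ε : ℝ} (hε : 0 < ε) :
    ∃ R, ∀ y, R ≤ ‖y‖ → w y ≤ ε := by
  have h := hw.eventually (ge_mem_nhds hε)
  rw [← cobounded_eq_cocompact, ← comap_norm_atTop, eventually_comap, eventually_atTop] at h
  obtain ⟨R, hR⟩ := h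
  exact ⟨R, fun y hy => hR ‖y‖ hy y rfl⟩

def HasPowerDecay (f : E → ℝ) (β : ℝ) : Prop :=
  ∃ K, 0 ≤ K ∧ ∀ z, 1 ≤ ‖z‖ → f z ≤ K * ‖z‖ ^ (-β)

theorem hasPowerDecay_zero (hf0 : ∀ z, 0 ≤ f z) (hfM : ∀ z, f z ≤ M) :
    HasPowerDecay f 0 :=
  ⟨M, (hf0 0).trans (hfM 0), fun z _ => by simpa using hfM z⟩

theorem HasPowerDecay.mono {β' : ℝ} (hf : HasPowerDecay f β) (h : β' ≤ β) :
    HasPowerDecay f β' := by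
  obtain ⟨K, hK, hfK⟩ := hf
  exact ⟨K, hK, fun z hz => (hfK z hz).trans <| mul_le_mul_of_nonneg_left
    (Real.rpow_le_rpow_of_exponent_le hz (neg_le_neg h)) hK⟩

theorem hasPowerDecay_of_dyadic (hf0 : ∀ z, 0 ≤ f z) (hfM : ∀ z, f z ≤ M) {D R : ℝ} (hD : 0 ≤ D)
    (hR : 1 ≤ R) (hγ : 0 ≤ γ) (h : ∀ k : ℕ, ∀ x : E, 2 ^ k * R ≤ ‖x‖ → f x ≤ D * (2 ^ k) ^ (-γ)) :
    HasPowerDecay f γ := by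
  have hM : 0 ≤ M := (hf0 0).trans (hfM 0)
  refine ⟨M * R ^ γ + D * (2 * R) ^ γ, by positivity, fun x hx => ?_⟩
  have hx0 : 0 < ‖x‖ := by linarith
  have hxγ : 0 ≤ ‖x‖ ^ (-γ) := by positivity
  rcases lt_or_ge ‖x‖ R with hxR | hxR
  · have := rpow_neg_le_rpow_mul_rpow_neg one_pos (by linarith) hγ hx0 (by linarith : ‖x‖ ≤ 1 * R)
    rw [Real.one_rpow] at this
    nlinarith [hfM x, mul_nonneg hD (by positivity : (0 : ℝ) ≤ (2 * R) ^ γ)]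
  · obtain ⟨k, hk, hk'⟩ := exists_nat_pow_near ((one_le_div (by linarith)).2 hxR) one_lt_two
    rw [le_div_iff₀ (by linarith)] at hk
    rw [div_lt_iff₀ (by linarith), pow_succ, mul_assoc] at hk'
    have := rpow_neg_le_rpow_mul_rpow_neg (by positivity) (by positivity) hγ hx0 hk'.le
    nlinarith [h k x hk, mul_nonneg hM (by positivity : (0 : ℝ) ≤ R ^ γ)]

variable [NormedSpace ℝ E] [MeasurableSpace E] {μ : Measure E} {α B : ℝ} {w : E → ℝ}

noncomputable def nonlocalTail (μ : Measure E) (α : ℝ) (f : E → ℝ) (x : E) : ℝ :=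
  ∫ z in (ball x (‖x‖ / 2))ᶜ, f z * ‖z - x‖ ^ (-(finrank ℝ E : ℝ) - α) ∂μ

def RecursiveBound (μ : Measure E) (α : ℝ) (w f : E → ℝ) : Prop :=
  ∀ x, 3 ≤ ‖x‖ → f x ≤ w x * (sSup (f '' ball x (‖x‖ / 2)) + nonlocalTail μ α f x)

theorem RecursiveBound.le_mul_rpow (hrec : RecursiveBound μ α w f)
    (hw0 : ∀ x, 0 ≤ w x) (hf : HasPowerDecay f γ) (hγ : 0 ≤ γ)
    (hJ : ∀ x, 2 ≤ ‖x‖ → nonlocalTail μ α f x ≤ B * ‖x‖ ^ (-γ)) :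
    ∃ C, 0 < C ∧ ∀ x : E, 3 ≤ ‖x‖ → f x ≤ C * w x * ‖x‖ ^ (-γ) := by
  obtain ⟨K, hK, hfK⟩ := hf
  refine ⟨K * 2 ^ γ + max B 0 + 1, by positivity, fun x hx => ?_⟩
  have hx0 : 0 < ‖x‖ := by linarith
  have hS : sSup (f '' ball x (‖x‖ / 2)) ≤ K * 2 ^ γ * ‖x‖ ^ (-γ) := by
    refine sSup_image_ball_half_le (by positivity) fun y hy => (hfK y (by linarith)).trans ?_
    rw [mul_assoc]
    exact mul_le_mul_of_nonneg_left (rpow_neg_le_rpow_mul_rpow_neg (by linarith) two_pos hγ hx0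
      (by linarith)) hK
  have hxγ : 0 ≤ ‖x‖ ^ (-γ) := by positivity
  calc f x ≤ w x * (sSup (f '' ball x (‖x‖ / 2)) + nonlocalTail μ α f x) := hrec x hx
    _ ≤ w x * (K * 2 ^ γ * ‖x‖ ^ (-γ) + B * ‖x‖ ^ (-γ)) :=
        mul_le_mul_of_nonneg_left (add_le_add hS (hJ x (by linarith))) (hw0 x)
    _ ≤ (K * 2 ^ γ + max B 0 + 1) * w x * ‖x‖ ^ (-γ) := by
        have := mul_le_mul_of_nonneg_right (le_max_left B 0) hxγ
        nlinarith [hw0 x, mul_nonneg (hw0 x) hxγ]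

variable [BorelSpace E]

theorem nonlocalTail_nonneg (hf0 : ∀ z, 0 ≤ f z) (x : E) :
    0 ≤ nonlocalTail μ α f x :=
  setIntegral_nonneg measurableSet_ball.compl fun z _ => mul_nonneg (hf0 z) (by positivity)

theorem RecursiveBound.le_dyadic {R : ℝ} (hrec : RecursiveBound μ α w f)
    (hf0 : ∀ z, 0 ≤ f z) (hfM : ∀ z, f z ≤ M) (hR : 3 ≤ R) (hγ : 0 ≤ γ)
    (hwR : ∀ y, R ≤ ‖y‖ → w y ≤ 2 ^ (-γ) / 2)
    (hJ : ∀ x, 2 ≤ ‖x‖ → nonlocalTail μ α f x ≤ B * ‖x‖ ^ (-γ)) :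
    ∀ k : ℕ, ∀ x : E, 2 ^ k * R ≤ ‖x‖ → f x ≤ max M B * (2 ^ k) ^ (-γ) := by
  have hD : 0 ≤ max M B := le_max_of_le_left ((hf0 0).trans (hfM 0))
  intro k
  induction k with
  | zero => simpa using fun x _ => (hfM x).trans (le_max_left M B)
  | succ k ih =>
    intro x hx
    have h2k : (2 : ℝ) ^ k * R ≤ ‖x‖ / 2 := by rw [pow_succ] at hx; linarith
    have hxk : (2 : ℝ) ^ k ≤ ‖x‖ := by nlinarith [pow_pos (two_pos : (0 : ℝ) < 2) k]
    have hxR : R ≤ ‖x‖ := by nlinarith [one_le_pow₀ (one_le_two : (1 : ℝ) ≤ 2) (n := k)]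
    set b := max M B * ((2 : ℝ) ^ k) ^ (-γ)
    have hS : sSup (f '' ball x (‖x‖ / 2)) ≤ b :=
      sSup_image_ball_half_le (by positivity) fun y hy => ih y (h2k.trans hy)
    have hT : nonlocalTail μ α f x ≤ b :=
      (hJ x (by linarith)).trans <| mul_le_mul (le_max_right M B)
        (Real.rpow_le_rpow_of_nonpos (by positivity) hxk (by linarith)) (by positivity) hD
    calc f x ≤ w x * (sSup (f '' ball x (‖x‖ / 2)) + nonlocalTail μ α f x) := hrec x (by linarith)
      _ ≤ 2 ^ (-γ) / 2 * (b + b) :=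
          mul_le_mul (hwR x hxR) (add_le_add hS hT)
            (add_nonneg (Real.sSup_nonneg (by rintro _ ⟨y, -, rfl⟩; exact hf0 y))
              (nonlocalTail_nonneg hf0 x)) (by positivity)
      _ = max M B * ((2 : ℝ) ^ (k + 1)) ^ (-γ) := by
          rw [pow_succ', Real.mul_rpow zero_le_two (by positivity)]
          ring

variable [FiniteDimensional ℝ E]

theorem RecursiveBound.hasPowerDecay (hrec : RecursiveBound μ α w f)
    (hf0 : ∀ z, 0 ≤ f z) (hfM : ∀ z, f z ≤ M) (hw : Tendsto w (cocompact E) (𝓝 0)) (hγ : 0 ≤ γ)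
    (hJ : ∀ x, 2 ≤ ‖x‖ → nonlocalTail μ α f x ≤ B * ‖x‖ ^ (-γ)) : HasPowerDecay f γ := by
  obtain ⟨R, hR⟩ := exists_forall_le_of_norm_ge hw (ε := 2 ^ (-γ) / 2) (by positivity)
  exact hasPowerDecay_of_dyadic hf0 hfM (le_max_of_le_left ((hf0 0).trans (hfM 0)))
    (by linarith [le_max_right R 3]) hγ <|
    hrec.le_dyadic hf0 hfM (le_max_right R 3) hγ (fun y hy => hR y ((le_max_left R 3).trans hy)) hJ

variable [μ.IsAddHaarMeasure]

theorem HasPowerDecay.integral_ball_le [Nontrivial E] (hf : HasPowerDecay f β)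
    (hf0 : ∀ z, 0 ≤ f z) (hfM : ∀ z, f z ≤ M) (hβ0 : 0 ≤ β) (hβ : β < finrank ℝ E) :
    ∃ C, ∀ r, 0 < r → ∫ z in ball (0 : E) r, f z ∂μ ≤ C * r ^ ((finrank ℝ E : ℝ) - β) := by
  obtain ⟨K, hK, hfK⟩ := hf
  have hM : 0 ≤ M := (hf0 0).trans (hfM 0)
  have hdom : ∀ z : E, z ≠ 0 → f z ≤ (K + M) * ‖z‖ ^ (-β) := by
    intro z hz
    rcases le_or_gt 1 ‖z‖ with h | h
    · exact (hfK z h).trans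
        (mul_le_mul_of_nonneg_right (by linarith) (by positivity))
    · have : 1 ≤ ‖z‖ ^ (-β) :=
        Real.one_le_rpow_of_pos_of_le_one_of_nonpos (norm_pos_iff.2 hz) h.le (by linarith)
      nlinarith [hfM z]
  refine ⟨(K + M) * ∫ z in ball (0 : E) 1, ‖z‖ ^ (-β) ∂μ, fun r hr => ?_⟩
  have hint : IntegrableOn (fun z : E => ‖z‖ ^ (-β)) (ball 0 r) μ :=
    integrableOn_ball_of_norm_le_rpow Module.finrank_pos (C := 1) hβ
      (ae_of_all _ fun z => by simp [Real.norm_of_nonneg (by positivity : 0 ≤ ‖z‖ ^ (-β))])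
      (Measurable.aestronglyMeasurable (by fun_prop))
  calc ∫ z in ball (0 : E) r, f z ∂μ ≤ ∫ z in ball (0 : E) r, (K + M) * ‖z‖ ^ (-β) ∂μ :=
        integral_mono_of_nonneg (ae_of_all _ hf0) (hint.const_mul _)
          (ae_restrict_of_ae (by filter_upwards [Measure.ae_ne μ 0] using hdom))
    _ = _ := by
        rw [integral_const_mul, setIntegral_ball_norm_rpow _ hr, ← sub_eq_add_neg]
        ring

theorem HasPowerDecay.integrable (hf : HasPowerDecay f β) (hf0 : ∀ z, 0 ≤ f z)
    (hf_meas : Measurable f) (hfM : ∀ z, f z ≤ M) (hβ : finrank ℝ E < β) :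
    Integrable f μ := by
  obtain ⟨K, -, hfK⟩ := hf
  rw [← integrableOn_univ, ← union_compl_self (ball (0 : E) 1)]
  refine IntegrableOn.union ?_ ?_
  · exact Measure.integrableOn_of_bounded measure_ball_lt_top.ne hf_meas.aestronglyMeasurable
      (ae_of_all _ fun z => by rw [Real.norm_of_nonneg (hf0 z)]; exact hfM z)
  · refine ((integrableOn_compl_ball_norm_sub_rpow 0 (p := -β) (by linarith) one_pos).const_mul
      K).mono' hf_meas.aestronglyMeasurable ?_
    filter_upwards [ae_restrict_mem measurableSet_ball.compl] with z hz
    simpa [Real.norm_of_nonneg (hf0 z)] using hfK z (by simpa using hz)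

theorem HasPowerDecay.nonlocalTail_le {Cm : ℝ} (hf : HasPowerDecay f β) (hf0 : ∀ z, 0 ≤ f z)
    (hf_meas : Measurable f) (hfM : ∀ z, f z ≤ M) (hα : 0 < α) (hβ : 0 ≤ β) (hγ : γ ≤ β + α)
    (hmass : ∀ r, 1 ≤ r → ∫ z in ball (0 : E) r, f z ∂μ ≤ Cm * r ^ ((finrank ℝ E : ℝ) + α - γ)) :
    ∃ B, ∀ x : E, 2 ≤ ‖x‖ → nonlocalTail μ α f x ≤ B * ‖x‖ ^ (-γ) := by
  obtain ⟨K, hK, hfK⟩ := hf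
  have hn : (0 : ℝ) ≤ finrank ℝ E := Nat.cast_nonneg _
  set I := ∫ z in (ball (0 : E) 1)ᶜ, ‖z‖ ^ (-(finrank ℝ E : ℝ) - α) ∂μ
  have hI : 0 ≤ I := setIntegral_nonneg measurableSet_ball.compl fun z _ => by positivity
  refine ⟨(K * I + Cm) * 2 ^ γ, fun x hx => ?_⟩
  set r := ‖x‖ / 2 with hr
  have hr1 : 1 ≤ r := by linarith
  have hr0 : 0 < r := by linarith
  set ker : E → ℝ := fun z => ‖z - x‖ ^ (-(finrank ℝ E : ℝ) - α)
  have hker : IntegrableOn ker (ball x r)ᶜ μ :=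
    integrableOn_compl_ball_norm_sub_rpow x (by linarith) hr0
  have hfr : Integrable ((ball (0 : E) r).indicator f) μ :=
    (integrable_indicator_iff measurableSet_ball).2 <| Measure.integrableOn_of_bounded
      measure_ball_lt_top.ne hf_meas.aestronglyMeasurable
      (ae_of_all _ fun z => by rw [Real.norm_of_nonneg (hf0 z)]; exact hfM z)
  -- away from the origin `f` is small, near the origin the kernel is small
  have hpt : ∀ z ∈ (ball x r)ᶜ, f z * ker z ≤
      K * r ^ (-β) * ker z + r ^ (-(finrank ℝ E : ℝ) - α) * (ball (0 : E) r).indicator f z := by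
    intro z hz
    have hzx : r ≤ ‖z - x‖ := by simpa [dist_eq_norm] using hz
    by_cases hzr : z ∈ ball (0 : E) r
    · rw [indicator_of_mem hzr]
      have := Real.rpow_le_rpow_of_nonpos hr0 hzx (by linarith : -(finrank ℝ E : ℝ) - α ≤ 0)
      nlinarith [hf0 z, mul_nonneg (mul_nonneg hK (by positivity : 0 ≤ r ^ (-β)))
        (by positivity : 0 ≤ ker z)]
    · have hz : r ≤ ‖z‖ := by simpa using hzr
      rw [indicator_of_notMem hzr, mul_zero, add_zero]
      refine mul_le_mul_of_nonneg_right ((hfK z (hr1.trans hz)).trans ?_) (by positivity)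
      exact mul_le_mul_of_nonneg_left (Real.rpow_le_rpow_of_nonpos hr0 hz (by linarith)) hK
  calc nonlocalTail μ α f x
      ≤ ∫ z in (ball x r)ᶜ, (K * r ^ (-β) * ker z
          + r ^ (-(finrank ℝ E : ℝ) - α) * (ball (0 : E) r).indicator f z) ∂μ :=
        integral_mono_of_nonneg
          (ae_of_all _ fun z => mul_nonneg (hf0 z) (by positivity))
          ((hker.const_mul _).add (hfr.integrableOn.const_mul _))
          ((ae_restrict_iff' measurableSet_ball.compl).2 (ae_of_all _ hpt))
    _ = K * I * r ^ (-β - α) + r ^ (-(finrank ℝ E : ℝ) - α) *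
          ∫ z in (ball x r)ᶜ, (ball (0 : E) r).indicator f z ∂μ := by
        rw [integral_add (hker.const_mul _) (hfr.integrableOn.const_mul _), integral_const_mul,
          integral_const_mul, setIntegral_compl_ball_norm_sub_rpow x _ hr0,
          show (finrank ℝ E : ℝ) + (-(finrank ℝ E : ℝ) - α) = -α by ring, sub_eq_add_neg (-β),
          Real.rpow_add hr0]
        ring
    _ ≤ K * I * r ^ (-γ) + r ^ (-(finrank ℝ E : ℝ) - α) *
          (Cm * r ^ ((finrank ℝ E : ℝ) + α - γ)) := by
        refine add_le_add (mul_le_mul_of_nonneg_left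
          (Real.rpow_le_rpow_of_exponent_le hr1 (by linarith)) (by positivity))
          (mul_le_mul_of_nonneg_left ?_ (by positivity))
        refine (setIntegral_le_integral hfr (ae_of_all _ fun z => ?_)).trans ?_
        · exact indicator_nonneg (fun z _ => hf0 z) z
        · rw [integral_indicator measurableSet_ball]
          exact hmass r hr1
    _ = (K * I + Cm) * r ^ (-γ) := by
        rw [mul_left_comm, ← Real.rpow_add hr0,
          show -(finrank ℝ E : ℝ) - α + ((finrank ℝ E : ℝ) + α - γ) = -γ by ring]
        ring
    _ = (K * I + Cm) * 2 ^ γ * ‖x‖ ^ (-γ) := by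
        rw [hr, Real.div_rpow (norm_nonneg x) zero_le_two, Real.rpow_neg zero_le_two]
        field_simp

theorem RecursiveBound.hasPowerDecay_add [Nontrivial E] (hrec : RecursiveBound μ α w f)
    (hf0 : ∀ z, 0 ≤ f z) (hf_meas : Measurable f) (hfM : ∀ z, f z ≤ M)
    (hw : Tendsto w (cocompact E) (𝓝 0)) (hα : 0 < α) (hf : HasPowerDecay f β) (hβ0 : 0 ≤ β)
    (hβ : β < finrank ℝ E) :
    HasPowerDecay f (β + α) := by
  obtain ⟨C, hC⟩ := hf.integral_ball_le (μ := μ) hf0 hfM hβ0 hβ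
  obtain ⟨B, hB⟩ := hf.nonlocalTail_le hf0 hf_meas hfM hα hβ0 le_rfl (Cm := C) fun r hr => by
    convert hC r (by linarith) using 3
    ring
  exact hrec.hasPowerDecay hf0 hfM hw (by linarith) hB

theorem RecursiveBound.exists_hasPowerDecay_gt [Nontrivial E] (hrec : RecursiveBound μ α w f)
    (hf0 : ∀ z, 0 ≤ f z) (hf_meas : Measurable f) (hfM : ∀ z, f z ≤ M)
    (hw : Tendsto w (cocompact E) (𝓝 0)) (hα : α ∈ Ioo 0 2) :
    ∃ β, (finrank ℝ E : ℝ) < β ∧ HasPowerDecay f β := by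
  have hn : (1 : ℝ) ≤ finrank ℝ E := by exact_mod_cast Module.finrank_pos
  obtain ⟨hα0, hα2⟩ := hα
  set T := (finrank ℝ E : ℝ) - α / 2 with hT
  have hT0 : 0 ≤ T := by linarith
  have hTn : T < finrank ℝ E := by linarith
  have hstep : ∀ β, HasPowerDecay f (min β T) → 0 ≤ β → HasPowerDecay f (min β T + α) :=
    fun β hf hβ => hrec.hasPowerDecay_add hf0 hf_meas hfM hw hα0 hf (le_min hβ hT0)
      ((min_le_right _ _).trans_lt hTn)
  -- capping the exponent at `T < d` keeps every round within reach of the mass bound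
  have key : ∀ k : ℕ, HasPowerDecay f (min (k * α) T) := by
    intro k
    induction k with
    | zero => simpa [min_eq_left hT0] using hasPowerDecay_zero hf0 hfM
    | succ k ih =>
      refine (hstep _ ih (by positivity)).mono ?_
      push_cast
      rcases le_total (k * α) T with h | h
      · rw [min_eq_left h]; linarith [min_le_left ((k + 1) * α) T]
      · rw [min_eq_right h]; linarith [min_le_right ((k + 1) * α) T]
  obtain ⟨k, hk⟩ := exists_nat_ge (T / α)
  have hkT : min (k * α) T = T := min_eq_right (by rwa [div_le_iff₀ hα0] at hk)
  exact ⟨T + α, by linarith, hkT ▸ hstep _ (key k) (by positivity)⟩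

end Decay

theorem stmt_2_general (d : ℕ) (hd : 1 ≤ d) (α : ℝ) (hα : α ∈ Set.Ioo (0 : ℝ) 2)
    (v f : EuclideanSpace ℝ (Fin d) → ℝ)
    (hv_nonneg : ∀ x, 0 ≤ v x)
    (hv_lim : Tendsto v (cocompact (EuclideanSpace ℝ (Fin d))) (nhds 0))
    (hf_nonneg : ∀ x, 0 ≤ f x) (hf_bdd : ∃ M : ℝ, ∀ x, f x ≤ M)
    (hf_meas : Measurable f)
    (C₁ : ℝ) (hC₁ : 0 < C₁)
    (hrec : ∀ x : EuclideanSpace ℝ (Fin d), 3 ≤ ‖x‖ →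
      f x ≤ C₁ * v x * (sSup (f '' Metric.ball x (‖x‖ / 2)) +
        ∫ z in (Metric.ball x (‖x‖ / 2))ᶜ, f z * ‖z - x‖ ^ (-(d : ℝ) - α) ∂volume)) :
    ∃ C₂ : ℝ, 0 < C₂ ∧ ∀ x : EuclideanSpace ℝ (Fin d), 3 ≤ ‖x‖ →
      f x ≤ C₂ * v x * ‖x‖ ^ (-(d : ℝ) - α) := by
  have : Nontrivial (EuclideanSpace ℝ (Fin d)) :=
    Module.nontrivial_of_finrank_pos (R := ℝ) (by rw [finrank_euclideanSpace_fin]; exact hd)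
  rw [show (d : ℝ) = finrank ℝ (EuclideanSpace ℝ (Fin d)) by simp] at hrec ⊢
  change RecursiveBound volume α (fun x => C₁ * v x) f at hrec
  obtain ⟨M, hfM⟩ := hf_bdd
  have hw : Tendsto (fun x => C₁ * v x) (cocompact _) (𝓝 0) := by
    simpa using hv_lim.const_mul C₁
  obtain ⟨β, hβ, hfβ⟩ := hrec.exists_hasPowerDecay_gt hf_nonneg hf_meas hfM hw hα
  obtain ⟨B, hB⟩ := hfβ.nonlocalTail_le (μ := volume) hf_nonneg hf_meas hfM hα.1 (by linarith)
    (γ := finrank ℝ (EuclideanSpace ℝ (Fin d)) + α) (by linarith) (Cm := ∫ z, f z)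
    fun r _ => by
      simpa using setIntegral_le_integral (hfβ.integrable hf_nonneg hf_meas hfM hβ)
        (ae_of_all _ hf_nonneg)
  have hγ : 0 ≤ (finrank ℝ (EuclideanSpace ℝ (Fin d)) : ℝ) + α := by linarith [hα.1]
  obtain ⟨C, hC, hfC⟩ := hrec.le_mul_rpow (fun x => mul_nonneg hC₁.le (hv_nonneg x))
    (hrec.hasPowerDecay hf_nonneg hfM hw hγ hB) hγ hB
  refine ⟨C * C₁, by positivity, fun x hx => ?_⟩
  calc f x ≤ C * (C₁ * v x) * ‖x‖ ^ (-((finrank ℝ (EuclideanSpace ℝ (Fin d)) : ℝ) + α)) :=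
        hfC x hx
    _ = _ := by rw [neg_add']; ring

/-- Lemma 2.4 (abstract form): if a bounded nonnegative measurable `f` satisfies the
recursive inequality driven by a bounded function `v` vanishing at infinity, then
`f x ≤ C₂ v x |x|^{-d-α}` for `|x| ≥ 3`. -/
theorem stmt_2 (d : ℕ) (hd : 1 ≤ d) (α : ℝ) (hα : α ∈ Set.Ioo (0 : ℝ) 2)
    (v f : EuclideanSpace ℝ (Fin d) → ℝ)
    (hv_nonneg : ∀ x, 0 ≤ v x) (hv_bdd : ∃ M : ℝ, ∀ x, v x ≤ M)
    (hv_lim : Tendsto v (cocompact (EuclideanSpace ℝ (Fin d))) (nhds 0))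
    (hf_nonneg : ∀ x, 0 ≤ f x) (hf_bdd : ∃ M : ℝ, ∀ x, f x ≤ M)
    (hf_meas : Measurable f)
    (C₁ : ℝ) (hC₁ : 0 < C₁)
    (hrec : ∀ x : EuclideanSpace ℝ (Fin d), 3 ≤ ‖x‖ →
      f x ≤ C₁ * v x * (sSup (f '' Metric.ball x (‖x‖ / 2)) +
        ∫ z in (Metric.ball x (‖x‖ / 2))ᶜ, f z * ‖z - x‖ ^ (-(d : ℝ) - α) ∂volume)) :
    ∃ C₂ : ℝ, 0 < C₂ ∧ ∀ x : EuclideanSpace ℝ (Fin d), 3 ≤ ‖x‖ →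
      f x ≤ C₂ * v x * ‖x‖ ^ (-(d : ℝ) - α) :=
  stmt_2_general d hd α hα v f hv_nonneg hv_lim hf_nonneg hf_bdd hf_meas C₁ hC₁ hrec
end

section
/- Let β > 0, C > 0, c ≥ 0 and R > 0. Let g : (0,∞) → [0,∞) be nondecreasing, satisfy g(s) ≤ C s^β for all s > 0, and satisfy g(2s) ≥ 2^{β+1} ( g(s) − c ) for all s ≥ R. Then g is bounded on (0,∞). -/
/-!
With `q = 2^(β+1)`, the doubling inequality says that `g(s) - x` grows at least by the
factor `q` under `s ↦ 2s`, where `x = qc/(q - 1)` is the fixed point of `t ↦ q(t - c)`.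
If `g(s) > x` for some `s ≥ R`, then `g(2ⁿs) - x ≥ qⁿ (g(s) - x)`, which outgrows the bound
`C (2ⁿs)^β = C s^β (2^β)ⁿ` since `q = 2 · 2^β`. Hence `g ≤ x` on `[R, ∞)`, and on `(0, R)`
by monotonicity.
-/

open Filter Topology

lemma pow_mul_sub_le_sub_of_mul_sub_le {q x : ℝ} (hq : 0 ≤ q) {u : ℕ → ℝ}
    (hu : ∀ n, q * (u n - x) ≤ u (n + 1) - x) (n : ℕ) : q ^ n * (u 0 - x) ≤ u n - x := by
  induction n with
  | zero => simp
  | succ n ih =>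
    calc q ^ (n + 1) * (u 0 - x) = q * (q ^ n * (u 0 - x)) := by ring
      _ ≤ q * (u n - x) := mul_le_mul_of_nonneg_left ih hq
      _ ≤ u (n + 1) - x := hu n

lemma nonpos_of_add_two_mul_pow_mul_le {μ x δ A : ℝ} (hμ : 0 < μ) (hμ2 : 1 < 2 * μ)
    (h : ∀ n : ℕ, x + (2 * μ) ^ n * δ ≤ A * μ ^ n) : δ ≤ 0 := by
  have hlim : Tendsto (fun n : ℕ ↦ A * (1 / 2) ^ n - x * (2 * μ)⁻¹ ^ n) atTop (𝓝 0) := by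
    have h₁ := (tendsto_pow_atTop_nhds_zero_of_lt_one (by norm_num : (0 : ℝ) ≤ 1 / 2)
      (by norm_num)).const_mul A
    have h₂ := (tendsto_pow_atTop_nhds_zero_of_lt_one (by positivity)
      (inv_lt_one_of_one_lt₀ hμ2)).const_mul x
    simpa using h₁.sub h₂
  refine ge_of_tendsto' hlim fun n ↦ ?_
  have hpos : 0 < (2 * μ) ^ n := by positivity
  rw [le_sub_iff_add_le, ← mul_le_mul_iff_of_pos_left hpos]
  calc (2 * μ) ^ n * (δ + x * (2 * μ)⁻¹ ^ n) = x + (2 * μ) ^ n * δ := by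
        rw [inv_pow]; field_simp; ring
    _ ≤ A * μ ^ n := h n
    _ = (2 * μ) ^ n * (A * (1 / 2) ^ n) := by
        rw [mul_left_comm, ← mul_pow, mul_right_comm, mul_one_div_cancel two_ne_zero, one_mul]

lemma le_fixedPoint_of_doubling {β C c R : ℝ} (hβ : -1 < β) {g : ℝ → ℝ}
    (hg_grow : ∀ s, 0 < s → g s ≤ C * s ^ β)
    (hg_double : ∀ s, R ≤ s → 2 ^ (β + 1) * (g s - c) ≤ g (2 * s))
    {s : ℝ} (hs : 0 < s) (hRs : R ≤ s) :
    g s ≤ 2 ^ (β + 1) * c / (2 ^ (β + 1) - 1) := by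
  set μ : ℝ := 2 ^ β
  have hμ : 0 < μ := by positivity
  have hq : (2 : ℝ) ^ (β + 1) = 2 * μ := by rw [Real.rpow_add_one two_ne_zero, mul_comm]
  have hμ2 : 1 < 2 * μ := by rw [← hq]; exact Real.one_lt_rpow one_lt_two (by linarith)
  rw [hq] at hg_double ⊢
  set x := 2 * μ * c / (2 * μ - 1)
  have hx : x * (2 * μ - 1) = 2 * μ * c := div_mul_cancel₀ _ (sub_pos.2 hμ2).ne'
  have hfix (t : ℝ) : 2 * μ * (t - c) - x = 2 * μ * (t - x) := by linear_combination hx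
  have hiter := pow_mul_sub_le_sub_of_mul_sub_le (q := 2 * μ) (x := x)
    (u := fun n : ℕ ↦ g (2 ^ n * s)) (by positivity) fun n ↦ by
      have hR : R ≤ 2 ^ n * s :=
        hRs.trans (le_mul_of_one_le_left hs.le (one_le_pow₀ one_le_two))
      rw [← hfix, pow_succ, mul_comm _ (2 : ℝ), mul_assoc 2 (2 ^ n) s]
      exact sub_le_sub_right (hg_double _ hR) x
  have hgrow (n : ℕ) : g (2 ^ n * s) ≤ C * s ^ β * μ ^ n :=
    calc g (2 ^ n * s) ≤ C * (2 ^ n * s) ^ β := hg_grow _ (by positivity)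
      _ = C * s ^ β * μ ^ n := by
        rw [Real.mul_rpow (by positivity) hs.le, ← Real.rpow_natCast,
          ← Real.rpow_mul zero_le_two, mul_comm (n : ℝ), Real.rpow_mul_natCast zero_le_two]
        ring
  have hδ := nonpos_of_add_two_mul_pow_mul_le hμ hμ2 (x := x) (δ := g s - x) (A := C * s ^ β)
    fun n ↦ by
      have hn := (hiter n).trans (sub_le_sub_right (hgrow n) x)
      simp only [pow_zero, one_mul] at hn
      linarith
  exact sub_nonpos.1 hδ

theorem stmt_3_general (β C c R : ℝ) (hβ : 0 < β)
    (g : ℝ → ℝ)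
    (hg_mono : ∀ s t, 0 < s → s ≤ t → g s ≤ g t)
    (hg_grow : ∀ s, 0 < s → g s ≤ C * s ^ β)
    (hg_double : ∀ s, R ≤ s → 2 ^ (β + 1) * (g s - c) ≤ g (2 * s)) :
    ∃ M : ℝ, ∀ s, 0 < s → g s ≤ M := by
  refine ⟨2 ^ (β + 1) * c / (2 ^ (β + 1) - 1), fun s hs ↦ ?_⟩
  rcases le_or_gt R s with hRs | hsR
  · exact le_fixedPoint_of_doubling (by linarith) hg_grow hg_double hs hRs
  · exact (hg_mono s R hs hsR.le).trans
      (le_fixedPoint_of_doubling (by linarith) hg_grow hg_double (hs.trans hsR) le_rfl)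

/-- Doubling-iteration boundedness: if `g : (0,∞) → [0,∞)` is nondecreasing, grows at
most like `C s^β`, and satisfies `g(2s) ≥ 2^{β+1}(g(s) - c)` for `s ≥ R`, then `g` is
bounded on `(0,∞)`. -/
theorem stmt_3 (β C c R : ℝ) (hβ : 0 < β) (hC : 0 < C) (hc : 0 ≤ c) (hR : 0 < R)
    (g : ℝ → ℝ) (hg_nonneg : ∀ s, 0 < s → 0 ≤ g s)
    (hg_mono : ∀ s t, 0 < s → s ≤ t → g s ≤ g t)
    (hg_grow : ∀ s, 0 < s → g s ≤ C * s ^ β)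
    (hg_double : ∀ s, R ≤ s → 2 ^ (β + 1) * (g s - c) ≤ g (2 * s)) :
    ∃ M : ℝ, ∀ s, 0 < s → g s ≤ M :=
  stmt_3_general β C c R hβ g hg_mono hg_grow hg_double
end

section
/- Let d ≥ 1 be an integer, α ∈ (0,2), R ≥ 1, c > 0, and let C : (0,∞) → (0,∞) be an arbitrary function. Let h : (0,∞) × ℝ^d → [0,1] be such that x ↦ h(t,x) is Lebesgue measurable for each t > 0, and suppose that for every t > 0 and every x ∈ ℝ^d with |x| ≥ 2R one has h(t,x) ≤ C(t)(1+|x|)^{−d−α} + c ∫_{B(x,|x|/4)^c} h(t/2, y) |y − x|^{−d−α} dy. Then for every t > 0 there exists a constant C'(t) such that h(t,x) ≤ C'(t)(1+|x|)^{−d−α} for all x ∈ ℝ^d. -/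
/-!
Write `p = d + α` and suppose `h(t/2, y) ≤ K (1 + |y|)^{-γ}`. On `|y - x| ≥ |x|/4` split
according to whether `|y| ≤ |x|/2` (then `|y - x| ≥ |x|/2`, so the kernel `|y - x|^{-p}` is of
size `|x|^{-p}`) or `|y| > |x|/2` (then the weight is of size `|x|^{-γ}`, and the kernel is at most
`|x|^{-(p-σ)} (1 + |y - x|)^{-σ}` up to a constant). With `σ = γ + p - γ'` both pieces are
integrable as soon as `σ > d`, so the recursive inequality upgrades the decay rate `γ` to any
`γ' ≤ p` with `γ' < γ + α`. Starting from the trivial bound `h ≤ 1`, finitely many steps reach `p`.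
-/

open MeasureTheory Metric Module Real

lemma Real.rpow_neg_le_mul_rpow_neg {u v k s : ℝ} (hu : 0 < u) (hk : 0 < k) (huv : u ≤ k * v)
    (hs : 0 ≤ s) : v ^ (-s) ≤ k ^ s * u ^ (-s) := by
  have hv : u / k ≤ v := by rwa [div_le_iff₀' hk]
  calc v ^ (-s) ≤ (u / k) ^ (-s) := rpow_le_rpow_of_nonpos (div_pos hu hk) hv (neg_nonpos.2 hs)
    _ = k ^ s * u ^ (-s) := by
      rw [div_rpow hu.le hk.le, rpow_neg hk.le, div_inv_eq_mul, mul_comm]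

variable {E : Type*} [NormedAddCommGroup E]

lemma one_add_norm_rpow_mul_norm_sub_rpow_le_s4 {γ σ p : ℝ} (hγ : 0 ≤ γ) (hγσ : γ ≤ σ) (hσp : σ ≤ p)
    {x y : E} (hx : 1 ≤ ‖x‖) (hxy : ‖x‖ / 4 ≤ ‖y - x‖) :
    (1 + ‖y‖) ^ (-γ) * ‖y - x‖ ^ (-p) ≤ (1 + ‖x‖) ^ (-(γ + p - σ)) *
      (4 ^ p * (1 + ‖y‖) ^ (-σ) + 2 ^ γ * 5 ^ σ * 8 ^ (p - σ) * (1 + ‖y - x‖) ^ (-σ)) := by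
  set n := ‖x‖
  set u := ‖y - x‖
  have hu : 0 < u := by linarith
  have hw : 0 < 1 + n := by linarith
  have hy : 0 < 1 + ‖y‖ := by positivity
  have hσ : 0 ≤ σ := hγ.trans hγσ
  rcases le_or_gt ‖y‖ (n / 2) with hyn | hyn
  · have hun : n / 2 ≤ u := by
      have := norm_sub_norm_le x y
      rw [norm_sub_rev] at this
      linarith
    have hkernel : u ^ (-p) ≤ 4 ^ p * (1 + n) ^ (-p) :=
      rpow_neg_le_mul_rpow_neg hw (by norm_num) (by linarith) (by linarith)
    have hweight : (1 + ‖y‖) ^ (-γ) ≤ (1 + ‖y‖) ^ (-σ) * (1 + n) ^ (σ - γ) := by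
      rw [show -γ = -σ + (σ - γ) by ring, rpow_add hy]
      gcongr
      linarith
    calc (1 + ‖y‖) ^ (-γ) * u ^ (-p)
        ≤ (1 + ‖y‖) ^ (-σ) * (1 + n) ^ (σ - γ) * (4 ^ p * (1 + n) ^ (-p)) := by gcongr
      _ = (1 + n) ^ (-(γ + p - σ)) * (4 ^ p * (1 + ‖y‖) ^ (-σ)) := by
        rw [show -(γ + p - σ) = (σ - γ) + -p by ring, rpow_add hw]
        ring
      _ ≤ _ := by
        gcongr
        exact le_add_of_nonneg_right (by positivity)
  · have hweight : (1 + ‖y‖) ^ (-γ) ≤ 2 ^ γ * (1 + n) ^ (-γ) :=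
      rpow_neg_le_mul_rpow_neg hw (by norm_num) (by linarith) hγ
    have hnear : u ^ (-σ) ≤ 5 ^ σ * (1 + u) ^ (-σ) :=
      rpow_neg_le_mul_rpow_neg (by positivity) (by norm_num) (by linarith) hσ
    have hfar : u ^ (-(p - σ)) ≤ 8 ^ (p - σ) * (1 + n) ^ (-(p - σ)) :=
      rpow_neg_le_mul_rpow_neg hw (by norm_num) (by linarith) (by linarith)
    calc (1 + ‖y‖) ^ (-γ) * u ^ (-p) = (1 + ‖y‖) ^ (-γ) * (u ^ (-σ) * u ^ (-(p - σ))) := by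
          rw [← rpow_add hu]
          ring_nf
      _ ≤ 2 ^ γ * (1 + n) ^ (-γ) *
            (5 ^ σ * (1 + u) ^ (-σ) * (8 ^ (p - σ) * (1 + n) ^ (-(p - σ)))) := by
          gcongr
      _ = (1 + n) ^ (-(γ + p - σ)) * (2 ^ γ * 5 ^ σ * 8 ^ (p - σ) * (1 + u) ^ (-σ)) := by
        rw [show -(γ + p - σ) = -γ + -(p - σ) by ring, rpow_add hw]
        ring
      _ ≤ _ := by
        gcongr
        exact le_add_of_nonneg_left (by positivity)

def DecaysAtRate (f : E → ℝ) (γ : ℝ) : Prop :=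
  ∃ K, ∀ x, f x ≤ K * (1 + ‖x‖) ^ (-γ)

variable [NormedSpace ℝ E] [FiniteDimensional ℝ E] [MeasurableSpace E] [BorelSpace E]
  {μ : Measure E} [μ.IsAddHaarMeasure]

lemma DecaysAtRate.exists_integral_compl_ball_le {g : E → ℝ} {γ σ p : ℝ}
    (hg : DecaysAtRate g γ) (hg0 : ∀ y, 0 ≤ g y) (hγ : 0 ≤ γ) (hγσ : γ ≤ σ) (hσp : σ ≤ p)
    (hσ : (finrank ℝ E : ℝ) < σ) :
    ∃ M, ∀ x : E, 1 ≤ ‖x‖ →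
      ∫ y in (ball x (‖x‖ / 4))ᶜ, g y * ‖y - x‖ ^ (-p) ∂μ ≤ M * (1 + ‖x‖) ^ (-(γ + p - σ)) := by
  obtain ⟨K, hK⟩ := hg
  have hK0 : 0 ≤ K := by simpa using (hg0 0).trans (hK 0)
  set I := ∫ y, (1 + ‖y‖) ^ (-σ) ∂μ
  have hI : Integrable (fun y : E ↦ (1 + ‖y‖) ^ (-σ)) μ := integrable_one_add_norm hσ
  refine ⟨K * (4 ^ p + 2 ^ γ * 5 ^ σ * 8 ^ (p - σ)) * I, fun x hx ↦ ?_⟩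
  set a : ℝ := 4 ^ p
  set b : ℝ := 2 ^ γ * 5 ^ σ * 8 ^ (p - σ)
  set G := fun y : E ↦ K * (1 + ‖x‖) ^ (-(γ + p - σ)) *
    (a * (1 + ‖y‖) ^ (-σ) + b * (1 + ‖y - x‖) ^ (-σ))
  have hG : Integrable G μ :=
    ((hI.const_mul a).add ((hI.comp_sub_right x).const_mul b)).const_mul _
  have hG0 : ∀ y, 0 ≤ G y := fun y ↦ by positivity
  calc ∫ y in (ball x (‖x‖ / 4))ᶜ, g y * ‖y - x‖ ^ (-p) ∂μ
      ≤ ∫ y in (ball x (‖x‖ / 4))ᶜ, G y ∂μ := by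
        refine integral_mono_of_nonneg (.of_forall fun y ↦ by positivity [hg0 y]) hG.integrableOn ?_
        filter_upwards [ae_restrict_mem measurableSet_ball.compl] with y hy
        rw [Set.mem_compl_iff, mem_ball, dist_eq_norm, not_lt] at hy
        calc g y * ‖y - x‖ ^ (-p) ≤ K * (1 + ‖y‖) ^ (-γ) * ‖y - x‖ ^ (-p) := by gcongr; exact hK y
          _ ≤ G y := by
            simp only [G, mul_assoc]
            exact mul_le_mul_of_nonneg_left
              (one_add_norm_rpow_mul_norm_sub_rpow_le_s4 hγ hγσ hσp hx hy) hK0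
    _ ≤ ∫ y, G y ∂μ := setIntegral_le_integral hG (.of_forall hG0)
    _ = K * (a + b) * I * (1 + ‖x‖) ^ (-(γ + p - σ)) := by
        simp only [G, integral_const_mul,
          integral_add (hI.const_mul a) ((hI.comp_sub_right x).const_mul b),
          integral_sub_right_eq_self (fun y ↦ (1 + ‖y‖) ^ (-σ)) x]
        ring

lemma DecaysAtRate.of_le_integral {f g : E → ℝ} {A c ρ γ γ' p : ℝ} (hg : DecaysAtRate g γ)
    (hg0 : ∀ y, 0 ≤ g y) (hf1 : ∀ x, f x ≤ 1) (hA : 0 ≤ A) (hc : 0 ≤ c)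
    (hrec : ∀ x, ρ ≤ ‖x‖ → f x ≤ A * (1 + ‖x‖) ^ (-p) +
      c * ∫ y in (ball x (‖x‖ / 4))ᶜ, g y * ‖y - x‖ ^ (-p) ∂μ)
    (hγ : 0 ≤ γ) (hγγ' : γ ≤ γ') (hγ'p : γ' ≤ p) (hγ' : γ' < γ + (p - finrank ℝ E)) :
    DecaysAtRate f γ' := by
  obtain ⟨M, hM⟩ := hg.exists_integral_compl_ball_le (μ := μ) (σ := γ + p - γ') hg0 hγ
    (by linarith) (by linarith) (by linarith)
  simp only [sub_sub_cancel] at hM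
  refine ⟨max ((1 + max ρ 1) ^ γ') (A + c * M), fun x ↦ ?_⟩
  have hw : 0 < 1 + ‖x‖ := by positivity
  rcases le_or_gt (max ρ 1) ‖x‖ with hx | hx
  · calc f x ≤ A * (1 + ‖x‖) ^ (-p) + c * ∫ y in (ball x (‖x‖ / 4))ᶜ, g y * ‖y - x‖ ^ (-p) ∂μ :=
          hrec x (le_of_max_le_left hx)
      _ ≤ A * (1 + ‖x‖) ^ (-γ') + c * (M * (1 + ‖x‖) ^ (-γ')) := by
          gcongr
          · linarith [norm_nonneg x]
          · exact hM x (le_of_max_le_right hx)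
      _ = (A + c * M) * (1 + ‖x‖) ^ (-γ') := by ring
      _ ≤ _ := by gcongr; exact le_max_right _ _
  · calc f x ≤ 1 := hf1 x
      _ = (1 + ‖x‖) ^ γ' * (1 + ‖x‖) ^ (-γ') := by rw [← rpow_add hw, add_neg_cancel, rpow_zero]
      _ ≤ (1 + max ρ 1) ^ γ' * (1 + ‖x‖) ^ (-γ') := by gcongr; linarith
      _ ≤ _ := by gcongr; exact le_max_left _ _

theorem decaysAtRate_of_le_integral_at_half {h : ℝ → E → ℝ} {A : ℝ → ℝ} {c ρ p : ℝ}
    (hp : (finrank ℝ E : ℝ) < p) (hA : ∀ t, 0 < t → 0 ≤ A t) (hc : 0 ≤ c)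
    (h01 : ∀ t, 0 < t → ∀ x, h t x ∈ Set.Icc 0 1)
    (hrec : ∀ t, 0 < t → ∀ x, ρ ≤ ‖x‖ → h t x ≤ A t * (1 + ‖x‖) ^ (-p) +
      c * ∫ y in (ball x (‖x‖ / 4))ᶜ, h (t / 2) y * ‖y - x‖ ^ (-p) ∂μ)
    {t : ℝ} (ht : 0 < t) : DecaysAtRate (h t) p := by
  set δ := p - finrank ℝ E
  have hδ : 0 < δ := sub_pos.2 hp
  have hp0 : 0 ≤ p := (Nat.cast_nonneg _).trans hp.le
  have hiter : ∀ k : ℕ, ∀ t, 0 < t → DecaysAtRate (h t) (min (k * (δ / 2)) p) := by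
    intro k
    induction k with
    | zero => exact fun t ht ↦ ⟨1, fun x ↦ by simpa [hp0] using (h01 t ht x).2⟩
    | succ k ih =>
      intro t ht
      refine (ih (t / 2) (half_pos ht)).of_le_integral (fun y ↦ (h01 _ (half_pos ht) y).1)
        (fun x ↦ (h01 t ht x).2) (hA t ht) hc (hrec t ht) (by positivity)
        (min_le_min (by push_cast; linarith) le_rfl) (min_le_right _ _) ?_
      rw [← min_add_add_right]
      refine lt_min ((min_le_left _ _).trans_lt ?_) ((min_le_right _ _).trans_lt (by linarith))
      push_cast
      linarith
  obtain ⟨k, hk⟩ := exists_nat_ge (p / (δ / 2))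
  simpa [min_eq_right ((div_le_iff₀ (half_pos hδ)).1 hk)] using hiter k t ht

theorem stmt_4_general (d : ℕ) (α : ℝ) (hα : α ∈ Set.Ioo (0 : ℝ) 2)
    (R : ℝ) (c : ℝ) (hc : 0 < c)
    (C : ℝ → ℝ) (hC : ∀ t, 0 < t → 0 < C t)
    (h : ℝ → EuclideanSpace ℝ (Fin d) → ℝ)
    (h01 : ∀ t, 0 < t → ∀ x, h t x ∈ Set.Icc (0 : ℝ) 1)
    (hrec : ∀ t, 0 < t → ∀ x : EuclideanSpace ℝ (Fin d), 2 * R ≤ ‖x‖ →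
      h t x ≤ C t * (1 + ‖x‖) ^ (-(d : ℝ) - α) +
        c * ∫ y in (Metric.ball x (‖x‖ / 4))ᶜ,
              h (t / 2) y * ‖y - x‖ ^ (-(d : ℝ) - α) ∂volume) :
    ∀ t, 0 < t → ∃ C' : ℝ, ∀ x, h t x ≤ C' * (1 + ‖x‖) ^ (-(d : ℝ) - α) := by
  intro t ht
  simp only [← neg_add'] at hrec ⊢
  exact decaysAtRate_of_le_integral_at_half (μ := volume)
    (by rw [finrank_euclideanSpace_fin]; linarith [hα.1]) (fun t ht ↦ (hC t ht).le) hc.le h01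
    hrec ht

/-- Bootstrap argument for (iii) ⇒ (iv) in Theorem 1.3: a family `h(t,·)` of
`[0,1]`-valued measurable functions satisfying the recursive inequality
automatically decays like `(1+|x|)^{-d-α}`. -/
theorem stmt_4 (d : ℕ) (hd : 1 ≤ d) (α : ℝ) (hα : α ∈ Set.Ioo (0 : ℝ) 2)
    (R : ℝ) (hR : 1 ≤ R) (c : ℝ) (hc : 0 < c)
    (C : ℝ → ℝ) (hC : ∀ t, 0 < t → 0 < C t)
    (h : ℝ → EuclideanSpace ℝ (Fin d) → ℝ)
    (h01 : ∀ t, 0 < t → ∀ x, h t x ∈ Set.Icc (0 : ℝ) 1)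
    (hmeas : ∀ t, 0 < t → Measurable (h t))
    (hrec : ∀ t, 0 < t → ∀ x : EuclideanSpace ℝ (Fin d), 2 * R ≤ ‖x‖ →
      h t x ≤ C t * (1 + ‖x‖) ^ (-(d : ℝ) - α) +
        c * ∫ y in (Metric.ball x (‖x‖ / 4))ᶜ,
              h (t / 2) y * ‖y - x‖ ^ (-(d : ℝ) - α) ∂volume) :
    ∀ t, 0 < t → ∃ C' : ℝ, ∀ x, h t x ≤ C' * (1 + ‖x‖) ^ (-(d : ℝ) - α) :=
  stmt_4_general d α hα R c hc C hC h h01 hrec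
end

section
/- Let d ≥ 1 be an integer. Let φ ∈ L¹(ℝ^d) ∩ L^∞(ℝ^d) be nonnegative, and let k : ℝ^d × ℝ^d → ℝ be measurable with k(x,y) = k(y,x) and 0 ≤ k(x,y) ≤ φ(y − x) for all x, y ∈ ℝ^d. If ∫_{ℝ^d} k(x,y) dy → 0 as |x| → ∞, then the integral operator K f(x) = ∫_{ℝ^d} k(x,y) f(y) dy is a well-defined bounded linear operator on L²(ℝ^d, Lebesgue measure) and K is a compact operator. -/
/-!
Choose a compact set `K` off which the column masses `∫ k(x, y) dx = ∫ k(y, x) dx` are small, and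
split `k = k · 1_K(y) + k · 1_{Kᶜ}(y)`. The columns of `k` are uniformly in `L²` because `φ` is
bounded, so the first kernel is square integrable on the product and defines a Hilbert–Schmidt
operator. Such operators are compact: the operator depends continuously and linearly on the
kernel, and indicators of rectangles, whose span is dense in `L²(μ × μ)`, give rank-one operators.
By Schur's test the second kernel, with row masses at most `‖φ‖₁` and small column masses,
defines an operator of small norm. Hence the operator of `k` is a norm limit of compact operators.
-/

open MeasureTheory Filter ENNReal Set Topology

section PositiveKernels

variable {α : Type*} [MeasurableSpace α] {μ : Measure α}

theorem ENNReal.rpow_half_sq (a : ℝ≥0∞) : (a ^ (1 / 2 : ℝ)) ^ 2 = a := by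
  rw [← ENNReal.rpow_two, ← ENNReal.rpow_mul]
  norm_num

theorem ENNReal.lintegral_mul_sq_le {a b : α → ℝ≥0∞} (ha : AEMeasurable a μ)
    (hb : AEMeasurable b μ) :
    (∫⁻ x, a x * b x ∂μ) ^ 2 ≤ (∫⁻ x, a x ^ 2 ∂μ) * ∫⁻ x, b x ^ 2 ∂μ := by
  have h := ENNReal.lintegral_mul_le_Lp_mul_Lq μ Real.HolderConjugate.two_two ha hb
  simp only [ENNReal.rpow_two, Pi.mul_apply] at h
  calc (∫⁻ x, a x * b x ∂μ) ^ 2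
      ≤ ((∫⁻ x, a x ^ 2 ∂μ) ^ (1 / 2 : ℝ) * (∫⁻ x, b x ^ 2 ∂μ) ^ (1 / 2 : ℝ)) ^ 2 := by
        gcongr
    _ = (∫⁻ x, a x ^ 2 ∂μ) * ∫⁻ x, b x ^ 2 ∂μ := by
      rw [mul_pow, ENNReal.rpow_half_sq, ENNReal.rpow_half_sq]

variable [SFinite μ]

theorem lintegral_sq_lintegral_mul_le_of_schur {κ : α → α → ℝ≥0∞} {h : α → ℝ≥0∞}
    (hκ : AEMeasurable (Function.uncurry κ) (μ.prod μ)) (hh : AEMeasurable h μ) {A B : ℝ≥0∞}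
    (hA : ∀ x, ∫⁻ y, κ x y ∂μ ≤ A) (hB : ∀ y, ∫⁻ x, κ x y ∂μ ≤ B) :
    ∫⁻ x, (∫⁻ y, κ x y * h y ∂μ) ^ 2 ∂μ ≤ A * B * ∫⁻ y, h y ^ 2 ∂μ := by
  have hκh : AEMeasurable (fun z : α × α => κ z.1 z.2 * h z.2 ^ 2) (μ.prod μ) :=
    hκ.mul (hh.pow_const 2).comp_snd
  -- Cauchy–Schwarz for `√κ · (√κ h)`
  have hrow : ∀ᵐ x ∂μ, (∫⁻ y, κ x y * h y ∂μ) ^ 2 ≤ A * ∫⁻ y, κ x y * h y ^ 2 ∂μ := by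
    filter_upwards [hκ.aestronglyMeasurable.prodMk_left] with x hx
    have hsq : AEMeasurable (fun y => κ x y ^ (1 / 2 : ℝ)) μ := hx.aemeasurable.pow_const _
    calc (∫⁻ y, κ x y * h y ∂μ) ^ 2
        = (∫⁻ y, κ x y ^ (1 / 2 : ℝ) * (κ x y ^ (1 / 2 : ℝ) * h y) ∂μ) ^ 2 := by
          simp_rw [← mul_assoc, ← sq, ENNReal.rpow_half_sq]
      _ ≤ (∫⁻ y, κ x y ∂μ) * ∫⁻ y, κ x y * h y ^ 2 ∂μ := by
          simpa only [Pi.mul_apply, mul_pow, ENNReal.rpow_half_sq] using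
            ENNReal.lintegral_mul_sq_le (b := fun y => κ x y ^ (1 / 2 : ℝ) * h y) hsq
              (hsq.mul hh)
      _ ≤ A * ∫⁻ y, κ x y * h y ^ 2 ∂μ := by gcongr; exact hA x
  calc ∫⁻ x, (∫⁻ y, κ x y * h y ∂μ) ^ 2 ∂μ
      ≤ ∫⁻ x, A * ∫⁻ y, κ x y * h y ^ 2 ∂μ ∂μ := lintegral_mono_ae hrow
    _ = A * ∫⁻ y, (∫⁻ x, κ x y ∂μ) * h y ^ 2 ∂μ := by
      rw [lintegral_const_mul'' _ hκh.lintegral_prod_right', lintegral_lintegral_swap hκh]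
      congr 1
      refine lintegral_congr_ae ?_
      filter_upwards [hκ.prod_swap.aestronglyMeasurable.prodMk_left] with y hy
      exact lintegral_mul_const'' _ hy.aemeasurable
    _ ≤ A * ∫⁻ y, B * h y ^ 2 ∂μ := by gcongr with y; exact hB y
    _ = A * B * ∫⁻ y, h y ^ 2 ∂μ := by
      rw [lintegral_const_mul'' _ (hh.pow_const 2), mul_assoc]

theorem lintegral_sq_lintegral_mul_le_lintegral_sq_mul {κ : α → α → ℝ≥0∞} {h : α → ℝ≥0∞}
    (hκ : AEMeasurable (Function.uncurry κ) (μ.prod μ)) (hh : AEMeasurable h μ) :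
    ∫⁻ x, (∫⁻ y, κ x y * h y ∂μ) ^ 2 ∂μ
      ≤ (∫⁻ z, Function.uncurry κ z ^ 2 ∂μ.prod μ) * ∫⁻ y, h y ^ 2 ∂μ := by
  calc ∫⁻ x, (∫⁻ y, κ x y * h y ∂μ) ^ 2 ∂μ
      ≤ ∫⁻ x, (∫⁻ y, κ x y ^ 2 ∂μ) * ∫⁻ y, h y ^ 2 ∂μ ∂μ := by
        refine lintegral_mono_ae ?_
        filter_upwards [hκ.aestronglyMeasurable.prodMk_left] with x hx
        exact ENNReal.lintegral_mul_sq_le hx.aemeasurable hh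
    _ = (∫⁻ z, Function.uncurry κ z ^ 2 ∂μ.prod μ) * ∫⁻ y, h y ^ 2 ∂μ := by
      rw [lintegral_prod _ (hκ.pow_const 2)]
      exact lintegral_mul_const'' _ (hκ.pow_const 2).lintegral_prod_right'

end PositiveKernels

section IntegralOperators

variable {α : Type*} [MeasurableSpace α] {μ : Measure α}

theorem eLpNorm_two_sq {ε : Type*} [ENorm ε] (f : α → ε) :
    eLpNorm f 2 μ ^ 2 = ∫⁻ x, ‖f x‖ₑ ^ 2 ∂μ := by
  simpa [ENNReal.rpow_two] using eLpNorm_nnreal_pow_eq_lintegral (μ := μ) (f := f) two_ne_zero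

def IsIntegralOperator (T : Lp ℝ 2 μ →L[ℝ] Lp ℝ 2 μ) (g : α → α → ℝ) : Prop :=
  ∀ f : Lp ℝ 2 μ, ∀ᵐ x ∂μ, T f x = ∫ y, g x y * f y ∂μ

def KernelL2Bound (μ : Measure α) (g : α → α → ℝ) (C : ℝ≥0∞) : Prop :=
  ∀ f : Lp ℝ 2 μ, ∫⁻ x, (∫⁻ y, ‖g x y‖ₑ * ‖f y‖ₑ ∂μ) ^ 2 ∂μ ≤ C ^ 2 * eLpNorm f 2 μ ^ 2

namespace KernelL2Bound

variable {g : α → α → ℝ} {C : ℝ≥0∞}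

theorem eLpNorm_integral_le (h : KernelL2Bound μ g C) (f : Lp ℝ 2 μ) :
    eLpNorm (fun x => ∫ y, g x y * f y ∂μ) 2 μ ≤ C * eLpNorm f 2 μ := by
  have hpt : ∀ x, ‖∫ y, g x y * f y ∂μ‖ₑ ≤ ‖∫⁻ y, ‖g x y‖ₑ * ‖f y‖ₑ ∂μ‖ₑ := fun x => by
    simpa only [enorm_mul, enorm_eq_self] using
      enorm_integral_le_lintegral_enorm (μ := μ) (fun y => g x y * f y)
  refine (eLpNorm_mono_enorm hpt).trans ?_
  rw [← ENNReal.pow_le_pow_left_iff two_ne_zero, eLpNorm_two_sq, mul_pow]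
  simpa only [enorm_eq_self] using h f

variable [SFinite μ]

theorem of_schur (hg : AEStronglyMeasurable (Function.uncurry g) (μ.prod μ)) {A B : ℝ≥0∞}
    (hA : ∀ x, ∫⁻ y, ‖g x y‖ₑ ∂μ ≤ A) (hB : ∀ y, ∫⁻ x, ‖g x y‖ₑ ∂μ ≤ B) (hC : A * B ≤ C ^ 2) :
    KernelL2Bound μ g C := fun f => by
  rw [eLpNorm_two_sq]
  exact (lintegral_sq_lintegral_mul_le_of_schur hg.enorm (Lp.aestronglyMeasurable f).enorm
    hA hB).trans (by gcongr)

theorem of_hilbertSchmidt (hg : AEStronglyMeasurable (Function.uncurry g) (μ.prod μ)) :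
    KernelL2Bound μ g (eLpNorm (Function.uncurry g) 2 (μ.prod μ)) := fun f => by
  rw [eLpNorm_two_sq, eLpNorm_two_sq]
  exact lintegral_sq_lintegral_mul_le_lintegral_sq_mul hg.enorm (Lp.aestronglyMeasurable f).enorm

theorem ae_integrable (hg : AEStronglyMeasurable (Function.uncurry g) (μ.prod μ))
    (h : KernelL2Bound μ g C) (hC : C ≠ ∞) (f : Lp ℝ 2 μ) :
    ∀ᵐ x ∂μ, Integrable (fun y => g x y * f y) μ := by
  have hgf : AEStronglyMeasurable (fun z : α × α => g z.1 z.2 * f z.2) (μ.prod μ) :=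
    hg.mul (Lp.aestronglyMeasurable f).comp_snd
  have hfin : ∫⁻ x, (∫⁻ y, ‖g x y * f y‖ₑ ∂μ) ^ 2 ∂μ ≠ ∞ := by
    simp_rw [enorm_mul]
    exact ((h f).trans_lt (by finiteness)).ne
  filter_upwards [ae_lt_top' (hgf.enorm.lintegral_prod_right'.pow_const 2) hfin,
    hgf.prodMk_left] with x hx hxm
  exact ⟨hxm, (ENNReal.pow_lt_top_iff.1 hx).resolve_right two_ne_zero⟩

theorem memLp_integral (hg : AEStronglyMeasurable (Function.uncurry g) (μ.prod μ))
    (h : KernelL2Bound μ g C) (hC : C ≠ ∞) (f : Lp ℝ 2 μ) :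
    MemLp (fun x => ∫ y, g x y * f y ∂μ) 2 μ :=
  ⟨(hg.mul (Lp.aestronglyMeasurable f).comp_snd).integral_prod_right',
    (h.eLpNorm_integral_le f).trans_lt (mul_lt_top hC.lt_top (Lp.eLpNorm_lt_top f))⟩

end KernelL2Bound

theorem exists_isIntegralOperator [SFinite μ] {g : α → α → ℝ} {C : ℝ≥0∞}
    (hg : AEStronglyMeasurable (Function.uncurry g) (μ.prod μ)) (h : KernelL2Bound μ g C)
    (hC : C ≠ ∞) : ∃ T : Lp ℝ 2 μ →L[ℝ] Lp ℝ 2 μ, IsIntegralOperator T g ∧ ‖T‖ ≤ C.toReal := by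
  have hmem := h.memLp_integral hg hC
  have hint := h.ae_integrable hg hC
  let T : Lp ℝ 2 μ →ₗ[ℝ] Lp ℝ 2 μ :=
    { toFun := fun f => (hmem f).toLp
      map_add' := fun f₁ f₂ => by
        rw [← MemLp.toLp_add]
        refine MemLp.toLp_congr _ _ ?_
        filter_upwards [hint f₁, hint f₂] with x h₁ h₂
        rw [Pi.add_apply, ← integral_add h₁ h₂]
        refine integral_congr_ae ?_
        filter_upwards [Lp.coeFn_add f₁ f₂] with y hy
        rw [hy, Pi.add_apply, mul_add]
      map_smul' := fun c f => by
        rw [RingHom.id_apply, ← MemLp.toLp_const_smul]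
        refine MemLp.toLp_congr _ _ (Eventually.of_forall fun x => ?_)
        rw [Pi.smul_apply, smul_eq_mul, ← integral_const_mul]
        refine integral_congr_ae ?_
        filter_upwards [Lp.coeFn_smul c f] with y hy
        rw [hy, Pi.smul_apply, smul_eq_mul, mul_left_comm] }
  have hT : ∀ f, ‖T f‖ ≤ C.toReal * ‖f‖ := fun f => by
    change ‖(hmem f).toLp‖ ≤ _
    rw [Lp.norm_toLp, Lp.norm_def, ← ENNReal.toReal_mul]
    exact ENNReal.toReal_mono (mul_ne_top hC (Lp.eLpNorm_ne_top f)) (h.eLpNorm_integral_le f)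
  exact ⟨T.mkContinuous C.toReal hT, fun f => (hmem f).coeFn_toLp,
    LinearMap.mkContinuous_norm_le _ ENNReal.toReal_nonneg _⟩

namespace IsIntegralOperator

variable {T S : Lp ℝ 2 μ →L[ℝ] Lp ℝ 2 μ} {g g' : α → α → ℝ}

theorem ext (hT : IsIntegralOperator T g) (hS : IsIntegralOperator S g) : T = S := by
  ext f
  filter_upwards [hT f, hS f] with x h₁ h₂
  rw [h₁, h₂]

theorem congr [SFinite μ] (hT : IsIntegralOperator T g)
    (hgg' : Function.uncurry g =ᵐ[μ.prod μ] Function.uncurry g') : IsIntegralOperator T g' := by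
  intro f
  filter_upwards [hT f, Measure.ae_ae_of_ae_prod hgg'] with x hx hxy
  rw [hx]
  refine integral_congr_ae ?_
  filter_upwards [hxy] with y hy
  rw [show g x y = g' x y from hy]

theorem add (hT : IsIntegralOperator T g) (hS : IsIntegralOperator S g')
    (hg : ∀ f : Lp ℝ 2 μ, ∀ᵐ x ∂μ, Integrable (fun y => g x y * f y) μ)
    (hg' : ∀ f : Lp ℝ 2 μ, ∀ᵐ x ∂μ, Integrable (fun y => g' x y * f y) μ) :
    IsIntegralOperator (T + S) (g + g') := by
  intro f
  filter_upwards [hT f, hS f, hg f, hg' f, Lp.coeFn_add (T f) (S f)] with x hTx hSx h h' hx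
  rw [add_apply, hx, Pi.add_apply, hTx, hSx, ← integral_add h h']
  simp only [Pi.add_apply, add_mul]

theorem smul (hT : IsIntegralOperator T g) (c : ℝ) : IsIntegralOperator (c • T) (c • g) := by
  intro f
  filter_upwards [hT f, Lp.coeFn_smul c (T f)] with x hTx hx
  rw [smul_apply, hx, Pi.smul_apply, hTx, smul_eq_mul, ← integral_const_mul]
  simp only [Pi.smul_apply, smul_eq_mul, mul_assoc]

end IsIntegralOperator

end IntegralOperators

section Rectangles

variable {α β : Type*} [MeasurableSpace α] [MeasurableSpace β]

theorem ae_eq_zero_of_setIntegral_prod_eq_zero {E : Type*} [NormedAddCommGroup E]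
    [NormedSpace ℝ E] [CompleteSpace E] {ρ : Measure (α × β)} {F : α × β → E}
    (hF : Integrable F ρ)
    (h : ∀ ⦃s : Set α⦄, MeasurableSet s → ∀ ⦃t : Set β⦄, MeasurableSet t →
      ∫ z in s ×ˢ t, F z ∂ρ = 0) :
    F =ᵐ[ρ] 0 := by
  refine hF.ae_eq_of_withDensityᵥ_eq (integrable_zero _ _ _) ?_
  rw [withDensityᵥ_zero]
  refine VectorMeasure.ext_of_generateFrom _ ?_ generateFrom_prod.symm isPiSystem_prod ?_
  · rintro _ ⟨s, hs, t, ht, rfl⟩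
    rw [withDensityᵥ_apply hF (hs.prod ht), h hs ht, zero_apply]
  · rw [← univ_prod_univ, withDensityᵥ_apply hF (MeasurableSet.univ.prod .univ),
      h .univ .univ, zero_apply]

variable {μ : Measure α} {ν : Measure β} [SigmaFinite μ] [SigmaFinite ν]

theorem MeasureTheory.Lp.eq_zero_of_setIntegral_prod_eq_zero (G : Lp ℝ 2 (μ.prod ν))
    (h : ∀ ⦃s : Set α⦄, MeasurableSet s → μ s ≠ ∞ → ∀ ⦃t : Set β⦄, MeasurableSet t → ν t ≠ ∞ →
      ∫ z in s ×ˢ t, G z ∂μ.prod ν = 0) :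
    G = 0 := by
  let S : ℕ → Set (α × β) := fun n => spanningSets μ n ×ˢ spanningSets ν n
  have hS : ∀ n, MeasurableSet (S n) := fun n =>
    (measurableSet_spanningSets μ n).prod (measurableSet_spanningSets ν n)
  -- `G` need not be integrable, but its restriction to each `S n` is
  have hzero : ∀ n, ∀ᵐ z ∂μ.prod ν, z ∈ S n → G z = 0 := fun n => by
    have hfin : (μ.prod ν) (S n) ≠ ∞ := by
      rw [Measure.prod_prod]
      exact mul_ne_top (measure_spanningSets_lt_top μ n).ne (measure_spanningSets_lt_top ν n).ne
    have : IsFiniteMeasure ((μ.prod ν).restrict (S n)) := isFiniteMeasure_restrict.2 hfin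
    have hint : Integrable ((S n).indicator G) (μ.prod ν) :=
      IntegrableOn.integrable_indicator (((Lp.memLp G).restrict (S n)).integrable one_le_two)
        (hS n)
    filter_upwards [ae_eq_zero_of_setIntegral_prod_eq_zero hint fun s hs t ht => by
      rw [setIntegral_indicator (hS n), prod_inter_prod]
      exact h (hs.inter (measurableSet_spanningSets μ n))
        ((measure_mono inter_subset_right).trans_lt (measure_spanningSets_lt_top μ n)).ne
        (ht.inter (measurableSet_spanningSets ν n))
        ((measure_mono inter_subset_right).trans_lt (measure_spanningSets_lt_top ν n)).ne]
      with z hz hzS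
    simpa [indicator_of_mem hzS] using hz
  refine Lp.eq_zero_iff_ae_eq_zero.2 ?_
  filter_upwards [ae_all_iff.2 hzero] with z hz
  obtain ⟨n, hn₁, hn₂⟩ :=
    ((eventually_mem_spanningSets μ z.1).and (eventually_mem_spanningSets ν z.2)).exists
  exact hz n ⟨hn₁, hn₂⟩

theorem MeasureTheory.Lp.topologicalClosure_span_indicatorConstLp_prod :
    (Submodule.span ℝ {G : Lp ℝ 2 (μ.prod ν) | ∃ (s : Set α) (t : Set β)
      (hs : MeasurableSet s) (ht : MeasurableSet t) (_ : μ s ≠ ∞) (_ : ν t ≠ ∞)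
      (hst : (μ.prod ν) (s ×ˢ t) ≠ ∞),
      G = indicatorConstLp 2 (hs.prod ht) hst (1 : ℝ)}).topologicalClosure = ⊤ := by
  refine Submodule.topologicalClosure_eq_top_iff.2 ((Submodule.eq_bot_iff _).2 fun G hG => ?_)
  refine Lp.eq_zero_of_setIntegral_prod_eq_zero G fun s hs hμs t ht hνt => ?_
  have hst : (μ.prod ν) (s ×ˢ t) ≠ ∞ := by
    rw [Measure.prod_prod]
    exact mul_ne_top hμs hνt
  rw [← L2.inner_indicatorConstLp_one (hs.prod ht) hst]
  exact hG _ (Submodule.subset_span ⟨s, t, hs, ht, hμs, hνt, hst, rfl⟩)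

end Rectangles

section HilbertSchmidt

variable {α : Type*} [MeasurableSpace α] {μ : Measure α}

section

variable [SFinite μ]

theorem MeasureTheory.Lp.ae_integrable_kernel (G : Lp ℝ 2 (μ.prod μ)) (f : Lp ℝ 2 μ) :
    ∀ᵐ x ∂μ, Integrable (fun y => G (x, y) * f y) μ :=
  KernelL2Bound.ae_integrable (g := fun x y => G (x, y)) (Lp.aestronglyMeasurable G)
    (KernelL2Bound.of_hilbertSchmidt (Lp.aestronglyMeasurable G)) (Lp.eLpNorm_ne_top G) f

theorem exists_isIntegralOperator_of_L2 (G : Lp ℝ 2 (μ.prod μ)) :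
    ∃ T : Lp ℝ 2 μ →L[ℝ] Lp ℝ 2 μ, IsIntegralOperator T (fun x y => G (x, y)) ∧ ‖T‖ ≤ ‖G‖ :=
  exists_isIntegralOperator (g := fun x y => G (x, y)) (Lp.aestronglyMeasurable G)
    (KernelL2Bound.of_hilbertSchmidt (Lp.aestronglyMeasurable G)) (Lp.eLpNorm_ne_top G)

variable (μ) in
noncomputable def hilbertSchmidtOperator :
    Lp ℝ 2 (μ.prod μ) →L[ℝ] Lp ℝ 2 μ →L[ℝ] Lp ℝ 2 μ :=
  LinearMap.mkContinuous
    { toFun := fun G => (exists_isIntegralOperator_of_L2 G).choose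
      map_add' := fun G H => by
        refine (exists_isIntegralOperator_of_L2 (G + H)).choose_spec.1.ext ?_
        refine ((exists_isIntegralOperator_of_L2 G).choose_spec.1.add
          (exists_isIntegralOperator_of_L2 H).choose_spec.1 (Lp.ae_integrable_kernel G)
          (Lp.ae_integrable_kernel H)).congr ?_
        filter_upwards [Lp.coeFn_add G H] with z hz
        exact hz.symm
      map_smul' := fun c G => by
        refine (exists_isIntegralOperator_of_L2 (c • G)).choose_spec.1.ext ?_
        refine ((exists_isIntegralOperator_of_L2 G).choose_spec.1.smul c).congr ?_
        filter_upwards [Lp.coeFn_smul c G] with z hz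
        exact hz.symm }
    1 fun G => by simpa using (exists_isIntegralOperator_of_L2 G).choose_spec.2

theorem isIntegralOperator_hilbertSchmidtOperator (G : Lp ℝ 2 (μ.prod μ)) :
    IsIntegralOperator (hilbertSchmidtOperator μ G) (fun x y => G (x, y)) :=
  (exists_isIntegralOperator_of_L2 G).choose_spec.1

theorem hilbertSchmidtOperator_indicatorConstLp_prod {s t : Set α}
    (hs : MeasurableSet s) (ht : MeasurableSet t) (hμs : μ s ≠ ∞) (hμt : μ t ≠ ∞)
    (hst : (μ.prod μ) (s ×ˢ t) ≠ ∞) :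
    hilbertSchmidtOperator μ (indicatorConstLp 2 (hs.prod ht) hst (1 : ℝ)) =
      (ContinuousLinearMap.toSpanSingleton ℝ (indicatorConstLp 2 hs hμs (1 : ℝ))).comp
        (innerSL ℝ (indicatorConstLp 2 ht hμt (1 : ℝ))) := by
  refine (isIntegralOperator_hilbertSchmidtOperator _).ext ?_
  suffices IsIntegralOperator ((ContinuousLinearMap.toSpanSingleton ℝ
      (indicatorConstLp 2 hs hμs (1 : ℝ))).comp (innerSL ℝ (indicatorConstLp 2 ht hμt (1 : ℝ))))
      (fun x y => (s ×ˢ t).indicator 1 (x, y)) by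
    refine this.congr ?_
    filter_upwards [indicatorConstLp_coeFn (hs := hs.prod ht) (hμs := hst) (c := (1 : ℝ))
      (p := 2)] with z hz
    exact hz.symm
  intro f
  filter_upwards [Lp.coeFn_smul (inner ℝ (indicatorConstLp 2 ht hμt (1 : ℝ)) f)
    (indicatorConstLp 2 hs hμs (1 : ℝ)), indicatorConstLp_coeFn (hs := hs) (hμs := hμs)
      (c := (1 : ℝ)) (p := 2)] with x hx hs1
  simp only [ContinuousLinearMap.comp_apply, innerSL_apply_apply,
    ContinuousLinearMap.toSpanSingleton_apply]
  rw [hx, Pi.smul_apply, hs1, L2.inner_indicatorConstLp_one ht hμt, smul_eq_mul,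
    ← integral_indicator ht]
  by_cases hxs : x ∈ s
  · rw [indicator_of_mem hxs, mul_one]
    congr 1 with y
    by_cases hyt : y ∈ t <;> simp [hxs, hyt]
  · simp [hxs]

end

theorem isCompactOperator_hilbertSchmidtOperator [SigmaFinite μ] (G : Lp ℝ 2 (μ.prod μ)) :
    IsCompactOperator (hilbertSchmidtOperator μ G) := by
  let S : Submodule ℝ (Lp ℝ 2 (μ.prod μ)) :=
    (compactOperator (RingHom.id ℝ) (Lp ℝ 2 μ) (Lp ℝ 2 μ)).comap
      (hilbertSchmidtOperator μ).toLinearMap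
  have hS : IsClosed (S : Set (Lp ℝ 2 (μ.prod μ))) :=
    isClosed_setOfPred_isCompactOperator.preimage (hilbertSchmidtOperator μ).continuous
  have hG := (Lp.topologicalClosure_span_indicatorConstLp_prod (μ := μ) (ν := μ)).ge
    (Submodule.mem_top (x := G))
  refine Submodule.topologicalClosure_minimal _ (Submodule.span_le.2 ?_) hS hG
  rintro _ ⟨s, t, hs, ht, hμs, hμt, hst, rfl⟩
  change IsCompactOperator
    (hilbertSchmidtOperator μ (indicatorConstLp 2 (hs.prod ht) hst (1 : ℝ)))
  rw [hilbertSchmidtOperator_indicatorConstLp_prod hs ht hμs hμt]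
  exact (isCompactOperator_of_locallyCompactSpace_dom
    (innerSL ℝ (indicatorConstLp 2 ht hμt (1 : ℝ)))).clm_comp
    (ContinuousLinearMap.toSpanSingleton ℝ (indicatorConstLp 2 hs hμs (1 : ℝ)))

end HilbertSchmidt

section CompactKernels

variable {α : Type*} [MeasurableSpace α] {μ : Measure α} {g : α → α → ℝ}

theorem MeasureTheory.AEStronglyMeasurable.indicator_right [SFinite μ]
    (hg : AEStronglyMeasurable (Function.uncurry g) (μ.prod μ)) {s : Set α}
    (hs : MeasurableSet s) :
    AEStronglyMeasurable (Function.uncurry fun x y => s.indicator (g x) y) (μ.prod μ) := by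
  convert hg.indicator (MeasurableSet.univ.prod hs) using 1
  ext ⟨x, y⟩
  by_cases hy : y ∈ s <;> simp [hy]

theorem memLp_indicator_right [SFinite μ]
    (hg : AEStronglyMeasurable (Function.uncurry g) (μ.prod μ)) {Q : ℝ≥0∞} (hQ : Q ≠ ∞)
    (hcol : ∀ y, ∫⁻ x, ‖g x y‖ₑ ^ 2 ∂μ ≤ Q) {s : Set α} (hs : MeasurableSet s)
    (hμs : μ s ≠ ∞) :
    MemLp (Function.uncurry fun x y => s.indicator (g x) y) 2 (μ.prod μ) := by
  refine ⟨hg.indicator_right hs, (ENNReal.pow_lt_top_iff.1 ?_).resolve_right two_ne_zero⟩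
  rw [eLpNorm_two_sq, lintegral_prod_symm _ ((hg.indicator_right hs).enorm.pow_const 2)]
  calc ∫⁻ y, ∫⁻ x, ‖s.indicator (g x) y‖ₑ ^ 2 ∂μ ∂μ
      ≤ ∫⁻ y, s.indicator (fun _ => Q) y ∂μ := lintegral_mono fun y => by
        by_cases hy : y ∈ s <;> simp [hy, hcol y]
    _ = Q * μ s := lintegral_indicator_const hs Q
    _ < ∞ := mul_lt_top hQ.lt_top hμs.lt_top

variable [TopologicalSpace α] [T2Space α] [OpensMeasurableSpace α] [SigmaFinite μ]
  [IsFiniteMeasureOnCompacts μ]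

theorem IsIntegralOperator.isCompactOperator {T : Lp ℝ 2 μ →L[ℝ] Lp ℝ 2 μ}
    (hT : IsIntegralOperator T g) (hg : AEStronglyMeasurable (Function.uncurry g) (μ.prod μ))
    {A Q : ℝ≥0∞} (hA : A ≠ ∞) (hQ : Q ≠ ∞) (hrow : ∀ x, ∫⁻ y, ‖g x y‖ₑ ∂μ ≤ A)
    (hcol : ∀ y, ∫⁻ x, ‖g x y‖ₑ ^ 2 ∂μ ≤ Q)
    (hlim : Tendsto (fun y => ∫⁻ x, ‖g x y‖ₑ ∂μ) (cocompact α) (𝓝 0)) :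
    IsCompactOperator T := by
  refine isClosed_setOfPred_isCompactOperator.closure_subset
    (Metric.mem_closure_iff.2 fun δ hδ => ?_)
  -- Off a compact set `K` the columns have mass `< C ^ 2 / A`, so by Schur's test the kernel
  -- restricted to `y ∉ K` has norm `≤ C`; restricted to `y ∈ K` it is Hilbert–Schmidt.
  set C := ENNReal.ofReal (δ / 2)
  have hε : 0 < C ^ 2 / A :=
    ENNReal.div_pos_iff.2 ⟨pow_ne_zero 2 (ofReal_pos.2 (half_pos hδ)).ne', hA⟩
  obtain ⟨K, hK, hKc⟩ := mem_cocompact.1 (hlim.eventually (gt_mem_nhds hε))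
  have hKm : MeasurableSet K := hK.measurableSet
  have hin := memLp_indicator_right hg hQ hcol hKm hK.measure_lt_top.ne
  have hout : KernelL2Bound μ (fun x y => Kᶜ.indicator (g x) y) C := by
    refine KernelL2Bound.of_schur (hg.indicator_right hKm.compl) (fun x => ?_) (fun y => ?_)
      (ENNReal.mul_div_le (a := A) (b := C ^ 2))
    · exact (lintegral_mono fun y => by by_cases hy : y ∈ K <;> simp [hy]).trans (hrow x)
    · by_cases hy : y ∈ K
      · simp [hy]
      · simpa [hy] using (hKc hy).le
  obtain ⟨D, hD, hDC⟩ := exists_isIntegralOperator (hg.indicator_right hKm.compl) hout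
    ofReal_ne_top
  have hTG : T = hilbertSchmidtOperator μ hin.toLp + D := by
    refine hT.ext ?_
    convert ((isIntegralOperator_hilbertSchmidtOperator hin.toLp).congr hin.coeFn_toLp).add hD
      ((KernelL2Bound.of_hilbertSchmidt (hg.indicator_right hKm)).ae_integrable
        (hg.indicator_right hKm) hin.eLpNorm_ne_top)
      (hout.ae_integrable (hg.indicator_right hKm.compl) ofReal_ne_top) using 1
    ext x y
    simp [indicator_self_add_compl_apply]
  refine ⟨hilbertSchmidtOperator μ hin.toLp, isCompactOperator_hilbertSchmidtOperator _, ?_⟩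
  rw [hTG, dist_eq_norm, add_sub_cancel_left]
  calc ‖D‖ ≤ C.toReal := hDC
    _ = δ / 2 := ENNReal.toReal_ofReal (by positivity)
    _ < δ := half_lt_self hδ

end CompactKernels

section TranslationDominated

variable {G : Type*} [AddGroup G] [MeasurableSpace G] [MeasurableAdd G] {μ : Measure G}
  [μ.IsAddRightInvariant] {φ : G → ℝ} {k : G → G → ℝ}

theorem lintegral_enorm_le_of_norm_le_sub (hk : ∀ x y, ‖k x y‖ ≤ φ (y - x)) (x : G) :
    ∫⁻ y, ‖k x y‖ₑ ∂μ ≤ ∫⁻ z, ENNReal.ofReal (φ z) ∂μ :=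
  calc ∫⁻ y, ‖k x y‖ₑ ∂μ ≤ ∫⁻ y, ENNReal.ofReal (φ (y - x)) ∂μ := lintegral_mono fun y => by
        rw [← ofReal_norm]
        exact ENNReal.ofReal_le_ofReal (hk x y)
    _ = ∫⁻ z, ENNReal.ofReal (φ z) ∂μ :=
      lintegral_sub_right_eq_self (fun z => ENNReal.ofReal (φ z)) x

theorem integrable_of_norm_le_sub (hφ : Integrable φ μ) (hk_meas : Measurable (Function.uncurry k))
    (hk : ∀ x y, ‖k x y‖ ≤ φ (y - x)) (x : G) : Integrable (k x) μ :=
  (hφ.comp_sub_right x).mono' (hk_meas.comp measurable_prodMk_left).aestronglyMeasurable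
    (Eventually.of_forall (hk x))

theorem lintegral_enorm_sq_le_of_norm_le_sub (hk : ∀ x y, ‖k x y‖ ≤ φ (y - x)) {M : ℝ}
    (hM : ∀ z, φ z ≤ M) (x : G) :
    ∫⁻ y, ‖k x y‖ₑ ^ 2 ∂μ ≤ ENNReal.ofReal M * ∫⁻ z, ENNReal.ofReal (φ z) ∂μ := by
  calc ∫⁻ y, ‖k x y‖ₑ ^ 2 ∂μ ≤ ∫⁻ y, ENNReal.ofReal M * ENNReal.ofReal (φ (y - x)) ∂μ :=
        lintegral_mono fun y => by
          rw [sq, ← ofReal_norm]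
          exact mul_le_mul' (ENNReal.ofReal_le_ofReal ((hk x y).trans (hM _)))
            (ENNReal.ofReal_le_ofReal (hk x y))
    _ = ENNReal.ofReal M * ∫⁻ z, ENNReal.ofReal (φ z) ∂μ := by
      rw [lintegral_const_mul' _ _ ofReal_ne_top,
        lintegral_sub_right_eq_self (fun z => ENNReal.ofReal (φ z)) x]

end TranslationDominated

theorem stmt_5_general (d : ℕ)
    (φ : EuclideanSpace ℝ (Fin d) → ℝ)
    (hφ_int : Integrable φ (volume : Measure (EuclideanSpace ℝ (Fin d))))
    (hφ_bdd : ∃ M : ℝ, ∀ x, φ x ≤ M)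
    (k : EuclideanSpace ℝ (Fin d) → EuclideanSpace ℝ (Fin d) → ℝ)
    (hk_meas : Measurable (Function.uncurry k))
    (hk_symm : ∀ x y, k x y = k y x)
    (hk_nonneg : ∀ x y, 0 ≤ k x y)
    (hk_dom : ∀ x y, k x y ≤ φ (y - x))
    (hk_lim : Tendsto (fun x => ∫ y, k x y ∂volume)
      (cocompact (EuclideanSpace ℝ (Fin d))) (nhds 0)) :
    ∃ K : Lp ℝ 2 (volume : Measure (EuclideanSpace ℝ (Fin d))) →L[ℝ]
        Lp ℝ 2 (volume : Measure (EuclideanSpace ℝ (Fin d))),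
      (∀ f : Lp ℝ 2 (volume : Measure (EuclideanSpace ℝ (Fin d))),
        ∀ᵐ x ∂(volume : Measure (EuclideanSpace ℝ (Fin d))),
          K f x = ∫ y, k x y * f y ∂volume) ∧
      IsCompactOperator K := by
  obtain ⟨M, hM⟩ := hφ_bdd
  have hk : ∀ x y, ‖k x y‖ ≤ φ (y - x) := fun x y =>
    (Real.norm_of_nonneg (hk_nonneg x y)).trans_le (hk_dom x y)
  have hΦ := hφ_int.lintegral_lt_top.ne
  have hrow := lintegral_enorm_le_of_norm_le_sub (μ := volume) hk
  have hcol : ∀ y, ∫⁻ x, ‖k x y‖ₑ ≤ ∫⁻ z, ENNReal.ofReal (φ z) := fun y => by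
    simpa only [hk_symm _ y] using hrow y
  have hcol_sq : ∀ y, ∫⁻ x, ‖k x y‖ₑ ^ 2 ≤ ENNReal.ofReal M * ∫⁻ z, ENNReal.ofReal (φ z) :=
    fun y => by simpa only [hk_symm _ y] using lintegral_enorm_sq_le_of_norm_le_sub hk hM y
  have hmass : ∀ y, ∫⁻ x, ‖k x y‖ₑ = ENNReal.ofReal (∫ x, k y x) := fun y => by
    simp only [hk_symm _ y]
    rw [lintegral_enorm_of_nonneg (hk_nonneg y), ofReal_integral_eq_lintegral_ofReal
      (integrable_of_norm_le_sub hφ_int hk_meas hk y) (Eventually.of_forall (hk_nonneg y))]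
  have hlim : Tendsto (fun y => ∫⁻ x, ‖k x y‖ₑ) (cocompact _) (𝓝 0) := by
    simpa only [hmass, ENNReal.ofReal_zero] using ENNReal.tendsto_ofReal hk_lim
  obtain ⟨K, hK, -⟩ := exists_isIntegralOperator hk_meas.aestronglyMeasurable
    (KernelL2Bound.of_schur hk_meas.aestronglyMeasurable hrow hcol (sq _).ge) hΦ
  exact ⟨K, hK, hK.isCompactOperator hk_meas.aestronglyMeasurable hΦ
    (mul_ne_top ofReal_ne_top hΦ) hrow hcol_sq hlim⟩

/-- 'If' direction of Lemma 4.1 (abstract form): a symmetric kernel `k` dominated by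
`φ(y - x)` with `φ ∈ L¹ ∩ L^∞`, whose marginals `∫ k(x,y) dy` vanish at infinity,
induces a well-defined bounded compact integral operator on `L²(ℝ^d)`. -/
theorem stmt_5 (d : ℕ) (hd : 1 ≤ d)
    (φ : EuclideanSpace ℝ (Fin d) → ℝ)
    (hφ_meas : Measurable φ) (hφ_nonneg : ∀ x, 0 ≤ φ x)
    (hφ_int : Integrable φ (volume : Measure (EuclideanSpace ℝ (Fin d))))
    (hφ_bdd : ∃ M : ℝ, ∀ x, φ x ≤ M)
    (k : EuclideanSpace ℝ (Fin d) → EuclideanSpace ℝ (Fin d) → ℝ)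
    (hk_meas : Measurable (Function.uncurry k))
    (hk_symm : ∀ x y, k x y = k y x)
    (hk_nonneg : ∀ x y, 0 ≤ k x y)
    (hk_dom : ∀ x y, k x y ≤ φ (y - x))
    (hk_lim : Tendsto (fun x => ∫ y, k x y ∂volume)
      (cocompact (EuclideanSpace ℝ (Fin d))) (nhds 0)) :
    ∃ K : Lp ℝ 2 (volume : Measure (EuclideanSpace ℝ (Fin d))) →L[ℝ]
        Lp ℝ 2 (volume : Measure (EuclideanSpace ℝ (Fin d))),
      (∀ f : Lp ℝ 2 (volume : Measure (EuclideanSpace ℝ (Fin d))),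
        ∀ᵐ x ∂(volume : Measure (EuclideanSpace ℝ (Fin d))),
          K f x = ∫ y, k x y * f y ∂volume) ∧
      IsCompactOperator K :=
  stmt_5_general d φ hφ_int hφ_bdd k hk_meas hk_symm hk_nonneg hk_dom hk_lim
end

section
/- Let d ≥ 1 be an integer. Let φ ∈ L¹(ℝ^d) ∩ L^∞(ℝ^d) be nonnegative, and let k' : ℝ^d × ℝ^d → ℝ be measurable with k'(x,y) = k'(y,x) and 0 ≤ k'(x,y) ≤ φ(y − x) for all x, y ∈ ℝ^d. Define k(x,y) = ∫_{ℝ^d} k'(x,z) k'(z,y) dz. If the integral operator K f(x) = ∫_{ℝ^d} k(x,y) f(y) dy is a compact operator on L²(ℝ^d, Lebesgue measure), then ∫_{ℝ^d} k(x,y) dy → 0 as |x| → ∞. -/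
/-!
If `∫ k(x, y) dy` does not tend to `0`, there are points `xₙ → ∞` with `∫ k(xₙ, ·) ≥ ε`.
Since `k(x, y) ≤ (φ ⋆ φ)(y - x)` with `φ ⋆ φ` integrable, at least `ε / 2` of this mass lies in
the ball `Bₙ = B(xₙ, R)` for one fixed `R`, and the `xₙ` can be chosen so that the `Bₙ` are
disjoint. Writing `k = k' ∘ k'` and using the symmetry of `k'`,
`∫_{Bₙ} ∫_{Bₙ} k = ‖K' 1_{Bₙ}‖²`, where `K'` is the operator with kernel `k'`; by Cauchy–Schwarz,
`(∫_{Bₙ} k(xₙ, ·))² ≤ ‖k'(xₙ, ·)‖₂² ‖K' 1_{Bₙ}‖²`. Hence `⟪eₙ, K eₙ⟫` is bounded below for the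
normalized indicators `eₙ` of the `Bₙ`. But the `eₙ` are orthonormal, so they tend weakly to `0`
and the compact operator `K` sends them to a sequence tending to `0` in norm.
-/

open MeasureTheory Filter Topology Function Metric Convolution

section Hilbert

variable {𝕜 E F : Type*} [RCLike 𝕜] [NormedAddCommGroup E] [InnerProductSpace 𝕜 E]
  [NormedAddCommGroup F] [InnerProductSpace 𝕜 F]

theorem IsCompactOperator.tendsto_zero_of_weakly_tendsto_zero [CompleteSpace E] [CompleteSpace F]
    {T : E →L[𝕜] F} (hT : IsCompactOperator T) {u : ℕ → E} {C : ℝ} (hu : ∀ n, ‖u n‖ ≤ C)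
    (hweak : ∀ y, Tendsto (fun n => inner 𝕜 y (u n)) atTop (𝓝 0)) :
    Tendsto (fun n => T (u n)) atTop (𝓝 0) := by
  -- A limit `a` of a subsequence satisfies `⟪y, a⟫ = lim ⟪T† y, u n⟫ = 0` for every `y`.
  refine tendsto_of_subseq_tendsto fun ns hns => ?_
  obtain ⟨a, -, σ, hσ, ha⟩ := (hT.isCompact_closure_image_closedBall C).tendsto_subseq
    (x := fun n => T (u (ns n))) fun n => subset_closure ⟨_, mem_closedBall_zero_iff.2 (hu _), rfl⟩
  have h_inner : ∀ y, inner 𝕜 y a = 0 := fun y => by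
    refine tendsto_nhds_unique (tendsto_const_nhds.inner ha) ?_
    simpa only [ContinuousLinearMap.adjoint_inner_left, Function.comp_def] using
      (hweak (T.adjoint y)).comp (hns.comp hσ.tendsto_atTop)
  refine ⟨σ, ?_⟩
  rw [inner_self_eq_zero.1 (h_inner a)] at ha
  exact ha

theorem Orthonormal.tendsto_inner_atTop_zero {e : ℕ → E} (he : Orthonormal 𝕜 e) (y : E) :
    Tendsto (fun n => inner 𝕜 y (e n)) atTop (𝓝 0) := by
  rw [tendsto_zero_iff_norm_tendsto_zero]
  simpa only [Real.sqrt_sq (norm_nonneg _), Real.sqrt_zero, norm_inner_symm] using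
    (he.inner_products_summable y).tendsto_atTop_zero.sqrt

theorem IsCompactOperator.tendsto_inner_apply_orthonormal [CompleteSpace E] {T : E →L[𝕜] E}
    (hT : IsCompactOperator T) {e : ℕ → E} (he : Orthonormal 𝕜 e) :
    Tendsto (fun n => inner 𝕜 (e n) (T (e n))) atTop (𝓝 0) := by
  have hTe : Tendsto (fun n => T (e n)) atTop (𝓝 0) :=
    hT.tendsto_zero_of_weakly_tendsto_zero (fun n => (he.1 n).le) he.tendsto_inner_atTop_zero
  refine squeeze_zero_norm (fun n => ?_) (tendsto_zero_iff_norm_tendsto_zero.1 hTe)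
  simpa [he.1 n] using norm_inner_le_norm (𝕜 := 𝕜) (e n) (T (e n))

end Hilbert

section L2

variable {α : Type*} [MeasurableSpace α] {μ : Measure α}

theorem sq_integral_mul_le_integral_sq_mul_integral_sq {f g : α → ℝ} (hf : MemLp f 2 μ)
    (hg : MemLp g 2 μ) : (∫ x, f x * g x ∂μ) ^ 2 ≤ (∫ x, f x ^ 2 ∂μ) * ∫ x, g x ^ 2 ∂μ := by
  have h_inner : ∀ {u v : α → ℝ} (hu : MemLp u 2 μ) (hv : MemLp v 2 μ),
      inner ℝ (hu.toLp u) (hv.toLp v) = ∫ x, u x * v x ∂μ := fun hu hv => by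
    rw [L2.inner_def]
    refine integral_congr_ae ((hu.coeFn_toLp.and hv.coeFn_toLp).mono fun x hx => ?_)
    simp [hx.1, hx.2, mul_comm]
  simpa only [sq, h_inner] using real_inner_mul_inner_self_le (hf.toLp f) (hg.toLp g)

theorem orthonormal_indicatorConstLp {ι : Type*} {s : ι → Set α} (hs : ∀ i, MeasurableSet (s i))
    (hμs : ∀ i, μ (s i) ≠ ⊤) (hμs₀ : ∀ i, μ (s i) ≠ 0) (hdisj : Pairwise (Disjoint on s)) :
    Orthonormal ℝ fun i => indicatorConstLp 2 (hs i) (hμs i) (√(μ.real (s i)))⁻¹ := by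
  classical
  rw [orthonormal_iff_ite]
  intro i j
  rw [L2.inner_indicatorConstLp_indicatorConstLp (𝕜 := ℝ) (hs i) (hs j) (hμs i) (hμs j)]
  split_ifs with hij
  · subst hij
    have hs_pos : 0 < μ.real (s i) := ENNReal.toReal_pos (hμs₀ i) (hμs i)
    rw [Set.inter_self, smul_eq_mul, real_inner_self_eq_norm_sq, Real.norm_eq_abs, sq_abs,
      inv_pow, Real.sq_sqrt hs_pos.le, mul_inv_cancel₀ hs_pos.ne']
  · simp [(hdisj hij).inter_eq]

theorem inner_indicatorConstLp_apply_integralOperator {K : Lp ℝ 2 μ →L[ℝ] Lp ℝ 2 μ}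
    {k : α → α → ℝ} (hK : ∀ f : Lp ℝ 2 μ, ∀ᵐ x ∂μ, K f x = ∫ y, k x y * f y ∂μ)
    {s : Set α} (hs : MeasurableSet s) (hμs : μ s ≠ ⊤) (c : ℝ) :
    inner ℝ (indicatorConstLp 2 hs hμs c) (K (indicatorConstLp 2 hs hμs c)) =
      c ^ 2 * ∫ x in s, ∫ y in s, k x y ∂μ ∂μ := by
  set f := indicatorConstLp 2 hs hμs c
  have hf : f =ᵐ[μ] s.indicator fun _ => c := indicatorConstLp_coeFn
  have hKf : ∀ x, ∫ y, k x y * f y ∂μ = c * ∫ y in s, k x y ∂μ := fun x => by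
    rw [← integral_const_mul, ← integral_indicator hs]
    refine integral_congr_ae (hf.mono fun y hy => ?_)
    by_cases hys : y ∈ s <;> simp [hy, hys, mul_comm]
  rw [L2.inner_indicatorConstLp_eq_setIntegral_inner, ← integral_const_mul, sq]
  refine integral_congr_ae (ae_restrict_of_ae ((hK f).mono fun x hx => ?_))
  simp [hx, hKf, mul_assoc, mul_comm]

end L2

theorem integral_integral_swap_of_nonneg {α β : Type*} [MeasurableSpace α] [MeasurableSpace β]
    {μ : Measure α} {ν : Measure β} [SFinite μ] [SFinite ν] {F : α → β → ℝ}
    (hF : AEStronglyMeasurable (uncurry F) (μ.prod ν)) (hF₀ : ∀ x y, 0 ≤ F x y)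
    (hF_slice : ∀ x, Integrable (F x) ν) (hF_int : Integrable (fun x => ∫ y, F x y ∂ν) μ) :
    ∫ x, ∫ y, F x y ∂ν ∂μ = ∫ y, ∫ x, F x y ∂μ ∂ν := by
  refine integral_integral_swap ((integrable_prod_iff hF).2 ⟨ae_of_all _ hF_slice, ?_⟩)
  simpa only [uncurry_apply_pair, Real.norm_of_nonneg (hF₀ _ _)] using hF_int

theorem tendsto_setIntegral_compl_ball {α E : Type*} [PseudoMetricSpace α] [MeasurableSpace α]
    [OpensMeasurableSpace α] [NormedAddCommGroup E] [NormedSpace ℝ E] {μ : Measure α}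
    {f : α → E} (hf : Integrable f μ) (x₀ : α) :
    Tendsto (fun R => ∫ x in (ball x₀ R)ᶜ, f x ∂μ) atTop (𝓝 0) := by
  have h_empty : ⋂ R : ℝ, (ball x₀ R)ᶜ = ∅ :=
    Set.eq_empty_of_forall_notMem fun x hx => by simpa using Set.mem_iInter.1 hx (dist x x₀ + 1)
  have := tendsto_setIntegral_of_antitone (μ := μ) (s := fun R : ℝ => (ball x₀ R)ᶜ)
    (fun R => measurableSet_ball.compl)
    (fun R R' h => Set.compl_subset_compl.2 (ball_subset_ball h)) ⟨0, hf.integrableOn⟩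
  rwa [h_empty, Measure.restrict_empty, integral_zero_measure] at this

theorem exists_forall_lt_norm_le_norm_of_not_tendsto_cocompact {E F : Type*}
    [NormedAddCommGroup E] [ProperSpace E] [NormedAddCommGroup F] {f : E → F}
    (hf : ¬Tendsto f (cocompact E) (𝓝 0)) : ∃ ε > 0, ∀ r : ℝ, ∃ x, r < ‖x‖ ∧ ε ≤ ‖f x‖ := by
  rw [Metric.tendsto_nhds] at hf
  push Not at hf
  obtain ⟨ε, hε, h_freq⟩ := hf
  refine ⟨ε, hε, fun r => ?_⟩
  obtain ⟨x, hx, hxr⟩ :=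
    (h_freq.and_eventually (tendsto_norm_cocompact_atTop.eventually_gt_atTop r)).exists
  exact ⟨x, hxr, by rwa [dist_zero_right] at hx⟩

theorem exists_seq_pairwise_disjoint_ball {E : Type*} [SeminormedAddCommGroup E] {p : E → Prop}
    (hp : ∀ r : ℝ, ∃ x, r < ‖x‖ ∧ p x) (R : ℝ) :
    ∃ x : ℕ → E, (∀ n, p (x n)) ∧ Pairwise (Disjoint on fun n => ball (x n) R) := by
  choose ξ hξ using hp
  let x : ℕ → E := fun n => Nat.rec (ξ 0) (fun _ y => ξ (‖y‖ + 2 * |R|)) n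
  have hx_succ : ∀ n, ‖x n‖ + 2 * |R| ≤ ‖x (n + 1)‖ := fun n => (hξ _).1.le
  have hx_gap : ∀ m n, m < n → ‖x m‖ + 2 * |R| ≤ ‖x n‖ := by
    intro m n hmn
    induction n, hmn using Nat.le_induction with
    | base => exact hx_succ m
    | succ n _ ih => linarith [hx_succ n, abs_nonneg R]
  refine ⟨x, fun n => ?_, (pairwise_disjoint_on _).2 fun m n hmn => ball_disjoint_ball ?_⟩
  · cases n <;> exact (hξ _).2
  · calc R + R ≤ 2 * |R| := by linarith [le_abs_self R]
      _ ≤ ‖x n‖ - ‖x m‖ := by linarith [hx_gap m n hmn]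
      _ ≤ dist (x m) (x n) := by rw [dist_comm, dist_eq_norm]; exact norm_sub_norm_le _ _

section KernelSq

variable {α : Type*} [MeasurableSpace α] {μ : Measure α} {κ : α → α → ℝ}

/-- The kernel of the square of the integral operator with kernel `κ`; this is the paper's `k`
for `κ = k'`. -/
noncomputable def kernelSq (μ : Measure α) (κ : α → α → ℝ) (x y : α) : ℝ :=
  ∫ z, κ x z * κ z y ∂μ

theorem kernelSq_nonneg (hκ₀ : ∀ x y, 0 ≤ κ x y) (x y : α) : 0 ≤ kernelSq μ κ x y :=
  integral_nonneg fun z => mul_nonneg (hκ₀ x z) (hκ₀ z y)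

theorem measurable_kernelSq [SFinite μ] (hκ : Measurable (uncurry κ)) :
    Measurable (uncurry (kernelSq μ κ)) := by
  have h : Measurable fun p : (α × α) × α => κ p.1.1 p.2 * κ p.2 p.1.2 :=
    (hκ.comp (measurable_fst.fst.prodMk measurable_snd)).mul
      (hκ.comp (measurable_snd.prodMk measurable_fst.snd))
  exact h.stronglyMeasurable.integral_prod_right'.measurable

end KernelSq

section DominatedKernel

variable {G : Type*} [NormedAddCommGroup G] [MeasurableSpace G] [BorelSpace G]
  {μ : Measure G} [μ.IsAddRightInvariant] {φ : G → ℝ} {κ : G → G → ℝ} {M : ℝ}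

theorem integrable_kernel (hφ : Integrable φ μ) (hκ : Measurable (uncurry κ))
    (hκ₀ : ∀ x y, 0 ≤ κ x y) (hκφ : ∀ x y, κ x y ≤ φ (y - x)) (x : G) : Integrable (κ x) μ :=
  (hφ.comp_sub_right x).mono' hκ.of_uncurry_left.aestronglyMeasurable <| ae_of_all _ fun z => by
    rw [Real.norm_of_nonneg (hκ₀ x z)]
    exact hκφ x z

theorem integral_kernel_le (hφ : Integrable φ μ) (hκ : Measurable (uncurry κ))
    (hκ₀ : ∀ x y, 0 ≤ κ x y) (hκφ : ∀ x y, κ x y ≤ φ (y - x)) (x : G) :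
    ∫ y, κ x y ∂μ ≤ ∫ y, φ y ∂μ :=
  calc ∫ y, κ x y ∂μ ≤ ∫ y, φ (y - x) ∂μ :=
        integral_mono (integrable_kernel hφ hκ hκ₀ hκφ x) (hφ.comp_sub_right x) (hκφ x)
    _ = ∫ y, φ y ∂μ := integral_sub_right_eq_self φ x

theorem setIntegral_kernel_le (hφ : Integrable φ μ) (hκ : Measurable (uncurry κ))
    (hκ₀ : ∀ x y, 0 ≤ κ x y) (hκφ : ∀ x y, κ x y ≤ φ (y - x)) (x : G) (s : Set G) :
    ∫ y in s, κ x y ∂μ ≤ ∫ y, φ y ∂μ :=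
  (setIntegral_le_integral (integrable_kernel hφ hκ hκ₀ hκφ x) (ae_of_all _ (hκ₀ x))).trans
    (integral_kernel_le hφ hκ hκ₀ hκφ x)

theorem integrable_kernel_mul_kernel (hφ : Integrable φ μ) (hφM : ∀ x, φ x ≤ M)
    (hκ : Measurable (uncurry κ)) (hκ₀ : ∀ x y, 0 ≤ κ x y) (hκφ : ∀ x y, κ x y ≤ φ (y - x))
    (x y : G) : Integrable (fun z => κ x z * κ z y) μ :=
  ((integrable_kernel hφ hκ hκ₀ hκφ x).mul_const M).mono'
    (hκ.of_uncurry_left.mul hκ.of_uncurry_right).aestronglyMeasurable <| ae_of_all _ fun z => by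
    rw [Real.norm_of_nonneg (mul_nonneg (hκ₀ x z) (hκ₀ z y))]
    exact mul_le_mul_of_nonneg_left ((hκφ z y).trans (hφM _)) (hκ₀ x z)

theorem memLp_two_kernel (hφ : Integrable φ μ) (hφM : ∀ x, φ x ≤ M)
    (hκ : Measurable (uncurry κ)) (hκ₀ : ∀ x y, 0 ≤ κ x y) (hκφ : ∀ x y, κ x y ≤ φ (y - x))
    (x : G) : MemLp (κ x) 2 μ := by
  refine (memLp_two_iff_integrable_sq hκ.of_uncurry_left.aestronglyMeasurable).2 <|
    ((integrable_kernel hφ hκ hκ₀ hκφ x).const_mul M).mono'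
      (hκ.of_uncurry_left.pow_const 2).aestronglyMeasurable <| ae_of_all _ fun z => ?_
  rw [Real.norm_of_nonneg (sq_nonneg _), sq]
  exact mul_le_mul_of_nonneg_right ((hκφ x z).trans (hφM _)) (hκ₀ x z)

theorem integral_sq_kernel_le (hφ : Integrable φ μ) (hφM : ∀ x, φ x ≤ M)
    (hκ : Measurable (uncurry κ)) (hκ₀ : ∀ x y, 0 ≤ κ x y) (hκφ : ∀ x y, κ x y ≤ φ (y - x))
    (x : G) : ∫ z, κ x z ^ 2 ∂μ ≤ M * ∫ y, φ y ∂μ := by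
  have hM : 0 ≤ M := (hκ₀ 0 0).trans ((hκφ 0 0).trans (hφM _))
  calc ∫ z, κ x z ^ 2 ∂μ ≤ ∫ z, M * κ x z ∂μ :=
        integral_mono (memLp_two_kernel hφ hφM hκ hκ₀ hκφ x).integrable_sq
          ((integrable_kernel hφ hκ hκ₀ hκφ x).const_mul M) fun z => by
            rw [sq]; exact mul_le_mul_of_nonneg_right ((hκφ x z).trans (hφM _)) (hκ₀ x z)
    _ ≤ M * ∫ y, φ y ∂μ := by
        rw [integral_const_mul]
        exact mul_le_mul_of_nonneg_left (integral_kernel_le hφ hκ hκ₀ hκφ x) hM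

theorem integrable_setIntegral_kernel [SFinite μ] (hφ : Integrable φ μ)
    (hκ : Measurable (uncurry κ)) (hκ₀ : ∀ x y, 0 ≤ κ x y) (hκφ : ∀ x y, κ x y ≤ φ (y - x))
    (hκs : ∀ x y, κ x y = κ y x) {s : Set G} (hμs : μ s ≠ ⊤) :
    Integrable (fun z => ∫ y in s, κ z y ∂μ) μ := by
  have h_prod : Integrable (uncurry κ) (μ.prod (μ.restrict s)) := by
    refine (integrable_prod_iff' hκ.aestronglyMeasurable).2 ⟨ae_of_all _ fun y => ?_, ?_⟩
    · simpa only [uncurry_apply_pair, hκs _ y] using integrable_kernel hφ hκ hκ₀ hκφ y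
    · refine Measure.integrableOn_of_bounded hμs ?_ (M := ∫ y, φ y ∂μ) (ae_of_all _ fun y => ?_)
      · exact (hκ.norm.stronglyMeasurable.integral_prod_left' (μ := μ)).aestronglyMeasurable
      · simp only [uncurry_apply_pair, Real.norm_of_nonneg (hκ₀ _ _), hκs _ y]
        rw [Real.norm_of_nonneg (integral_nonneg (hκ₀ y))]
        exact integral_kernel_le hφ hκ hκ₀ hκφ y
  exact h_prod.integral_prod_left

theorem memLp_two_setIntegral_kernel [SFinite μ] (hφ : Integrable φ μ)
    (hκ : Measurable (uncurry κ)) (hκ₀ : ∀ x y, 0 ≤ κ x y) (hκφ : ∀ x y, κ x y ≤ φ (y - x))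
    (hκs : ∀ x y, κ x y = κ y x) {s : Set G} (hμs : μ s ≠ ⊤) :
    MemLp (fun z => ∫ y in s, κ z y ∂μ) 2 μ := by
  have hq := integrable_setIntegral_kernel hφ hκ hκ₀ hκφ hκs hμs
  refine (memLp_two_iff_integrable_sq hq.aestronglyMeasurable).2 <|
    (hq.const_mul (∫ y, φ y ∂μ)).mono' (hq.aestronglyMeasurable.pow 2) <| ae_of_all _ fun z => ?_
  rw [Real.norm_of_nonneg (sq_nonneg _), sq]
  exact mul_le_mul_of_nonneg_right (setIntegral_kernel_le hφ hκ hκ₀ hκφ z s)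
    (integral_nonneg (hκ₀ z))

variable [SecondCountableTopology G] [SFinite μ]

theorem kernelSq_le_convolution (hφ : Integrable φ μ) (hφM : ∀ x, φ x ≤ M)
    (hκ : Measurable (uncurry κ)) (hκ₀ : ∀ x y, 0 ≤ κ x y) (hκφ : ∀ x y, κ x y ≤ φ (y - x))
    (x y : G) : kernelSq μ κ x y ≤ (φ ⋆[ContinuousLinearMap.mul ℝ ℝ, μ] φ) (y - x) := by
  have hφ₀ : ∀ w, 0 ≤ φ w := fun w => by simpa using (hκ₀ 0 w).trans (hκφ 0 w)
  have h_dom : Integrable (fun z => φ (z - x) * φ (y - z)) μ :=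
    ((hφ.comp_sub_right x).mul_const M).mono'
      ((hφ.comp_sub_right x).aestronglyMeasurable.mul
        (hφ.aestronglyMeasurable.comp_quasiMeasurePreserving
          (quasiMeasurePreserving_sub_left_of_right_invariant μ y))) <|
      ae_of_all _ fun z => by
        rw [Real.norm_of_nonneg (mul_nonneg (hφ₀ _) (hφ₀ _))]
        exact mul_le_mul_of_nonneg_left (hφM _) (hφ₀ _)
  calc kernelSq μ κ x y ≤ ∫ z, φ (z - x) * φ (y - z) ∂μ :=
        integral_mono (integrable_kernel_mul_kernel hφ hφM hκ hκ₀ hκφ x y) h_dom fun z =>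
          mul_le_mul (hκφ x z) (hκφ z y) (hκ₀ z y) (hφ₀ _)
    _ = (φ ⋆[ContinuousLinearMap.mul ℝ ℝ, μ] φ) (y - x) := by
        rw [convolution_mul, ← integral_sub_right_eq_self (fun t => φ t * φ (y - x - t)) x]
        simp only [sub_sub_sub_cancel_right]

theorem integrable_kernelSq (hφ : Integrable φ μ) (hφM : ∀ x, φ x ≤ M)
    (hκ : Measurable (uncurry κ)) (hκ₀ : ∀ x y, 0 ≤ κ x y) (hκφ : ∀ x y, κ x y ≤ φ (y - x))
    (x : G) : Integrable (kernelSq μ κ x) μ :=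
  ((hφ.integrable_convolution (ContinuousLinearMap.mul ℝ ℝ) hφ).comp_sub_right x).mono'
    (measurable_kernelSq hκ).of_uncurry_left.aestronglyMeasurable <| ae_of_all _ fun y => by
      rw [Real.norm_of_nonneg (kernelSq_nonneg hκ₀ x y)]
      exact kernelSq_le_convolution hφ hφM hκ hκ₀ hκφ x y

theorem exists_setIntegral_compl_ball_kernelSq_lt (hφ : Integrable φ μ) (hφM : ∀ x, φ x ≤ M)
    (hκ : Measurable (uncurry κ)) (hκ₀ : ∀ x y, 0 ≤ κ x y) (hκφ : ∀ x y, κ x y ≤ φ (y - x))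
    {ε : ℝ} (hε : 0 < ε) : ∃ R > 0, ∀ x, ∫ y in (ball x R)ᶜ, kernelSq μ κ x y ∂μ < ε := by
  set g := φ ⋆[ContinuousLinearMap.mul ℝ ℝ, μ] φ
  have hg : Integrable g μ := hφ.integrable_convolution _ hφ
  obtain ⟨R, hR, hR₀⟩ := (((tendsto_setIntegral_compl_ball hg 0).eventually
    (gt_mem_nhds hε)).and (eventually_gt_atTop 0)).exists
  refine ⟨R, hR₀, fun x => lt_of_le_of_lt ?_ hR⟩
  have h_preimage : (· - x) ⁻¹' (ball 0 R)ᶜ = (ball x R)ᶜ := by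
    ext y
    simp [dist_eq_norm]
  calc ∫ y in (ball x R)ᶜ, kernelSq μ κ x y ∂μ ≤ ∫ y in (ball x R)ᶜ, g (y - x) ∂μ :=
        setIntegral_mono (integrable_kernelSq hφ hφM hκ hκ₀ hκφ x).integrableOn
          (hg.comp_sub_right x).integrableOn (kernelSq_le_convolution hφ hφM hκ hκ₀ hκφ x)
    _ = ∫ w in (ball 0 R)ᶜ, g w ∂μ := by
        rw [← h_preimage, (measurePreserving_sub_right μ x).setIntegral_preimage_emb
          (measurableEmbedding_subRight x)]

theorem setIntegral_kernelSq_eq (hφ : Integrable φ μ) (hφM : ∀ x, φ x ≤ M)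
    (hκ : Measurable (uncurry κ)) (hκ₀ : ∀ x y, 0 ≤ κ x y) (hκφ : ∀ x y, κ x y ≤ φ (y - x))
    (x : G) (s : Set G) :
    ∫ y in s, kernelSq μ κ x y ∂μ = ∫ z, κ x z * ∫ y in s, κ z y ∂μ ∂μ := by
  unfold kernelSq
  rw [integral_integral_swap_of_nonneg (F := fun y z => κ x z * κ z y)
    ((hκ.of_uncurry_left.comp measurable_snd).mul (hκ.comp measurable_swap)).aestronglyMeasurable
    (fun y z => mul_nonneg (hκ₀ x z) (hκ₀ z y))
    (integrable_kernel_mul_kernel hφ hφM hκ hκ₀ hκφ x)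
    (integrable_kernelSq hφ hφM hκ hκ₀ hκφ x).integrableOn]
  simp only [integral_const_mul]

theorem setIntegral_setIntegral_kernelSq_eq (hφ : Integrable φ μ) (hφM : ∀ x, φ x ≤ M)
    (hκ : Measurable (uncurry κ)) (hκ₀ : ∀ x y, 0 ≤ κ x y) (hκφ : ∀ x y, κ x y ≤ φ (y - x))
    (hκs : ∀ x y, κ x y = κ y x) {s : Set G} (hμs : μ s ≠ ⊤) :
    ∫ x in s, ∫ y in s, kernelSq μ κ x y ∂μ ∂μ = ∫ z, (∫ y in s, κ z y ∂μ) ^ 2 ∂μ := by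
  set q : G → ℝ := fun z => ∫ y in s, κ z y ∂μ
  have hq₀ : ∀ z, 0 ≤ q z := fun z => integral_nonneg (hκ₀ z)
  have hq_le : ∀ z, q z ≤ ∫ y, φ y ∂μ := fun z => setIntegral_kernel_le hφ hκ hκ₀ hκφ z s
  have hF : Measurable (uncurry fun x z => κ x z * q z) :=
    hκ.mul ((hκ.stronglyMeasurable.integral_prod_right' (ν := μ.restrict s)).measurable.comp
      measurable_snd)
  have hF_le : ∀ x z, κ x z * q z ≤ κ x z * ∫ y, φ y ∂μ := fun x z =>
    mul_le_mul_of_nonneg_left (hq_le z) (hκ₀ x z)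
  have hF_slice : ∀ x, Integrable (fun z => κ x z * q z) μ := fun x =>
    ((integrable_kernel hφ hκ hκ₀ hκφ x).mul_const _).mono' hF.of_uncurry_left.aestronglyMeasurable
      (ae_of_all _ fun z => (Real.norm_of_nonneg (mul_nonneg (hκ₀ x z) (hq₀ z))).trans_le
        (hF_le x z))
  have hF_bdd : ∀ x, ‖∫ z, κ x z * q z ∂μ‖ ≤ (∫ y, φ y ∂μ) ^ 2 := fun x => by
    rw [Real.norm_of_nonneg (integral_nonneg fun z => mul_nonneg (hκ₀ x z) (hq₀ z)), sq]
    refine (integral_mono (hF_slice x) ((integrable_kernel hφ hκ hκ₀ hκφ x).mul_const _)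
      (hF_le x)).trans ?_
    rw [integral_mul_const]
    exact mul_le_mul_of_nonneg_right (integral_kernel_le hφ hκ hκ₀ hκφ x)
      ((integral_nonneg (hκ₀ x)).trans (integral_kernel_le hφ hκ hκ₀ hκφ x))
  calc ∫ x in s, ∫ y in s, kernelSq μ κ x y ∂μ ∂μ = ∫ x in s, ∫ z, κ x z * q z ∂μ ∂μ := by
        simp only [setIntegral_kernelSq_eq hφ hφM hκ hκ₀ hκφ, q]
    _ = ∫ z, ∫ x in s, κ x z * q z ∂μ ∂μ :=
        integral_integral_swap_of_nonneg hF.aestronglyMeasurable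
          (fun x z => mul_nonneg (hκ₀ x z) (hq₀ z)) hF_slice
          (Measure.integrableOn_of_bounded hμs
            hF.stronglyMeasurable.integral_prod_right'.aestronglyMeasurable (ae_of_all _ hF_bdd))
    _ = ∫ z, q z ^ 2 ∂μ := by
        -- by symmetry of `κ`, `∫ x in s, κ x z ∂μ = q z`
        simp only [integral_mul_const, hκs _ _, q, sq]

theorem sq_setIntegral_kernelSq_le (hφ : Integrable φ μ) (hφM : ∀ x, φ x ≤ M)
    (hκ : Measurable (uncurry κ)) (hκ₀ : ∀ x y, 0 ≤ κ x y) (hκφ : ∀ x y, κ x y ≤ φ (y - x))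
    (hκs : ∀ x y, κ x y = κ y x) (x : G) {s : Set G} (hμs : μ s ≠ ⊤) :
    (∫ y in s, kernelSq μ κ x y ∂μ) ^ 2 ≤
      (M * ∫ y, φ y ∂μ) * ∫ x in s, ∫ y in s, kernelSq μ κ x y ∂μ ∂μ := by
  rw [setIntegral_kernelSq_eq hφ hφM hκ hκ₀ hκφ,
    setIntegral_setIntegral_kernelSq_eq hφ hφM hκ hκ₀ hκφ hκs hμs]
  calc _ ≤ (∫ z, κ x z ^ 2 ∂μ) * ∫ z, (∫ y in s, κ z y ∂μ) ^ 2 ∂μ :=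
        sq_integral_mul_le_integral_sq_mul_integral_sq (memLp_two_kernel hφ hφM hκ hκ₀ hκφ x)
          (memLp_two_setIntegral_kernel hφ hκ hκ₀ hκφ hκs hμs)
    _ ≤ _ := mul_le_mul_of_nonneg_right (integral_sq_kernel_le hφ hφM hκ hκ₀ hκφ x)
          (integral_nonneg fun z => sq_nonneg _)

theorem sq_setIntegral_kernelSq_le_inner (hφ : Integrable φ μ) (hφM : ∀ x, φ x ≤ M)
    (hκ : Measurable (uncurry κ)) (hκ₀ : ∀ x y, 0 ≤ κ x y) (hκφ : ∀ x y, κ x y ≤ φ (y - x))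
    (hκs : ∀ x y, κ x y = κ y x) {K : Lp ℝ 2 μ →L[ℝ] Lp ℝ 2 μ}
    (hK : ∀ f : Lp ℝ 2 μ, ∀ᵐ x ∂μ, K f x = ∫ y, kernelSq μ κ x y * f y ∂μ)
    (x : G) {s : Set G} (hs : MeasurableSet s) (hμs : μ s ≠ ⊤) (hμs₀ : μ s ≠ 0) :
    (∫ y in s, kernelSq μ κ x y ∂μ) ^ 2 ≤ M * (∫ y, φ y ∂μ) * μ.real s *
      inner ℝ (indicatorConstLp 2 hs hμs (√(μ.real s))⁻¹)
        (K (indicatorConstLp 2 hs hμs (√(μ.real s))⁻¹)) := by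
  have hs_pos : 0 < μ.real s := ENNReal.toReal_pos hμs₀ hμs
  rw [inner_indicatorConstLp_apply_integralOperator hK, inv_pow, Real.sq_sqrt hs_pos.le,
    ← mul_assoc, mul_assoc _ (μ.real s), mul_inv_cancel₀ hs_pos.ne', mul_one]
  exact sq_setIntegral_kernelSq_le hφ hφM hκ hκ₀ hκφ hκs x hμs

theorem tendsto_setIntegral_ball_kernelSq_zero [ProperSpace G] [μ.IsAddHaarMeasure]
    (hφ : Integrable φ μ) (hφM : ∀ x, φ x ≤ M) (hκ : Measurable (uncurry κ))
    (hκ₀ : ∀ x y, 0 ≤ κ x y) (hκφ : ∀ x y, κ x y ≤ φ (y - x)) (hκs : ∀ x y, κ x y = κ y x)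
    {K : Lp ℝ 2 μ →L[ℝ] Lp ℝ 2 μ}
    (hK : ∀ f : Lp ℝ 2 μ, ∀ᵐ x ∂μ, K f x = ∫ y, kernelSq μ κ x y * f y ∂μ)
    (hK_compact : IsCompactOperator K) {x : ℕ → G} {R : ℝ} (hR : 0 < R)
    (hx : Pairwise (Disjoint on fun n => ball (x n) R)) :
    Tendsto (fun n => ∫ y in ball (x n) R, kernelSq μ κ (x n) y ∂μ) atTop (𝓝 0) := by
  set V := μ.real (ball (0 : G) R)
  have hV : ∀ n, μ.real (ball (x n) R) = V := fun n => Measure.addHaar_real_ball_center _ _ _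
  have hB₀ : ∀ n, μ (ball (x n) R) ≠ 0 := fun n => (measure_ball_pos _ _ hR).ne'
  set e : ℕ → Lp ℝ 2 μ := fun n =>
    indicatorConstLp 2 (measurableSet_ball (x := x n) (ε := R)) measure_ball_lt_top.ne (√V)⁻¹
  have he : Orthonormal ℝ e := by
    simpa only [hV] using orthonormal_indicatorConstLp (fun n => measurableSet_ball)
      (fun n => measure_ball_lt_top.ne) hB₀ hx
  have h_sq : ∀ n, (∫ y in ball (x n) R, kernelSq μ κ (x n) y ∂μ) ^ 2 ≤
      M * (∫ y, φ y ∂μ) * V * inner ℝ (e n) (K (e n)) := fun n => by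
    simpa only [hV] using sq_setIntegral_kernelSq_le_inner hφ hφM hκ hκ₀ hκφ hκs hK (x n)
      measurableSet_ball measure_ball_lt_top.ne (hB₀ n)
  have h_inner := (hK_compact.tendsto_inner_apply_orthonormal he).const_mul
    (M * (∫ y, φ y ∂μ) * V)
  rw [mul_zero] at h_inner
  have h_sq_zero := squeeze_zero (fun n => sq_nonneg _) h_sq h_inner
  simpa only [Real.sqrt_sq (setIntegral_nonneg measurableSet_ball fun y _ =>
    kernelSq_nonneg hκ₀ _ y), Real.sqrt_zero] using h_sq_zero.sqrt

end DominatedKernel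

theorem stmt_6_general (d : ℕ)
    (φ : EuclideanSpace ℝ (Fin d) → ℝ)
    (hφ_int : Integrable φ (volume : Measure (EuclideanSpace ℝ (Fin d))))
    (hφ_bdd : ∃ M : ℝ, ∀ x, φ x ≤ M)
    (k' : EuclideanSpace ℝ (Fin d) → EuclideanSpace ℝ (Fin d) → ℝ)
    (hk'_meas : Measurable (Function.uncurry k'))
    (hk'_symm : ∀ x y, k' x y = k' y x)
    (hk'_nonneg : ∀ x y, 0 ≤ k' x y)
    (hk'_dom : ∀ x y, k' x y ≤ φ (y - x))
    (k : EuclideanSpace ℝ (Fin d) → EuclideanSpace ℝ (Fin d) → ℝ)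
    (hk_def : ∀ x y, k x y = ∫ z, k' x z * k' z y ∂volume)
    (hK : ∃ K : Lp ℝ 2 (volume : Measure (EuclideanSpace ℝ (Fin d))) →L[ℝ]
        Lp ℝ 2 (volume : Measure (EuclideanSpace ℝ (Fin d))),
      (∀ f : Lp ℝ 2 (volume : Measure (EuclideanSpace ℝ (Fin d))),
        ∀ᵐ x ∂(volume : Measure (EuclideanSpace ℝ (Fin d))),
          K f x = ∫ y, k x y * f y ∂volume) ∧
      IsCompactOperator K) :
    Tendsto (fun x => ∫ y, k x y ∂volume)
      (cocompact (EuclideanSpace ℝ (Fin d))) (nhds 0) := by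
  obtain ⟨M, hM⟩ := hφ_bdd
  obtain ⟨K, hK_kernel, hK_compact⟩ := hK
  obtain rfl : k = kernelSq volume k' := funext₂ hk_def
  by_contra h_not
  obtain ⟨ε, hε, h_far⟩ := exists_forall_lt_norm_le_norm_of_not_tendsto_cocompact h_not
  obtain ⟨R, hR, h_tail⟩ := exists_setIntegral_compl_ball_kernelSq_lt hφ_int hM hk'_meas
    hk'_nonneg hk'_dom (half_pos hε)
  obtain ⟨x, hx, h_disj⟩ := exists_seq_pairwise_disjoint_ball h_far R
  have h_half : ∀ n, ε / 2 ≤ ∫ y in ball (x n) R, kernelSq volume k' (x n) y := fun n => by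
    have h_split := integral_add_compl (measurableSet_ball (x := x n) (ε := R))
      (integrable_kernelSq hφ_int hM hk'_meas hk'_nonneg hk'_dom (x n))
    have hxn := hx n
    rw [Real.norm_of_nonneg (integral_nonneg (kernelSq_nonneg hk'_nonneg (x n)))] at hxn
    linarith [h_tail (x n)]
  have h_zero := tendsto_setIntegral_ball_kernelSq_zero hφ_int hM hk'_meas hk'_nonneg hk'_dom
    hk'_symm hK_kernel hK_compact hR h_disj
  linarith [ge_of_tendsto' h_zero h_half]

/-- 'Only if' direction of Lemma 4.1 (abstract form): if the kernel
`k(x,y) = ∫ k'(x,z) k'(z,y) dz`, built from a symmetric kernel `k'` dominated by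
`φ(y - x)` with `φ ∈ L¹ ∩ L^∞`, induces a compact integral operator on `L²(ℝ^d)`,
then `∫ k(x,y) dy → 0` as `|x| → ∞`. -/
theorem stmt_6 (d : ℕ) (hd : 1 ≤ d)
    (φ : EuclideanSpace ℝ (Fin d) → ℝ)
    (hφ_meas : Measurable φ) (hφ_nonneg : ∀ x, 0 ≤ φ x)
    (hφ_int : Integrable φ (volume : Measure (EuclideanSpace ℝ (Fin d))))
    (hφ_bdd : ∃ M : ℝ, ∀ x, φ x ≤ M)
    (k' : EuclideanSpace ℝ (Fin d) → EuclideanSpace ℝ (Fin d) → ℝ)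
    (hk'_meas : Measurable (Function.uncurry k'))
    (hk'_symm : ∀ x y, k' x y = k' y x)
    (hk'_nonneg : ∀ x y, 0 ≤ k' x y)
    (hk'_dom : ∀ x y, k' x y ≤ φ (y - x))
    (k : EuclideanSpace ℝ (Fin d) → EuclideanSpace ℝ (Fin d) → ℝ)
    (hk_def : ∀ x y, k x y = ∫ z, k' x z * k' z y ∂volume)
    (hK : ∃ K : Lp ℝ 2 (volume : Measure (EuclideanSpace ℝ (Fin d))) →L[ℝ]
        Lp ℝ 2 (volume : Measure (EuclideanSpace ℝ (Fin d))),
      (∀ f : Lp ℝ 2 (volume : Measure (EuclideanSpace ℝ (Fin d))),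
        ∀ᵐ x ∂(volume : Measure (EuclideanSpace ℝ (Fin d))),
          K f x = ∫ y, k x y * f y ∂volume) ∧
      IsCompactOperator K) :
    Tendsto (fun x => ∫ y, k x y ∂volume)
      (cocompact (EuclideanSpace ℝ (Fin d))) (nhds 0) :=
  stmt_6_general d φ hφ_int hφ_bdd k' hk'_meas hk'_symm hk'_nonneg hk'_dom k hk_def hK
end

section
/- Let d ≥ 1 be an integer, α ∈ (0,2), r > 0 and κ ∈ (0,1), and set γ = (1+κ)r/2. There exists a constant C = C(d, α, r, κ) > 0 such that for every x₀ ∈ ℝ^d, every x ∈ B(x₀, κr), and every y ∈ ℝ^d with |y − x₀| > γ, one has (1/(r − γ)) ∫_γ^{min(r, |y−x₀|)} ( (δ² − |x − x₀|²)/(|y − x₀|² − δ²) )^{α/2} |x − y|^{−d} dδ ≤ C |y − x₀|^{−d−α}. -/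
/-! With `ρ = |y - x₀|` and `m = min r ρ`, the inequality `m (ρ² - δ²) ≥ ρ² (m - δ)` bounds the
ratio in the integrand by `r³ ρ⁻² (m - δ)⁻¹`, and `|x - y| ≥ ρ - κ r ≥ (1 - κ)/(1 + κ) ρ` since
`ρ > (1 + κ) r / 2`. So the integrand is at most a constant times `ρ^(-d-α) (m - δ)^(-α/2)`, and
the singularity at `δ = m` is integrable because `α/2 < 1`. -/

open MeasureTheory Set

lemma integrableOn_Ioo_sub_rpow_neg {β : ℝ} (hβ : β < 1) {a b : ℝ} (hab : a ≤ b) :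
    IntegrableOn (fun δ : ℝ ↦ (b - δ) ^ (-β)) (Ioo a b) := by
  have h := (intervalIntegral.intervalIntegrable_rpow' (a := 0) (b := b - a)
    (by linarith : -1 < -β)).comp_sub_left b
  simp only [sub_sub_cancel, sub_zero] at h
  exact ((intervalIntegrable_iff_integrableOn_Ioc_of_le hab).1 h.symm).mono_set
    Ioo_subset_Ioc_self

lemma integral_Ioo_sub_rpow_neg {β : ℝ} (hβ : β < 1) {a b : ℝ} (hab : a ≤ b) :
    ∫ δ in Ioo a b, (b - δ) ^ (-β) = (b - a) ^ (1 - β) / (1 - β) := by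
  rw [← integral_Ioc_eq_integral_Ioo, ← intervalIntegral.integral_of_le hab,
    intervalIntegral.integral_comp_sub_left (fun x : ℝ ↦ x ^ (-β)) b, sub_self,
    integral_rpow (Or.inl (by linarith)), Real.zero_rpow (by linarith)]
  ring_nf

lemma setIntegral_Ioo_le_of_le_mul_sub_rpow_neg {f : ℝ → ℝ} {A β a b : ℝ} (hβ : β < 1)
    (hab : a ≤ b) (hf₀ : ∀ δ ∈ Ioo a b, 0 ≤ f δ)
    (hf : ∀ δ ∈ Ioo a b, f δ ≤ A * (b - δ) ^ (-β)) :
    ∫ δ in Ioo a b, f δ ≤ A * ((b - a) ^ (1 - β) / (1 - β)) := by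
  rw [← integral_Ioo_sub_rpow_neg hβ hab, ← integral_const_mul]
  exact integral_mono_of_nonneg ((ae_restrict_iff' measurableSet_Ioo).2 (.of_forall hf₀))
    ((integrableOn_Ioo_sub_rpow_neg hβ hab).const_mul A)
    ((ae_restrict_iff' measurableSet_Ioo).2 (.of_forall hf))

lemma mul_norm_sub_le_norm_sub_of_mem_ball {E : Type*} [SeminormedAddCommGroup E]
    {x₀ x y : E} {κ r : ℝ} (hκ : 0 ≤ κ) (hx : x ∈ Metric.ball x₀ (κ * r))
    (hy : (1 + κ) * r / 2 < ‖y - x₀‖) :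
    (1 - κ) / (1 + κ) * ‖y - x₀‖ ≤ ‖x - y‖ := by
  have hx' : ‖x - x₀‖ < κ * r := mem_ball_iff_norm.1 hx
  have htri : ‖y - x₀‖ - ‖x - x₀‖ ≤ ‖x - y‖ := by
    simpa [norm_sub_rev y x] using norm_sub_norm_le (y - x₀) (x - x₀)
  rw [div_mul_eq_mul_div, div_le_iff₀ (by linarith)]
  nlinarith

lemma sq_sub_sq_div_sq_sub_sq_le {s δ m ρ r : ℝ} (hδ : 0 ≤ δ) (hδm : δ < m) (hmρ : m ≤ ρ)
    (hmr : m ≤ r) :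
    (δ ^ 2 - s ^ 2) / (ρ ^ 2 - δ ^ 2) ≤ r ^ 3 / (ρ ^ 2 * (m - δ)) := by
  have hm : 0 < m := hδ.trans_lt hδm
  have hρ : 0 < ρ := hm.trans_le hmρ
  rw [div_le_div_iff₀ (by nlinarith) (by have := sub_pos.2 hδm; positivity)]
  have hgap : 0 ≤ ρ ^ 2 - δ ^ 2 := by nlinarith
  -- `m (ρ² - δ²) - ρ² (m - δ) = δ (ρ² - m δ)` and `ρ² ≥ m² ≥ m δ`
  have hkey : ρ ^ 2 * (m - δ) ≤ m * (ρ ^ 2 - δ ^ 2) := by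
    nlinarith [mul_nonneg hδ (by nlinarith : 0 ≤ ρ ^ 2 - m * δ)]
  calc (δ ^ 2 - s ^ 2) * (ρ ^ 2 * (m - δ)) ≤ r ^ 2 * (m * (ρ ^ 2 - δ ^ 2)) := by
        gcongr ?_ * ?_
        nlinarith
    _ ≤ r ^ 3 * (ρ ^ 2 - δ ^ 2) := by
        nlinarith [mul_le_mul_of_nonneg_right hmr (mul_nonneg (sq_nonneg r) hgap)]

lemma sq_sub_sq_div_sq_sub_sq_nonneg {s δ ρ : ℝ} (hs : 0 ≤ s) (hsδ : s ≤ δ) (hδρ : δ ≤ ρ) :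
    0 ≤ (δ ^ 2 - s ^ 2) / (ρ ^ 2 - δ ^ 2) :=
  div_nonneg (by nlinarith) (by nlinarith)

lemma sq_rpow_div_two {ρ : ℝ} (hρ : 0 ≤ ρ) (α : ℝ) : (ρ ^ 2) ^ (α / 2) = ρ ^ α := by
  rw [← Real.rpow_natCast, ← Real.rpow_mul hρ]
  ring_nf

lemma sq_sub_sq_div_rpow_mul_rpow_neg_le {s δ m ρ r D c d α : ℝ} (hα : 0 ≤ α) (hd : 0 ≤ d) (hs : 0 ≤ s)
    (hsδ : s < δ) (hδm : δ < m) (hmρ : m ≤ ρ) (hmr : m ≤ r) (hc : 0 < c) (hD : c * ρ ≤ D) :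
    ((δ ^ 2 - s ^ 2) / (ρ ^ 2 - δ ^ 2)) ^ (α / 2) * D ^ (-d)
      ≤ (r ^ 3) ^ (α / 2) * c ^ (-d) * ρ ^ (-d - α) * (m - δ) ^ (-(α / 2)) := by
  have hδ : 0 < δ := hs.trans_lt hsδ
  have hρ : 0 < ρ := (hδ.trans hδm).trans_le hmρ
  have hmδ : 0 < m - δ := sub_pos.2 hδm
  have hr : 0 < r := (hδ.trans hδm).trans_le hmr
  have hD₀ : 0 < D := (mul_pos hc hρ).trans_le hD
  calc ((δ ^ 2 - s ^ 2) / (ρ ^ 2 - δ ^ 2)) ^ (α / 2) * D ^ (-d)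
      ≤ (r ^ 3 / (ρ ^ 2 * (m - δ))) ^ (α / 2) * (c * ρ) ^ (-d) := by
        refine mul_le_mul ?_ ?_ (by positivity) (by positivity)
        · exact Real.rpow_le_rpow
            (sq_sub_sq_div_sq_sub_sq_nonneg hs hsδ.le (hδm.le.trans hmρ)) (sq_sub_sq_div_sq_sub_sq_le hδ.le hδm hmρ hmr)
            (by linarith)
        · exact Real.rpow_le_rpow_of_nonpos (by positivity) hD (by linarith)
    _ = (r ^ 3) ^ (α / 2) * c ^ (-d) * ρ ^ (-d - α) * (m - δ) ^ (-(α / 2)) := by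
        rw [Real.div_rpow (by positivity) (by positivity), Real.mul_rpow (by positivity) hmδ.le,
          Real.mul_rpow hc.le hρ.le, sq_rpow_div_two hρ.le, Real.rpow_sub hρ,
          Real.rpow_neg hmδ.le]
        field_simp

theorem stmt_7_general (d : ℕ) (α : ℝ) (hα : α ∈ Set.Ioo (0 : ℝ) 2)
    (r κ : ℝ) (hr : 0 < r) (hκ : κ ∈ Set.Ioo (0 : ℝ) 1) :
    ∃ C : ℝ, 0 < C ∧ ∀ x₀ x y : EuclideanSpace ℝ (Fin d),
      x ∈ Metric.ball x₀ (κ * r) → (1 + κ) * r / 2 < ‖y - x₀‖ →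
      (1 / (r - (1 + κ) * r / 2)) *
          ∫ δ in Set.Ioo ((1 + κ) * r / 2) (min r ‖y - x₀‖),
            ((δ ^ 2 - ‖x - x₀‖ ^ 2) / (‖y - x₀‖ ^ 2 - δ ^ 2)) ^ (α / 2) *
              ‖x - y‖ ^ (-(d : ℝ)) ∂volume
        ≤ C * ‖y - x₀‖ ^ (-(d : ℝ) - α) := by
  obtain ⟨hα₀, hα₂⟩ := hα
  obtain ⟨hκ₀, hκ₁⟩ := hκ
  set γ := (1 + κ) * r / 2
  have hκrγ : κ * r < γ := by simp only [γ]; nlinarith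
  have hγr : γ < r := by simp only [γ]; nlinarith
  set L := r - γ
  have hL : 0 < L := sub_pos.2 hγr
  set c := (1 - κ) / (1 + κ)
  have hc : 0 < c := div_pos (by linarith) (by linarith)
  set A := (r ^ 3) ^ (α / 2) * c ^ (-(d : ℝ))
  refine ⟨1 / L * (A * (L ^ (1 - α / 2) / (1 - α / 2))),
    mul_pos (by positivity) (mul_pos (by positivity) (div_pos (by positivity) (by linarith))), ?_⟩
  intro x₀ x y hx hy
  set ρ := ‖y - x₀‖
  set m := min r ρ
  have hmr : m ≤ r := min_le_left r ρ
  have hmρ : m ≤ ρ := min_le_right r ρ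
  have hγm : γ < m := lt_min hγr hy
  have hs : ‖x - x₀‖ < γ := (mem_ball_iff_norm.1 hx).trans hκrγ
  have hxy : c * ρ ≤ ‖x - y‖ := mul_norm_sub_le_norm_sub_of_mem_ball hκ₀.le hx hy
  have hint := setIntegral_Ioo_le_of_le_mul_sub_rpow_neg (A := A * ρ ^ (-(d : ℝ) - α))
    (by linarith : α / 2 < 1) hγm.le
    (fun δ hδ ↦ mul_nonneg (Real.rpow_nonneg (sq_sub_sq_div_sq_sub_sq_nonneg (norm_nonneg _)
      (hs.trans hδ.1).le (hδ.2.trans_le hmρ).le) _) (Real.rpow_nonneg (norm_nonneg _) _))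
    (fun δ hδ ↦ (sq_sub_sq_div_rpow_mul_rpow_neg_le hα₀.le (Nat.cast_nonneg d) (norm_nonneg _)
      (hs.trans hδ.1) hδ.2 hmρ hmr hc hxy).trans_eq (by ring))
  calc _ ≤ 1 / L * (A * ρ ^ (-(d : ℝ) - α) * ((m - γ) ^ (1 - α / 2) / (1 - α / 2))) := by
        gcongr
    _ ≤ 1 / L * (A * ρ ^ (-(d : ℝ) - α) * (L ^ (1 - α / 2) / (1 - α / 2))) := by
        gcongr <;> linarith
    _ = _ := by ring

/-- Estimate of the averaged Poisson kernel of balls for the symmetric α-stable process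
(inside the proof of Lemma 3.2): with `γ = (1+κ)r/2`, for `x ∈ B(x₀, κr)` and
`|y - x₀| > γ`,
`(1/(r-γ)) ∫_γ^{min(r,|y-x₀|)} ((δ² - |x-x₀|²)/(|y-x₀|² - δ²))^{α/2} |x-y|^{-d} dδ
  ≤ C |y-x₀|^{-d-α}`. -/
theorem stmt_7 (d : ℕ) (hd : 1 ≤ d) (α : ℝ) (hα : α ∈ Set.Ioo (0 : ℝ) 2)
    (r κ : ℝ) (hr : 0 < r) (hκ : κ ∈ Set.Ioo (0 : ℝ) 1) :
    ∃ C : ℝ, 0 < C ∧ ∀ x₀ x y : EuclideanSpace ℝ (Fin d),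
      x ∈ Metric.ball x₀ (κ * r) → (1 + κ) * r / 2 < ‖y - x₀‖ →
      (1 / (r - (1 + κ) * r / 2)) *
          ∫ δ in Set.Ioo ((1 + κ) * r / 2) (min r ‖y - x₀‖),
            ((δ ^ 2 - ‖x - x₀‖ ^ 2) / (‖y - x₀‖ ^ 2 - δ ^ 2)) ^ (α / 2) *
              ‖x - y‖ ^ (-(d : ℝ)) ∂volume
        ≤ C * ‖y - x₀‖ ^ (-(d : ℝ) - α) :=
  stmt_7_general d α hα r κ hr hκ
end
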